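/- arXiv:1407.7000 — 12 statements merged into one kernel-verified Lean document; each statement's English description precedes it below -/
import Mathlib

section
/- Every natural number N can be written uniquely as N = \sum_{k=0}^{n} b_{k+1} q_k, where b_1 < a_1, b_k \le a_k for all k, and whenever b_k = a_k we have b_{k-1} = 0. -/
open Finset

private def OstAdm (a b : ℕ → ℕ) : Prop :=
  b 0 = 0 ∧ b 1 < a 1 ∧ (∀ k, b (k + 1) ≤ a (k + 1)) ∧
    (∀ k, b (k + 2) = a (k + 2) → b (k + 1) = 0)

section Ost

variable {a q : ℕ → ℕ}

private lemma ost_qpos (ha : ∀ k, 1 ≤ a (k + 1)) (hq0 : q 0 = 1) (hq1 : q 1 = a 1)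
    (hq : ∀ k, q (k + 2) = a (k + 2) * q (k + 1) + q k) : ∀ k, 1 ≤ q k := by
  intro k
  induction k using Nat.strong_induction_on with
  | _ k ih =>
    match k with
    | 0 => omega
    | 1 => rw [hq1]; exact ha 0
    | (k+2) =>
      have h1 := ih k (by omega)
      rw [hq k]
      exact h1.trans (Nat.le_add_left _ _)

private lemma ost_qmono (ha : ∀ k, 1 ≤ a (k + 1)) (hq0 : q 0 = 1) (hq1 : q 1 = a 1)
    (hq : ∀ k, q (k + 2) = a (k + 2) * q (k + 1) + q k) : ∀ i j, i ≤ j → q i ≤ q j := by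
  have step : ∀ k, q k ≤ q (k + 1) := by
    intro k
    match k with
    | 0 => rw [hq0, hq1]; exact ha 0
    | (k+1) =>
      rw [hq k]
      calc q (k+1) = 1 * q (k+1) := (one_mul _).symm
        _ ≤ a (k+2) * q (k+1) := Nat.mul_le_mul_right _ (ha (k+1))
        _ ≤ a (k+2) * q (k+1) + q k := Nat.le_add_right _ _
  exact fun i j h => monotone_nat_of_le_succ step h

private lemma ost_qunbdd (ha : ∀ k, 1 ≤ a (k + 1)) (hq0 : q 0 = 1) (hq1 : q 1 = a 1)
    (hq : ∀ k, q (k + 2) = a (k + 2) * q (k + 1) + q k) : ∀ N, ∃ m, N < q m := by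
  have key : ∀ n, n < q (2 * n) := by
    intro n
    induction n with
    | zero => simpa [hq0] using Nat.zero_lt_one
    | succ n ihn =>
      have h1 : 1 ≤ a (2*n + 2) * q (2*n + 1) :=
        Nat.one_le_iff_ne_zero.mpr (Nat.mul_ne_zero
          (Nat.one_le_iff_ne_zero.mp (ha (2*n+1)))
          (Nat.one_le_iff_ne_zero.mp (ost_qpos ha hq0 hq1 hq (2*n+1))))
      have h2 := hq (2 * n)
      have h3 : 2 * (n + 1) = 2 * n + 2 := by ring
      rw [h3, h2]
      have := ihn
      linarith
  exact fun N => ⟨2 * (N + 1), lt_of_le_of_lt (Nat.le_succ N) (key (N + 1))⟩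

private lemma ost_bound (ha : ∀ k, 1 ≤ a (k + 1)) (hq0 : q 0 = 1) (hq1 : q 1 = a 1)
    (hq : ∀ k, q (k + 2) = a (k + 2) * q (k + 1) + q k)
    {b : ℕ → ℕ} (hb : OstAdm a b) :
    ∀ n, ∑ k ∈ Finset.range n, b (k + 1) * q k < q n := by
  intro n
  induction n using Nat.strong_induction_on with
  | _ n ih =>
    match n with
    | 0 => simpa [hq0] using Nat.zero_lt_one
    | 1 =>
      rw [Finset.sum_range_one, hq0, hq1, mul_one]
      exact hb.2.1
    | (n+2) =>
      have hsplit : ∑ k ∈ Finset.range (n+2), b (k+1) * q k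
          = (∑ k ∈ Finset.range (n+1), b (k+1) * q k) + b (n+2) * q (n+1) :=
        Finset.sum_range_succ _ _
      rw [hsplit, hq n]
      have hba : b (n+2) ≤ a (n+2) := hb.2.2.1 (n+1)
      rcases eq_or_lt_of_le hba with h | h
      · have hz : b (n+1) = 0 := hb.2.2.2 n h
        have he : ∑ k ∈ Finset.range (n+1), b (k+1) * q k
            = ∑ k ∈ Finset.range n, b (k+1) * q k := by
          rw [Finset.sum_range_succ, hz, zero_mul, add_zero]
        have h1 := ih n (by omega)
        rw [he, h]
        omega
      · have h1 := ih (n+1) (by omega)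
        have h2 : (b (n+2) + 1) * q (n+1) ≤ a (n+2) * q (n+1) :=
          Nat.mul_le_mul_right _ h
        have h3 : (b (n+2) + 1) * q (n+1) = b (n+2) * q (n+1) + q (n+1) := by ring
        omega

private lemma ost_top {b : ℕ → ℕ} {m N : ℕ} (hN : 0 < N)
    (hs : ∑ k ∈ Finset.range m, b (k + 1) * q k = N) :
    ∃ t, t < m ∧ b (t + 1) ≠ 0 ∧ ∀ k, t < k → k < m → b (k + 1) = 0 := by
  classical
  have hne : ((Finset.range m).filter fun k => b (k + 1) ≠ 0).Nonempty := by
    by_contra hcon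
    rw [Finset.not_nonempty_iff_eq_empty, Finset.filter_eq_empty_iff] at hcon
    have hz : ∑ k ∈ Finset.range m, b (k + 1) * q k = 0 := by
      apply Finset.sum_eq_zero
      intro k hk
      have := hcon hk
      simp only [ne_eq, not_not] at this
      rw [this, zero_mul]
    omega
  refine ⟨Finset.max' _ hne, ?_, ?_, ?_⟩
  · have := Finset.max'_mem _ hne
    rw [Finset.mem_filter, Finset.mem_range] at this
    exact this.1
  · have := Finset.max'_mem _ hne
    rw [Finset.mem_filter] at this
    exact this.2
  · intro k hk1 hk2
    by_contra hk3
    have hmem : k ∈ (Finset.range m).filter fun k => b (k + 1) ≠ 0 := by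
      rw [Finset.mem_filter, Finset.mem_range]; exact ⟨hk2, hk3⟩
    exact absurd (Finset.le_max' _ k hmem) (by omega)

private lemma ost_uniq (ha : ∀ k, 1 ≤ a (k + 1)) (hq0 : q 0 = 1) (hq1 : q 1 = a 1)
    (hq : ∀ k, q (k + 2) = a (k + 2) * q (k + 1) + q k) :
    ∀ N, ∀ b c : ℕ → ℕ, ∀ mb mc : ℕ, OstAdm a b → OstAdm a c →
      (∀ k, mb ≤ k → b (k + 1) = 0) → (∀ k, mc ≤ k → c (k + 1) = 0) →
      ∑ k ∈ Finset.range mb, b (k + 1) * q k = N →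
      ∑ k ∈ Finset.range mc, c (k + 1) * q k = N →
      ∀ k, b (k + 1) = c (k + 1) := by
  have hqpos := ost_qpos ha hq0 hq1 hq
  have hqmono := ost_qmono ha hq0 hq1 hq
  intro N
  induction N using Nat.strong_induction_on with
  | _ N ih =>
    intro b c mb mc hb hc hbz hcz hbs hcs
    rcases Nat.eq_zero_or_pos N with rfl | hN
    · -- all digits zero
      have hb0 : ∀ k, b (k + 1) = 0 := by
        intro k
        rcases lt_or_ge k mb with h | h
        · have := (Finset.sum_eq_zero_iff.mp hbs) k (Finset.mem_range.mpr h)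
          rcases Nat.mul_eq_zero.mp this with h' | h'
          · exact h'
          · exact absurd h' (by have := hqpos k; omega)
        · exact hbz k h
      have hc0 : ∀ k, c (k + 1) = 0 := by
        intro k
        rcases lt_or_ge k mc with h | h
        · have := (Finset.sum_eq_zero_iff.mp hcs) k (Finset.mem_range.mpr h)
          rcases Nat.mul_eq_zero.mp this with h' | h'
          · exact h'
          · exact absurd h' (by have := hqpos k; omega)
        · exact hcz k h
      intro k; rw [hb0 k, hc0 k]
    · -- tops
      obtain ⟨tb, htb1, htb2, htb3⟩ := ost_top hN hbs
      obtain ⟨tc, htc1, htc2, htc3⟩ := ost_top hN hcs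
      have hbtop : ∀ k, tb < k → b (k + 1) = 0 := by
        intro k hk
        rcases lt_or_ge k mb with h | h
        · exact htb3 k hk h
        · exact hbz k h
      have hctop : ∀ k, tc < k → c (k + 1) = 0 := by
        intro k hk
        rcases lt_or_ge k mc with h | h
        · exact htc3 k hk h
        · exact hcz k h
      -- N = sum over range (t+1)
      have hbsum : ∑ k ∈ Finset.range (tb + 1), b (k + 1) * q k = N := by
        rw [← hbs]
        apply Finset.sum_subset
        · intro x hx
          rw [Finset.mem_range] at hx ⊢
          omega
        · intro x hx1 hx2
          rw [Finset.mem_range] at hx2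
          rw [hbtop x (by omega), zero_mul]
      have hcsum : ∑ k ∈ Finset.range (tc + 1), c (k + 1) * q k = N := by
        rw [← hcs]
        apply Finset.sum_subset
        · intro x hx
          rw [Finset.mem_range] at hx ⊢
          omega
        · intro x hx1 hx2
          rw [Finset.mem_range] at hx2
          rw [hctop x (by omega), zero_mul]
      -- q t ≤ N < q (t+1)
      have hbub : N < q (tb + 1) := hbsum ▸ ost_bound ha hq0 hq1 hq hb (tb + 1)
      have hcub : N < q (tc + 1) := hcsum ▸ ost_bound ha hq0 hq1 hq hc (tc + 1)
      have hblb : q tb ≤ N := by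
        calc q tb = 1 * q tb := (one_mul _).symm
          _ ≤ b (tb + 1) * q tb :=
              Nat.mul_le_mul_right (q tb) (Nat.one_le_iff_ne_zero.mpr htb2)
          _ ≤ ∑ k ∈ Finset.range (tb + 1), b (k + 1) * q k :=
              Finset.single_le_sum (f := fun k => b (k + 1) * q k)
                (fun i _ => Nat.zero_le _)
                (Finset.mem_range.mpr (Nat.lt_succ_self tb))
          _ = N := hbsum
      have hclb : q tc ≤ N := by
        calc q tc = 1 * q tc := (one_mul _).symm
          _ ≤ c (tc + 1) * q tc :=
              Nat.mul_le_mul_right (q tc) (Nat.one_le_iff_ne_zero.mpr htc2)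
          _ ≤ ∑ k ∈ Finset.range (tc + 1), c (k + 1) * q k :=
              Finset.single_le_sum (f := fun k => c (k + 1) * q k)
                (fun i _ => Nat.zero_le _)
                (Finset.mem_range.mpr (Nat.lt_succ_self tc))
          _ = N := hcsum
      have htbc : tb = tc := by
        rcases lt_trichotomy tb tc with h | h | h
        · have := hqmono (tb + 1) tc (by omega)
          omega
        · exact h
        · have := hqmono (tc + 1) tb (by omega)
          omega
      subst htbc
      set t := tb with htdef
      -- split off top term
      have hbsplit : b (t + 1) * q t + ∑ k ∈ Finset.range t, b (k + 1) * q k = N := by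
        rw [← hbsum, Finset.sum_range_succ]; ring
      have hcsplit : c (t + 1) * q t + ∑ k ∈ Finset.range t, c (k + 1) * q k = N := by
        rw [← hcsum, Finset.sum_range_succ]; ring
      -- truncations admissible
      have hbtr : OstAdm a b → ∑ k ∈ Finset.range t, b (k + 1) * q k < q t :=
        fun h => by
          have hb' : OstAdm a (fun k => if k ≤ t then b k else 0) := by
            refine ⟨by simp [h.1], ?_, ?_, ?_⟩
            · by_cases h1 : 1 ≤ t
              · simpa [h1] using h.2.1
              · simp only [h1, if_false]
                exact lt_of_lt_of_le Nat.zero_lt_one (ha 0)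
            · intro k
              by_cases h1 : k + 1 ≤ t
              · simpa [h1] using h.2.2.1 k
              · simp [h1]
            · intro k hk
              by_cases h2 : k + 2 ≤ t
              · simp only [h2, if_true] at hk
                have := h.2.2.2 k hk
                simp [this]
              · simp only [h2, if_false] at hk
                exact absurd hk.symm (Nat.one_le_iff_ne_zero.mp (ha (k + 1)))
          have := ost_bound ha hq0 hq1 hq hb' t
          calc ∑ k ∈ Finset.range t, b (k + 1) * q k
              = ∑ k ∈ Finset.range t, (fun k => if k ≤ t then b k else 0) (k + 1) * q k := by
                apply Finset.sum_congr rfl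
                intro x hx
                rw [Finset.mem_range] at hx
                simp [Nat.succ_le_of_lt hx]
            _ < q t := this
      have hSb : ∑ k ∈ Finset.range t, b (k + 1) * q k < q t := hbtr hb
      have hSc : ∑ k ∈ Finset.range t, c (k + 1) * q k < q t := by
        have hc' : OstAdm a (fun k => if k ≤ t then c k else 0) := by
          refine ⟨by simp [hc.1], ?_, ?_, ?_⟩
          · by_cases h1 : 1 ≤ t
            · simpa [h1] using hc.2.1
            · simp only [h1, if_false]
              exact lt_of_lt_of_le Nat.zero_lt_one (ha 0)
          · intro k
            by_cases h1 : k + 1 ≤ t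
            · simpa [h1] using hc.2.2.1 k
            · simp [h1]
          · intro k hk
            by_cases h2 : k + 2 ≤ t
            · simp only [h2, if_true] at hk
              have := hc.2.2.2 k hk
              simp [this]
            · simp only [h2, if_false] at hk
              exact absurd hk.symm (Nat.one_le_iff_ne_zero.mp (ha (k + 1)))
        have := ost_bound ha hq0 hq1 hq hc' t
        calc ∑ k ∈ Finset.range t, c (k + 1) * q k
            = ∑ k ∈ Finset.range t, (fun k => if k ≤ t then c k else 0) (k + 1) * q k := by
              apply Finset.sum_congr rfl
              intro x hx
              rw [Finset.mem_range] at hx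
              simp [Nat.succ_le_of_lt hx]
          _ < q t := this
      -- top digits equal
      have htop : b (t + 1) = c (t + 1) := by
        rcases lt_trichotomy (b (t + 1)) (c (t + 1)) with h | h | h
        · have h2 : b (t + 1) * q t + q t ≤ c (t + 1) * q t := by
            calc b (t + 1) * q t + q t = (b (t + 1) + 1) * q t := by ring
              _ ≤ c (t + 1) * q t := Nat.mul_le_mul_right (q t) (Nat.succ_le_of_lt h)
          omega
        · exact h
        · have h2 : c (t + 1) * q t + q t ≤ b (t + 1) * q t := by
            calc c (t + 1) * q t + q t = (c (t + 1) + 1) * q t := by ring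
              _ ≤ b (t + 1) * q t := Nat.mul_le_mul_right (q t) (Nat.succ_le_of_lt h)
          omega
      -- remainders equal
      have hrem : ∑ k ∈ Finset.range t, b (k + 1) * q k
          = ∑ k ∈ Finset.range t, c (k + 1) * q k := by
        have h2 : c (t + 1) * q t + ∑ k ∈ Finset.range t, b (k + 1) * q k = N := by
          rw [← htop]; exact hbsplit
        omega
      have hrlt : ∑ k ∈ Finset.range t, b (k + 1) * q k < N := by omega
      have hb'adm : OstAdm a (fun k => if k ≤ t then b k else 0) := by
        refine ⟨by simp [hb.1], ?_, ?_, ?_⟩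
        · by_cases h1 : 1 ≤ t
          · simpa [h1] using hb.2.1
          · simp only [h1, if_false]
            exact lt_of_lt_of_le Nat.zero_lt_one (ha 0)
        · intro k
          by_cases h1 : k + 1 ≤ t
          · simpa [h1] using hb.2.2.1 k
          · simp [h1]
        · intro k hk
          by_cases h2 : k + 2 ≤ t
          · simp only [h2, if_true] at hk
            have := hb.2.2.2 k hk
            simp [this]
          · simp only [h2, if_false] at hk
            exact absurd hk.symm (Nat.one_le_iff_ne_zero.mp (ha (k + 1)))
      have hc'adm : OstAdm a (fun k => if k ≤ t then c k else 0) := by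
        refine ⟨by simp [hc.1], ?_, ?_, ?_⟩
        · by_cases h1 : 1 ≤ t
          · simpa [h1] using hc.2.1
          · simp only [h1, if_false]
            exact lt_of_lt_of_le Nat.zero_lt_one (ha 0)
        · intro k
          by_cases h1 : k + 1 ≤ t
          · simpa [h1] using hc.2.2.1 k
          · simp [h1]
        · intro k hk
          by_cases h2 : k + 2 ≤ t
          · simp only [h2, if_true] at hk
            have := hc.2.2.2 k hk
            simp [this]
          · simp only [h2, if_false] at hk
            exact absurd hk.symm (Nat.one_le_iff_ne_zero.mp (ha (k + 1)))
      have hb'sum : ∑ k ∈ Finset.range t,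
          (fun k => if k ≤ t then b k else 0) (k + 1) * q k
          = ∑ k ∈ Finset.range t, b (k + 1) * q k := by
        apply Finset.sum_congr rfl
        intro x hx
        rw [Finset.mem_range] at hx
        simp [Nat.succ_le_of_lt hx]
      have hc'sum : ∑ k ∈ Finset.range t,
          (fun k => if k ≤ t then c k else 0) (k + 1) * q k
          = ∑ k ∈ Finset.range t, b (k + 1) * q k := by
        rw [hrem]
        apply Finset.sum_congr rfl
        intro x hx
        rw [Finset.mem_range] at hx
        simp [Nat.succ_le_of_lt hx]
      have hlow := ih (∑ k ∈ Finset.range t, b (k + 1) * q k) hrlt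
        (fun k => if k ≤ t then b k else 0) (fun k => if k ≤ t then c k else 0)
        t t hb'adm hc'adm
        (fun k hk => by simp [show ¬(k + 1 ≤ t) from by omega])
        (fun k hk => by simp [show ¬(k + 1 ≤ t) from by omega])
        hb'sum hc'sum
      intro k
      rcases lt_trichotomy (k + 1) (t + 1) with h | h | h
      · simpa [show k + 1 ≤ t from by omega] using hlow k
      · have hkt : k = t := by omega
        rw [hkt]; exact htop
      · rw [hbtop k (by omega), hctop k (by omega)]

private lemma ost_exists (ha : ∀ k, 1 ≤ a (k + 1)) (hq0 : q 0 = 1) (hq1 : q 1 = a 1)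
    (hq : ∀ k, q (k + 2) = a (k + 2) * q (k + 1) + q k) :
    ∀ N, ∃ b : ℕ → ℕ, OstAdm a b ∧ (∀ k, N < q k → b (k + 1) = 0) ∧
      ∀ m, N < q m → ∑ k ∈ Finset.range m, b (k + 1) * q k = N := by
  have hqpos := ost_qpos ha hq0 hq1 hq
  have hqmono := ost_qmono ha hq0 hq1 hq
  have hkey : ∀ u, q (u + 1) ≤ a (u + 1) * q u + q u := by
    intro u
    match u with
    | 0 =>
      show q 1 ≤ a 1 * q 0 + q 0
      rw [hq1, hq0, mul_one]
      omega
    | (u+1) =>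
      rw [hq u]
      exact Nat.add_le_add_left (hqmono u (u + 1) (Nat.le_succ u)) _
  intro N
  induction N using Nat.strong_induction_on with
  | _ N ih =>
    rcases Nat.eq_zero_or_pos N with rfl | hN
    · exact ⟨fun _ => 0,
        ⟨rfl, lt_of_lt_of_le Nat.zero_lt_one (ha 0), fun k => Nat.zero_le _,
          fun k _ => rfl⟩,
        fun k _ => rfl, fun m _ => by simp⟩
    · have hex : ∃ s, N < q s := ost_qunbdd ha hq0 hq1 hq N
      have hs1 : Nat.find hex ≠ 0 := by
        intro h0
        have := Nat.find_spec hex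
        rw [h0, hq0] at this
        omega
      obtain ⟨t, hts⟩ : ∃ t, Nat.find hex = t + 1 := ⟨Nat.find hex - 1, by omega⟩
      have ht1 : N < q (t + 1) := hts ▸ Nat.find_spec hex
      have ht2 : q t ≤ N := by
        have := Nat.find_min hex (show t < Nat.find hex by omega)
        omega
      obtain ⟨d, r, hdr, hr⟩ : ∃ d r, N = d * q t + r ∧ r < q t :=
        ⟨N / q t, N % q t, by rw [mul_comm]; exact (Nat.div_add_mod N (q t)).symm,
          Nat.mod_lt N (hqpos t)⟩
      have hd1 : d ≠ 0 := by
        intro h0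
        rw [h0, zero_mul] at hdr
        omega
      have hd2 : d ≤ a (t + 1) := by
        by_contra hcon
        push_neg at hcon
        have k1 : (a (t + 1) + 1) * q t ≤ d * q t :=
          Nat.mul_le_mul_right (q t) (by omega)
        have k2 : (a (t + 1) + 1) * q t = a (t + 1) * q t + q t := by ring
        have k3 := hkey t
        omega
      have hd0 : t = 0 → d < a 1 := by
        intro h0
        subst h0
        rw [hq0, mul_one] at hdr
        rw [hq0] at hr
        rw [hq1] at ht1
        omega
      obtain ⟨c, hcadm, hcvan, hcsum⟩ := ih r (by omega)
      have hct : c (t + 1) = 0 := hcvan t hr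
      refine ⟨fun k => if k = t + 1 then d else c k, ⟨?_, ?_, ?_, ?_⟩, ?_, ?_⟩
      · show (if (0 : ℕ) = t + 1 then d else c 0) = 0
        rw [if_neg (by omega)]
        exact hcadm.1
      · show (if (1 : ℕ) = t + 1 then d else c 1) < a 1
        by_cases h : (1 : ℕ) = t + 1
        · rw [if_pos h]
          exact hd0 (by omega)
        · rw [if_neg h]
          exact hcadm.2.1
      · intro k
        show (if k + 1 = t + 1 then d else c (k + 1)) ≤ a (k + 1)
        by_cases h : k + 1 = t + 1
        · rw [if_pos h]
          have hkt : k = t := by omega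
          rw [hkt]
          exact hd2
        · rw [if_neg h]
          exact hcadm.2.2.1 k
      · intro k hk
        have hk' : (if k + 2 = t + 1 then d else c (k + 2)) = a (k + 2) := hk
        show (if k + 1 = t + 1 then d else c (k + 1)) = 0
        by_cases h2 : k + 2 = t + 1
        · have hkt : t = k + 1 := by omega
          rw [if_pos h2] at hk'
          rw [if_neg (by omega)]
          apply hcvan k
          subst hkt
          have e3 : N < q (k + 2) := ht1
          have e4 := hq k
          rw [hk'] at hdr
          omega
        · by_cases h3 : k + 1 = t + 1
          · exfalso
            rw [if_neg h2] at hk'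
            have hkt : k = t := by omega
            subst hkt
            have z : c (k + 2) = 0 :=
              hcvan (k + 1) (lt_of_lt_of_le hr (hqmono k (k + 1) (Nat.le_succ k)))
            rw [z] at hk'
            exact absurd hk'.symm (Nat.one_le_iff_ne_zero.mp (ha (k + 1)))
          · rw [if_neg h2] at hk'
            rw [if_neg h3]
            exact hcadm.2.2.2 k hk'
      · intro k hkN
        show (if k + 1 = t + 1 then d else c (k + 1)) = 0
        have hkt : k ≠ t := by
          intro h
          rw [h] at hkN
          omega
        rw [if_neg (by omega)]
        exact hcvan k (by omega)
      · intro m hm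
        have htm : t < m := by
          by_contra hcon
          push_neg at hcon
          have := hqmono m t hcon
          omega
        have step1 : ∑ k ∈ Finset.range m,
            (if k + 1 = t + 1 then d else c (k + 1)) * q k
            = ∑ k ∈ Finset.range m,
              (c (k + 1) * q k + if k = t then d * q t else 0) := by
          apply Finset.sum_congr rfl
          intro x hx
          by_cases hxt : x = t
          · subst hxt
            simp [hct]
          · simp [hxt, show x + 1 ≠ t + 1 from by omega]
        show ∑ k ∈ Finset.range m,
            (if k + 1 = t + 1 then d else c (k + 1)) * q k = N
        rw [step1, Finset.sum_add_distrib, hcsum m (by omega),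
          Finset.sum_ite_eq' (Finset.range m) t (fun _ => d * q t)]
        rw [if_pos (Finset.mem_range.mpr htm)]
        omega

end Ost

/-- Existence and uniqueness of the Ostrowski representation:
given the continued fraction digits `a₁, a₂, …` (all positive) of an irrational
number and the associated denominators `q₋₁ = 0, q₀ = 1, q_{k+1} = a_{k+1} q_k + q_{k-1}`,
every natural number `N` can be written uniquely as `N = ∑ₖ b_{k+1} q_k` with
`b₁ < a₁`, `b_k ≤ a_k`, and `b_{k-1} = 0` whenever `b_k = a_k`. -/
theorem ostrowski_representation_exists_unique
    (a q : ℕ → ℕ)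
    (ha : ∀ k, 1 ≤ a (k + 1))
    (hq0 : q 0 = 1) (hq1 : q 1 = a 1)
    (hq : ∀ k, q (k + 2) = a (k + 2) * q (k + 1) + q k)
    (N : ℕ) :
    ∃! b : ℕ → ℕ,
      (∃ n, ∀ k, n < k → b k = 0) ∧
      b 0 = 0 ∧
      b 1 < a 1 ∧
      (∀ k, b (k + 1) ≤ a (k + 1)) ∧
      (∀ k, b (k + 2) = a (k + 2) → b (k + 1) = 0) ∧
      ∑ᶠ k, b (k + 1) * q k = N := by
  obtain ⟨b, hbadm, hbvan, hbsum⟩ := ost_exists ha hq0 hq1 hq N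
  obtain ⟨m, hm⟩ := ost_qunbdd ha hq0 hq1 hq N
  have hqmono := ost_qmono ha hq0 hq1 hq
  have hsupp : (Function.support fun k => b (k + 1) * q k) ⊆ ↑(Finset.range m) := by
    intro k hk
    simp only [Function.mem_support] at hk
    simp only [Finset.coe_range, Set.mem_Iio]
    by_contra hc
    push_neg at hc
    rw [hbvan k (lt_of_lt_of_le hm (hqmono m k hc)), zero_mul] at hk
    exact hk rfl
  have hfin : ∑ᶠ k, b (k + 1) * q k = N := by
    rw [finsum_eq_sum_of_support_subset _ hsupp]
    exact hbsum m hm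
  refine ⟨b, ⟨⟨m, ?_⟩, hbadm.1, hbadm.2.1, hbadm.2.2.1, hbadm.2.2.2, hfin⟩, ?_⟩
  · intro k hk
    obtain ⟨j, rfl⟩ : ∃ j, k = j + 1 := ⟨k - 1, by omega⟩
    exact hbvan j (lt_of_lt_of_le hm (hqmono m j (by omega)))
  · rintro y ⟨⟨ny, hny⟩, hy0, hy1, hy2, hy3, hysum⟩
    have hysupp : (Function.support fun k => y (k + 1) * q k)
        ⊆ ↑(Finset.range (ny + 1)) := by
      intro k hk
      simp only [Function.mem_support] at hk
      simp only [Finset.coe_range, Set.mem_Iio]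
      by_contra hc
      push_neg at hc
      rw [hny (k + 1) (by omega), zero_mul] at hk
      exact hk rfl
    have hysum' : ∑ k ∈ Finset.range (ny + 1), y (k + 1) * q k = N := by
      rw [← finsum_eq_sum_of_support_subset _ hysupp]
      exact hysum
    have hbsum' : ∑ k ∈ Finset.range m, b (k + 1) * q k = N := hbsum m hm
    have key := ost_uniq ha hq0 hq1 hq N y b (ny + 1) m
      ⟨hy0, hy1, hy2, hy3⟩ hbadm
      (fun k hk => hny (k + 1) (by omega))
      (fun k hk => hbvan k (lt_of_lt_of_le hm (hqmono m k hk)))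
      hysum' hbsum'
    funext k
    cases k with
    | zero => rw [hy0, hbadm.1]
    | succ k => exact key k
end

section
/- If b_n, ..., b_1 are natural numbers with b_1 \le a_1 - 1, b_k \le a_k for 2 \le k \le n, and b_{k-1} = 0 whenever b_k = a_k, then \sum_{k=0}^{n-1} b_{k+1} q_k < q_n. -/
/-- If `b_n, …, b_1` are natural numbers with `b₁ ≤ a₁ - 1`,
`b_k ≤ a_k` for `2 ≤ k ≤ n`, and `b_{k-1} = 0` whenever `b_k = a_k`, then
`∑_{k=0}^{n-1} b_{k+1} q_k < q_n`. -/
theorem ostrowski_value_lt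
    (a q : ℕ → ℕ)
    (ha : ∀ k, 1 ≤ a (k + 1))
    (hq0 : q 0 = 1) (hq1 : q 1 = a 1)
    (hq : ∀ k, q (k + 2) = a (k + 2) * q (k + 1) + q k)
    (n : ℕ) (b : ℕ → ℕ)
    (hb1 : b 1 ≤ a 1 - 1)
    (hb : ∀ k, 2 ≤ k → k ≤ n → b k ≤ a k)
    (hbc : ∀ k, 2 ≤ k → k ≤ n → b k = a k → b (k - 1) = 0) :
    ∑ k ∈ Finset.range n, b (k + 1) * q k < q n := by
  induction n using Nat.strong_induction_on with
  | _ n ih =>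
    match n, ih, hb, hbc with
    | 0, ih, hb, hbc => simpa [hq0] using Nat.zero_lt_one
    | 1, ih, hb, hbc =>
        have h1 : 1 ≤ a 1 := ha 0
        simp only [Finset.sum_range_one, Nat.zero_add, hq0, mul_one, hq1]
        omega
    | (m+2), ih, hb, hbc =>
        have hbm : ∀ k, 2 ≤ k → k ≤ m + 1 → b k ≤ a k := fun k h2 hk =>
          hb k h2 (by omega)
        have hbcm : ∀ k, 2 ≤ k → k ≤ m + 1 → b k = a k → b (k - 1) = 0 :=
          fun k h2 hk => hbc k h2 (by omega)
        have hbm' : ∀ k, 2 ≤ k → k ≤ m → b k ≤ a k := fun k h2 hk =>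
          hb k h2 (by omega)
        have hbcm' : ∀ k, 2 ≤ k → k ≤ m → b k = a k → b (k - 1) = 0 :=
          fun k h2 hk => hbc k h2 (by omega)
        rw [Finset.sum_range_succ, hq m]
        by_cases hcase : b (m + 2) = a (m + 2)
        · have hb0 : b (m + 1) = 0 := hbc (m + 2) (by omega) le_rfl hcase
          have ihm : ∑ k ∈ Finset.range m, b (k + 1) * q k < q m :=
            ih m (by omega) hbm' hbcm'
          rw [Finset.sum_range_succ, hb0]
          calc ∑ k ∈ Finset.range m, b (k + 1) * q k + 0 * q m
                + b (m + 2) * q (m + 1)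
              = a (m + 2) * q (m + 1) + ∑ k ∈ Finset.range m, b (k + 1) * q k := by
                rw [hcase]; ring
            _ < a (m + 2) * q (m + 1) + q m := by omega
        · have hlt : b (m + 2) < a (m + 2) :=
            lt_of_le_of_ne (hb (m + 2) (by omega) le_rfl) hcase
          have ihm : ∑ k ∈ Finset.range (m + 1), b (k + 1) * q k < q (m + 1) :=
            ih (m + 1) (by omega) hbm hbcm
          have : b (m + 2) * q (m + 1) + q (m + 1) ≤ a (m + 2) * q (m + 1) := by
            calc b (m + 2) * q (m + 1) + q (m + 1) = (b (m + 2) + 1) * q (m + 1) := by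
                  ring
              _ ≤ a (m + 2) * q (m + 1) := Nat.mul_le_mul_right _ (by omega)
          have heq : b (m + 1 + 1) * q (m + 1) = b (m + 2) * q (m + 1) := rfl
          omega
end

section
/- If two valid Ostrowski digit strings (b_n, ..., b_1) and (c_n, ..., c_1) satisfy \sum_{k=0}^{n-1} b_{k+1} q_k = \sum_{k=0}^{n-1} c_{k+1} q_k, then b_k = c_k for all k. -/
lemma ostrowski_q_pos (a q : ℕ → ℕ) (ha : ∀ k, 1 ≤ a (k + 1))
    (hq0 : q 0 = 1) (hq1 : q 1 = a 1)
    (hq : ∀ k, q (k + 2) = a (k + 2) * q (k + 1) + q k) : ∀ k, 1 ≤ q k := by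
  intro k
  induction k using Nat.strong_induction_on with
  | _ k ih =>
    match k with
    | 0 => omega
    | 1 => rw [hq1]; exact ha 0
    | (m+2) =>
      have h1 := ih m (by omega)
      rw [hq]; omega

lemma ostrowski_bound (a q : ℕ → ℕ) (ha : ∀ k, 1 ≤ a (k + 1))
    (hq0 : q 0 = 1) (hq1 : q 1 = a 1)
    (hq : ∀ k, q (k + 2) = a (k + 2) * q (k + 1) + q k)
    (n : ℕ) (b : ℕ → ℕ)
    (hb1 : b 1 < a 1)
    (hb : ∀ k, 2 ≤ k → k ≤ n → b k ≤ a k)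
    (hbc : ∀ k, 2 ≤ k → k ≤ n → b k = a k → b (k - 1) = 0) :
    ∑ k ∈ Finset.range n, b (k + 1) * q k < q n := by
  have hqpos := ostrowski_q_pos a q ha hq0 hq1 hq
  induction n using Nat.strong_induction_on with
  | _ n ih =>
    match n, hb, hbc with
    | 0, _, _ => simp [hq0]
    | 1, _, _ => simpa [hq0, hq1] using hb1
    | (m+2), hb, hbc =>
      have ihm1 : ∑ k ∈ Finset.range (m+1), b (k + 1) * q k < q (m+1) :=
        ih (m+1) (by omega) (fun k h2 hk => hb k h2 (by omega))
          (fun k h2 hk => hbc k h2 (by omega))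
      rw [Finset.sum_range_succ, hq]
      by_cases hcase : b (m+2) = a (m+2)
      · have hz : b (m+1) = 0 := hbc (m+2) (by omega) le_rfl hcase
        have ihm : ∑ k ∈ Finset.range m, b (k + 1) * q k < q m :=
          ih m (by omega) (fun k h2 hk => hb k h2 (by omega))
            (fun k h2 hk => hbc k h2 (by omega))
        rw [Finset.sum_range_succ, hz, hcase]
        simp only [zero_mul, add_zero]
        omega
      · have h1 : b (m+2) + 1 ≤ a (m+2) := by
          have := hb (m+2) (by omega) le_rfl; omega
        have h2 : (b (m+2) + 1) * q (m+1) ≤ a (m+2) * q (m+1) :=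
          Nat.mul_le_mul_right _ h1
        rw [add_mul, one_mul] at h2
        have hm := hqpos m
        have hr : b (m + 1 + 1) * q (m + 1) = b (m + 2) * q (m + 1) := rfl
        omega

/-- Two valid Ostrowski digit strings representing the same value
are equal: if `(b_n, …, b_1)` and `(c_n, …, c_1)` are valid and
`∑_{k=0}^{n-1} b_{k+1} q_k = ∑_{k=0}^{n-1} c_{k+1} q_k`, then `b_k = c_k` for all `k`. -/
theorem ostrowski_representation_unique
    (a q : ℕ → ℕ)
    (ha : ∀ k, 1 ≤ a (k + 1))
    (hq0 : q 0 = 1) (hq1 : q 1 = a 1)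
    (hq : ∀ k, q (k + 2) = a (k + 2) * q (k + 1) + q k)
    (n : ℕ) (b c : ℕ → ℕ)
    (hb1 : b 1 < a 1)
    (hb : ∀ k, 2 ≤ k → k ≤ n → b k ≤ a k)
    (hbc : ∀ k, 2 ≤ k → k ≤ n → b k = a k → b (k - 1) = 0)
    (hc1 : c 1 < a 1)
    (hc : ∀ k, 2 ≤ k → k ≤ n → c k ≤ a k)
    (hcc : ∀ k, 2 ≤ k → k ≤ n → c k = a k → c (k - 1) = 0)
    (hsum : ∑ k ∈ Finset.range n, b (k + 1) * q k
          = ∑ k ∈ Finset.range n, c (k + 1) * q k) :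
    ∀ k, 1 ≤ k → k ≤ n → b k = c k := by
  have hqpos := ostrowski_q_pos a q ha hq0 hq1 hq
  revert hb hbc hc hcc hsum
  induction n with
  | zero => intro _ _ _ _ _ k h1 h2; omega
  | succ n ih =>
    intro hb hbc hc hcc hsum
    rw [Finset.sum_range_succ, Finset.sum_range_succ] at hsum
    have hSb : ∑ k ∈ Finset.range n, b (k + 1) * q k < q n :=
      ostrowski_bound a q ha hq0 hq1 hq n b hb1
        (fun k h2 hk => hb k h2 (by omega)) (fun k h2 hk => hbc k h2 (by omega))
    have hSc : ∑ k ∈ Finset.range n, c (k + 1) * q k < q n :=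
      ostrowski_bound a q ha hq0 hq1 hq n c hc1
        (fun k h2 hk => hc k h2 (by omega)) (fun k h2 hk => hcc k h2 (by omega))
    have htop : b (n + 1) = c (n + 1) := by
      by_contra hne
      rcases Nat.lt_or_ge (b (n + 1)) (c (n + 1)) with h | h
      · have h2 : (b (n + 1) + 1) * q n ≤ c (n + 1) * q n :=
          Nat.mul_le_mul_right _ (by omega)
        rw [add_mul, one_mul] at h2
        omega
      · have h2 : (c (n + 1) + 1) * q n ≤ b (n + 1) * q n :=
          Nat.mul_le_mul_right _ (by omega)
        rw [add_mul, one_mul] at h2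
        omega
    have hsum' : ∑ k ∈ Finset.range n, b (k + 1) * q k
        = ∑ k ∈ Finset.range n, c (k + 1) * q k := by
      rw [htop] at hsum; exact Nat.add_right_cancel hsum
    intro k hk1 hkn
    rcases Nat.lt_or_ge k (n + 1) with hk | hk
    · exact ih (fun k h2 hk => hb k h2 (by omega)) (fun k h2 hk => hbc k h2 (by omega))
        (fun k h2 hk => hc k h2 (by omega)) (fun k h2 hk => hcc k h2 (by omega))
        hsum' k hk1 (by omega)
    · have : k = n + 1 := by omega
      rw [this]; exact htop
end

section
/- Algorithm 1 leaves the represented value unchanged: for every k with 3 \le k \le m+1, \sum_{i=0}^{m} z_{k,i+1} q_i = \sum_{i=0}^{m} s_{i+1} q_i, where z_{m+1} = s and each z_k arises from z_{k+1} by applying rules (A1)-(A3) (or (B1)-(B5) when k = 3). -/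
/-- One step (rules (A1)–(A3)) of Algorithm 1 at position `k`: the moving window
consists of positions `k, k-1, k-2, k-3`. -/
def ruleA (a : ℕ → ℕ) (k : ℕ) (z : ℕ → ℕ) : ℕ → ℕ :=
  if z k < a k ∧ a (k - 1) < z (k - 1) ∧ z (k - 2) = 0 then
    -- rule (A1)
    fun i =>
      if i = k then z k + 1
      else if i = k - 1 then z (k - 1) - (a (k - 1) + 1)
      else if i = k - 2 then a (k - 2) - 1
      else if i = k - 3 then z (k - 3) + 1
      else z i
  else if z k < a k ∧ a (k - 1) ≤ z (k - 1) ∧ z (k - 1) ≤ 2 * a (k - 1) ∧ 0 < z (k - 2) then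
    -- rule (A2)
    fun i =>
      if i = k then z k + 1
      else if i = k - 1 then z (k - 1) - a (k - 1)
      else if i = k - 2 then z (k - 2) - 1
      else z i
  else z -- rule (A3)

/-- The final step (rules (B1)–(B5)) of Algorithm 1, acting on positions `3, 2, 1`. -/
def ruleB (a : ℕ → ℕ) (z : ℕ → ℕ) : ℕ → ℕ :=
  if z 3 < a 3 ∧ a 2 < z 2 ∧ z 1 = 0 then
    -- rule (B1)
    fun i => if i = 3 then z 3 + 1 else if i = 2 then z 2 - (a 2 + 1)
      else if i = 1 then a 1 - 1 else z i
  else if z 3 < a 3 ∧ a 2 ≤ z 2 ∧ 0 < z 1 ∧ z 1 ≤ a 1 then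
    -- rule (B2)
    fun i => if i = 3 then z 3 + 1 else if i = 2 then z 2 - a 2
      else if i = 1 then z 1 - 1 else z i
  else if z 3 < a 3 ∧ a 2 ≤ z 2 ∧ a 1 < z 1 then
    -- rule (B3)
    fun i => if i = 3 then z 3 + 1 else if i = 2 then z 2 - a 2 + 1
      else if i = 1 then z 1 - a 1 - 1 else z i
  else if z 2 < a 2 ∧ a 1 ≤ z 1 then
    -- rule (B4)
    fun i => if i = 2 then z 2 + 1 else if i = 1 then z 1 - a 1 else z i
  else z -- rule (B5)

lemma stepA (a q : ℕ → ℕ) (ha : ∀ k, 1 ≤ a (k + 1))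
    (hq : ∀ k, q (k + 2) = a (k + 2) * q (k + 1) + q k)
    (m j : ℕ) (hk : j + 4 ≤ m) (z : ℕ → ℕ) :
    ∑ i ∈ Finset.range m, ruleA a (j + 4) z (i + 1) * q i
      = ∑ i ∈ Finset.range m, z (i + 1) * q i := by
  have hS : ({j+3, j+2, j+1, j} : Finset ℕ) ⊆ Finset.range m := by
    intro x hx
    simp only [Finset.mem_insert, Finset.mem_singleton] at hx
    simp only [Finset.mem_range]
    omega
  rw [← Finset.sum_sdiff hS, ← Finset.sum_sdiff hS]
  have hcongr : ∀ i ∈ Finset.range m \ ({j+3, j+2, j+1, j} : Finset ℕ),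
      ruleA a (j+4) z (i+1) * q i = z (i+1) * q i := by
    intro i hi
    simp only [Finset.mem_sdiff, Finset.mem_insert, Finset.mem_singleton] at hi
    unfold ruleA
    split_ifs with h1 h2
    · simp only [show j+4-1 = j+3 from rfl, show j+4-2 = j+2 from rfl,
        show j+4-3 = j+1 from rfl]
      rw [if_neg (by omega), if_neg (by omega), if_neg (by omega), if_neg (by omega)]
    · simp only [show j+4-1 = j+3 from rfl, show j+4-2 = j+2 from rfl]
      rw [if_neg (by omega), if_neg (by omega), if_neg (by omega)]
    · rfl
  rw [Finset.sum_congr rfl hcongr]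
  congr 1
  have esum : ∀ f : ℕ → ℕ, ∑ i ∈ ({j+3, j+2, j+1, j} : Finset ℕ), f i
      = f (j+3) + (f (j+2) + (f (j+1) + f j)) := by
    intro f
    rw [Finset.sum_insert (by simp only [Finset.mem_insert, Finset.mem_singleton]; omega),
      Finset.sum_insert (by simp only [Finset.mem_insert, Finset.mem_singleton]; omega),
      Finset.sum_insert (by simp only [Finset.mem_singleton]; omega),
      Finset.sum_singleton]
  rw [esum, esum]
  have hr1 : (q (j+3) : ℤ) = a (j+3) * q (j+2) + q (j+1) := by exact_mod_cast hq (j+1)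
  have hr2 : (q (j+2) : ℤ) = a (j+2) * q (j+1) + q j := by exact_mod_cast hq j
  unfold ruleA
  split_ifs with h1 h2
  · obtain ⟨hz4, hz3, hz2⟩ := h1
    simp only [show j+4-1 = j+3 from rfl, show j+4-2 = j+2 from rfl,
      show j+4-3 = j+1 from rfl]
    simp only [if_true, if_neg (show ¬(j+2+1 = j+4) by omega),
      if_neg (show ¬(j+1+1 = j+4) by omega), if_neg (show ¬(j+1+1 = j+3) by omega),
      if_neg (show ¬(j+1 = j+4) by omega), if_neg (show ¬(j+1 = j+3) by omega),
      if_neg (show ¬(j+1 = j+2) by omega)]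
    have h3 : a (j+3) + 1 ≤ z (j+3) := hz3
    have h2' : 1 ≤ a (j+2) := ha (j+1)
    have hz2' : z (j+2) = 0 := hz2
    simp only [show j+3+1 = j+4 from rfl, show j+2+1 = j+3 from rfl,
      show j+1+1 = j+2 from rfl, hz2']
    zify [h3, h2']
    linear_combination hr1 - hr2
  · obtain ⟨hz4, hz3, _, hz2⟩ := h2
    simp only [show j+4-1 = j+3 from rfl, show j+4-2 = j+2 from rfl]
    simp only [if_true, if_neg (show ¬(j+2+1 = j+4) by omega),
      if_neg (show ¬(j+1+1 = j+4) by omega), if_neg (show ¬(j+1+1 = j+3) by omega),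
      if_neg (show ¬(j+1 = j+4) by omega), if_neg (show ¬(j+1 = j+3) by omega),
      if_neg (show ¬(j+1 = j+2) by omega)]
    have hz3' : a (j+3) ≤ z (j+3) := hz3
    have hz2' : 1 ≤ z (j+2) := hz2
    simp only [show j+3+1 = j+4 from rfl, show j+2+1 = j+3 from rfl,
      show j+1+1 = j+2 from rfl]
    zify [hz3', hz2']
    linear_combination hr1
  · rfl

lemma stepB (a q : ℕ → ℕ) (ha1 : 1 ≤ a 1)
    (hq0 : q 0 = 1) (hq1 : q 1 = a 1) (hq2 : q 2 = a 2 * q 1 + q 0)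
    (m : ℕ) (hm : 3 ≤ m) (z : ℕ → ℕ) :
    ∑ i ∈ Finset.range m, ruleB a z (i + 1) * q i
      = ∑ i ∈ Finset.range m, z (i + 1) * q i := by
  have hS : ({2, 1, 0} : Finset ℕ) ⊆ Finset.range m := by
    intro x hx
    simp only [Finset.mem_insert, Finset.mem_singleton] at hx
    simp only [Finset.mem_range]
    omega
  rw [← Finset.sum_sdiff hS, ← Finset.sum_sdiff hS]
  have hcongr : ∀ i ∈ Finset.range m \ ({2, 1, 0} : Finset ℕ),
      ruleB a z (i+1) * q i = z (i+1) * q i := by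
    intro i hi
    simp only [Finset.mem_sdiff, Finset.mem_insert, Finset.mem_singleton] at hi
    unfold ruleB
    split_ifs with h1 h2 h3 h4
    · simp only [if_neg (show ¬(i+1 = 3) by omega), if_neg (show ¬(i+1 = 2) by omega),
        if_neg (show ¬(i+1 = 1) by omega)]
    · simp only [if_neg (show ¬(i+1 = 3) by omega), if_neg (show ¬(i+1 = 2) by omega),
        if_neg (show ¬(i+1 = 1) by omega)]
    · simp only [if_neg (show ¬(i+1 = 3) by omega), if_neg (show ¬(i+1 = 2) by omega),
        if_neg (show ¬(i+1 = 1) by omega)]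
    · simp only [if_neg (show ¬(i+1 = 2) by omega), if_neg (show ¬(i+1 = 1) by omega)]
    · rfl
  rw [Finset.sum_congr rfl hcongr]
  congr 1
  have esum : ∀ f : ℕ → ℕ, ∑ i ∈ ({2, 1, 0} : Finset ℕ), f i
      = f 2 + (f 1 + f 0) := by
    intro f
    rw [Finset.sum_insert (by simp), Finset.sum_insert (by simp), Finset.sum_singleton]
  rw [esum, esum]
  have hq2' : (q 2 : ℤ) = a 2 * q 1 + q 0 := by exact_mod_cast hq2
  have hq1' : (q 1 : ℤ) = a 1 := by exact_mod_cast hq1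
  have hq0' : (q 0 : ℤ) = 1 := by exact_mod_cast hq0
  unfold ruleB
  split_ifs with h1 h2 h3 h4
  · obtain ⟨hz3, hz2, hz1⟩ := h1
    norm_num
    have h2' : a 2 + 1 ≤ z 2 := hz2
    zify [h2', ha1]
    rw [hz1]
    linear_combination hq2' + (a 1 : ℤ) * hq0' - hq1'
  · obtain ⟨hz3, hz2, hz1, hz1'⟩ := h2
    norm_num
    zify [hz2, hz1]
    linear_combination hq2'
  · obtain ⟨hz3, hz2, hz1⟩ := h3
    norm_num
    have hz1' : a 1 + 1 ≤ z 1 := hz1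
    have e : z 1 - a 1 - 1 = z 1 - (a 1 + 1) := by omega
    rw [e]
    zify [hz2, hz1']
    linear_combination hq2' + hq1' - (a 1 : ℤ) * hq0'
  · obtain ⟨hz2, hz1⟩ := h4
    norm_num
    zify [hz1]
    linear_combination hq1' - (a 1 : ℤ) * hq0'
  · rfl

/-- Algorithm 1 leaves the represented value unchanged: for every
`k` with `3 ≤ k ≤ m + 1`, `∑ᵢ z_{k,i+1} q_i = ∑ᵢ s_{i+1} q_i`, where `z_{m+1} = s`
and each `z_k` arises from `z_{k+1}` by applying rules (A1)–(A3) (or (B1)–(B5)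
when `k = 3`). -/
theorem algorithm1_preserves_value
    (a q : ℕ → ℕ)
    (ha : ∀ k, 1 ≤ a (k + 1))
    (hq0 : q 0 = 1) (hq1 : q 1 = a 1)
    (hq : ∀ k, q (k + 2) = a (k + 2) * q (k + 1) + q k)
    (m : ℕ) (hm : 4 ≤ m)
    (s : ℕ → ℕ) (hstop : s m = 0)
    (Z : ℕ → ℕ → ℕ)
    (hZtop : Z (m + 1) = s)
    (hZA : ∀ k, 4 ≤ k → k ≤ m → Z k = ruleA a k (Z (k + 1)))
    (hZB : Z 3 = ruleB a (Z 4)) :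
    ∀ k, 3 ≤ k → k ≤ m + 1 →
      ∑ i ∈ Finset.range m, Z k (i + 1) * q i = ∑ i ∈ Finset.range m, s (i + 1) * q i := by
  intro k hk3 hkm
  have key : ∀ n k, 3 ≤ k → k ≤ m + 1 → m + 1 - k ≤ n →
      ∑ i ∈ Finset.range m, Z k (i + 1) * q i = ∑ i ∈ Finset.range m, s (i + 1) * q i := by
    intro n
    induction n with
    | zero =>
      intro k hk3 hkm hn
      have : k = m + 1 := by omega
      subst this
      rw [hZtop]
    | succ n ih =>
      intro k hk3 hkm hn
      rcases eq_or_lt_of_le hkm with heq | hlt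
      · subst heq; rw [hZtop]
      · have hkm' : k ≤ m := by omega
        rcases eq_or_lt_of_le hk3 with heq3 | hlt3
        · subst heq3
          rw [hZB, stepB a q (ha 0) hq0 hq1 (hq 0) m (by omega) (Z 4)]
          exact ih 4 (by omega) (by omega) (by omega)
        · obtain ⟨j, rfl⟩ : ∃ j, k = j + 4 := ⟨k - 4, by omega⟩
          rw [hZA (j + 4) (by omega) hkm',
            stepA a q ha hq m j hkm' (Z (j + 4 + 1))]
          exact ih (j + 4 + 1) (by omega) (by omega) (by omega)
  exact key (m + 1 - k) k hk3 hkm le_rfl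
end

section
/- In Algorithm 1, for every k \ge 3: if z_{k+1,k-1} = 2a_{k-1} + 1 then z_{k+1,k-2} = 0, and if z_{k+1,k-1} = 2a_{k-1} then z_{k+1,k-2} \le a_{k-2}. -/
lemma ruleA_apply_ne (a : ℕ → ℕ) (j : ℕ) (z : ℕ → ℕ) (i : ℕ)
    (h0 : i ≠ j) (h1 : i ≠ j - 1) (h2 : i ≠ j - 2) (h3 : i ≠ j - 3) :
    ruleA a j z i = z i := by
  unfold ruleA
  split
  · simp [h0, h1, h2, h3]
  · split
    · simp [h0, h1, h2]
    · rfl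

/-- (Lemma 2.2 of the paper.) In Algorithm 1 applied to the
digit-wise sum of two valid Ostrowski representations (with `m = n + 1` and
`s_m = 0`), for every `k ≥ 3`: if `z_{k+1,k-1} = 2a_{k-1} + 1` then
`z_{k+1,k-2} = 0`, and if `z_{k+1,k-1} = 2a_{k-1}` then `z_{k+1,k-2} ≤ a_{k-2}`. -/
theorem algorithm1_double_digit
    (a : ℕ → ℕ)
    (ha : ∀ k, 1 ≤ a (k + 1))
    (n : ℕ) (hn : 3 ≤ n)
    (x y : ℕ → ℕ)
    -- `x` and `y` are valid Ostrowski digit strings of length `n`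
    (hx1 : x 1 < a 1) (hxb : ∀ k, x (k + 1) ≤ a (k + 1))
    (hxc : ∀ k, x (k + 2) = a (k + 2) → x (k + 1) = 0)
    (hxn : ∀ k, n < k → x k = 0)
    (hy1 : y 1 < a 1) (hyb : ∀ k, y (k + 1) ≤ a (k + 1))
    (hyc : ∀ k, y (k + 2) = a (k + 2) → y (k + 1) = 0)
    (hyn : ∀ k, n < k → y k = 0)
    -- `s` is the digit-wise sum, with `m = n + 1` and leading digit `s m = 0`
    (s : ℕ → ℕ) (hs : ∀ i, s i = x i + y i)
    (Z : ℕ → ℕ → ℕ)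
    (hZtop : Z (n + 2) = s)
    (hZA : ∀ k, 4 ≤ k → k ≤ n + 1 → Z k = ruleA a k (Z (k + 1)))
    (hZB : Z 3 = ruleB a (Z 4)) :
    ∀ k, 3 ≤ k → k ≤ n + 1 →
      (Z (k + 1) (k - 1) = 2 * a (k - 1) + 1 → Z (k + 1) (k - 2) = 0) ∧
      (Z (k + 1) (k - 1) = 2 * a (k - 1) → Z (k + 1) (k - 2) ≤ a (k - 2)) := by
  have U : ∀ c i, i + 4 ≤ n + 2 - c → Z (n + 2 - c) i = s i := by
    intro c
    induction c with
    | zero => intro i _; simp [hZtop]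
    | succ c ih =>
      intro i hi
      have hj4 : 4 ≤ n + 2 - (c + 1) := by omega
      have hrw : n + 2 - c = (n + 2 - (c + 1)) + 1 := by omega
      have hz := hZA (n + 2 - (c + 1)) hj4 (by omega)
      rw [hz, ruleA_apply_ne a _ _ i (by omega) (by omega) (by omega) (by omega), ← hrw]
      exact ih i (by omega)
  have U' : ∀ j i, j ≤ n + 2 → i + 4 ≤ j → Z j i = s i := by
    intro j i hj hi
    have := U (n + 2 - j) i (by omega)
    rwa [show n + 2 - (n + 2 - j) = j by omega] at this
  intro k hk3 hkn
  obtain ⟨m, rfl⟩ : ∃ m, k = m + 3 := ⟨k - 3, by omega⟩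
  simp only [show m + 3 + 1 = m + 4 from rfl, show m + 3 - 1 = m + 2 from rfl,
    show m + 3 - 2 = m + 1 from rfl]
  -- the key arithmetic lemma
  have hxA : x (m + 1) ≤ a (m + 1) := by
    cases m with
    | zero => exact le_of_lt hx1
    | succ m' => exact hxb (m' + 1)
  have hyA : y (m + 1) ≤ a (m + 1) := by
    cases m with
    | zero => exact le_of_lt hy1
    | succ m' => exact hyb (m' + 1)
  have key : ∀ E1 E2 : ℕ, E1 ≤ s (m + 2) + 1 → E2 = s (m + 1) →
      (E1 = 2 * a (m + 2) + 1 → E2 = 0) ∧ (E1 = 2 * a (m + 2) → E2 ≤ a (m + 1)) := by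
    intro E1 E2 hE1 hE2
    have hsx : s (m + 2) = x (m + 2) + y (m + 2) := hs _
    have hsx2 : s (m + 1) = x (m + 1) + y (m + 1) := hs _
    have hx2 : x (m + 2) ≤ a (m + 2) := hxb (m + 1)
    have hy2 : y (m + 2) ≤ a (m + 2) := hyb (m + 1)
    have ha2 : 1 ≤ a (m + 2) := ha (m + 1)
    rcases eq_or_lt_of_le hx2 with hxe | hxl
    · have hx0 := hxc m hxe
      rcases eq_or_lt_of_le hy2 with hye | hyl
      · have hy0 := hyc m hye
        constructor <;> intro h <;> omega
      · constructor <;> intro h <;> omega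
    · rcases eq_or_lt_of_le hy2 with hye | hyl
      · have hy0 := hyc m hye
        constructor <;> intro h <;> omega
      · constructor <;> intro h <;> omega
  by_cases hcase : m + 3 = n + 1
  · -- top case: Z (m+4) = s
    have hz : Z (m + 4) = s := by rw [show m + 4 = n + 2 by omega, hZtop]
    rw [hz]
    exact key (s (m + 2)) (s (m + 1)) (Nat.le_succ _) rfl
  · have hstep : Z (m + 4) = ruleA a (m + 4) (Z (m + 5)) := hZA (m + 4) (by omega) (by omega)
    have hW2 : Z (m + 5) (m + 1) = s (m + 1) := U' (m + 5) (m + 1) (by omega) (by omega)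
    have hW1 : Z (m + 5) (m + 2) ≤ s (m + 2) + 1 := by
      by_cases h5 : m + 5 ≤ n + 1
      · have h := hZA (m + 5) (by omega) h5
        have h6 : Z (m + 6) (m + 2) = s (m + 2) := U' (m + 6) (m + 2) (by omega) (by omega)
        rw [h]
        unfold ruleA
        simp only [show m + 5 - 1 = m + 4 from rfl, show m + 5 - 2 = m + 3 from rfl,
          show m + 5 - 3 = m + 2 from rfl, show m + 5 + 1 = m + 6 from rfl]
        have d1 : m + 2 ≠ m + 5 := by omega
        have d2 : m + 2 ≠ m + 4 := by omega
        have d3 : m + 2 ≠ m + 3 := by omega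
        split
        · simp [d1, d2, d3]; omega
        · split
          · simp [d1, d2, d3]; omega
          · omega
      · rw [show m + 5 = n + 2 by omega, hZtop]
        omega
    rw [hstep]
    unfold ruleA
    simp only [show m + 4 - 1 = m + 3 from rfl, show m + 4 - 2 = m + 2 from rfl,
      show m + 4 - 3 = m + 1 from rfl]
    have d1 : m + 2 ≠ m + 4 := by omega
    have d2 : m + 2 ≠ m + 3 := by omega
    have e1 : m + 1 ≠ m + 4 := by omega
    have e2 : m + 1 ≠ m + 3 := by omega
    have e3 : m + 1 ≠ m + 2 := by omega
    have ha2 : 1 ≤ a (m + 2) := ha (m + 1)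
    split
    · -- rule (A1) at position m+4
      simp only [d1, d2, e1, e2, e3, if_false, if_true]
      simp [d1, d2, e1, e2, e3]
      constructor <;> intro h <;> omega
    · split
      · -- rule (A2)
        simp [d1, d2, e1, e2, e3]
        have hk := key (Z (m + 5) (m + 2) - 1) (Z (m + 5) (m + 1)) (by omega) hW2
        exact ⟨fun h => hk.1 (by omega), fun h => hk.2 (by omega)⟩
      · exact key (Z (m + 5) (m + 2)) (Z (m + 5) (m + 1)) hW1 hW2
end

section
/- In Algorithm 1, for every k with 3 \le k \le m: (i) if z_{k+1,k-1} > a_{k-1} then z_{k+1,k} < a_k; (ii) if z_{k+1,k-1} = a_{k-1} and z_{k+1,k-2} > 0 then z_{k+1,k} < a_k. -/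
/-- (Lemma 2.3 of the paper.) In Algorithm 1 applied to the
digit-wise sum of two valid Ostrowski representations (with `m = n + 1` and
`s_m = 0`), for every `k` with `3 ≤ k ≤ m`:
(i) if `z_{k+1,k-1} > a_{k-1}` then `z_{k+1,k} < a_k`;
(ii) if `z_{k+1,k-1} = a_{k-1}` and `z_{k+1,k-2} > 0` then `z_{k+1,k} < a_k`. -/
theorem algorithm1_small_first
    (a : ℕ → ℕ)
    (ha : ∀ k, 1 ≤ a (k + 1))
    (n : ℕ) (hn : 3 ≤ n)
    (x y : ℕ → ℕ)
    -- `x` and `y` are valid Ostrowski digit strings of length `n`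
    (hx1 : x 1 < a 1) (hxb : ∀ k, x (k + 1) ≤ a (k + 1))
    (hxc : ∀ k, x (k + 2) = a (k + 2) → x (k + 1) = 0)
    (hxn : ∀ k, n < k → x k = 0)
    (hy1 : y 1 < a 1) (hyb : ∀ k, y (k + 1) ≤ a (k + 1))
    (hyc : ∀ k, y (k + 2) = a (k + 2) → y (k + 1) = 0)
    (hyn : ∀ k, n < k → y k = 0)
    -- `s` is the digit-wise sum, with `m = n + 1` and leading digit `s m = 0`
    (s : ℕ → ℕ) (hs : ∀ i, s i = x i + y i)
    (Z : ℕ → ℕ → ℕ)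
    (hZtop : Z (n + 2) = s)
    (hZA : ∀ k, 4 ≤ k → k ≤ n + 1 → Z k = ruleA a k (Z (k + 1)))
    (hZB : Z 3 = ruleB a (Z 4)) :
    ∀ k, 3 ≤ k → k ≤ n + 1 →
      (a (k - 1) < Z (k + 1) (k - 1) → Z (k + 1) k < a k) ∧
      (Z (k + 1) (k - 1) = a (k - 1) → 0 < Z (k + 1) (k - 2) → Z (k + 1) k < a k) := by
  
  -- basic facts about `a` and the digit sum `s`
  have hsle : ∀ i, 1 ≤ i → s i ≤ 2 * a i := by
    intro i hi
    obtain ⟨j, rfl⟩ : ∃ j, i = j + 1 := ⟨i - 1, by omega⟩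
    have h1 := hxb j
    have h2 := hyb j
    rw [hs]; omega
  have hF2 : ∀ i, 2 ≤ i → s i = 2 * a i → s (i - 1) = 0 := by
    intro i hi hsi
    obtain ⟨j, rfl⟩ : ∃ j, i = j + 2 := ⟨i - 2, by omega⟩
    rw [hs] at hsi
    have h1 : x (j + 2) ≤ a (j + 2) := hxb (j + 1)
    have h2 : y (j + 2) ≤ a (j + 2) := hyb (j + 1)
    have hxe : x (j + 2) = a (j + 2) := by omega
    have hye : y (j + 2) = a (j + 2) := by omega
    have hx0 := hxc j hxe
    have hy0 := hyc j hye
    show s (j + 1) = 0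
    rw [hs]; omega
  have hF3 : ∀ i, 2 ≤ i → s i + 1 = 2 * a i → s (i - 1) ≤ a (i - 1) := by
    intro i hi hsi
    obtain ⟨j, rfl⟩ : ∃ j, i = j + 2 := ⟨i - 2, by omega⟩
    rw [hs] at hsi
    have h1 : x (j + 2) ≤ a (j + 2) := hxb (j + 1)
    have h2 : y (j + 2) ≤ a (j + 2) := hyb (j + 1)
    have hax : 1 ≤ a (j + 2) := ha (j + 1)
    have hmax : x (j + 2) = a (j + 2) ∨ y (j + 2) = a (j + 2) := by omega
    have hx1' : x (j + 1) ≤ a (j + 1) := hxb j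
    have hy1' : y (j + 1) ≤ a (j + 1) := hyb j
    show s (j + 1) ≤ a (j + 1)
    rw [hs]
    rcases hmax with h | h
    · have := hxc j h; omega
    · have := hyc j h; omega
  -- the base case `k = n + 1`
  have base : ((a (n + 1 - 1) < Z (n + 1 + 1) (n + 1 - 1) → Z (n + 1 + 1) (n + 1) < a (n + 1)) ∧
       (Z (n + 1 + 1) (n + 1 - 1) = a (n + 1 - 1) → 0 < Z (n + 1 + 1) (n + 1 - 2) →
         Z (n + 1 + 1) (n + 1) < a (n + 1))) ∧
      Z (n + 1 + 1) (n + 1 - 1) ≤ 2 * a (n + 1 - 1) + 1 ∧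
      (Z (n + 1 + 1) (n + 1 - 1) = 2 * a (n + 1 - 1) + 1 → Z (n + 1 + 1) (n + 1 - 2) = 0) ∧
      (Z (n + 1 + 1) (n + 1 - 1) = 2 * a (n + 1 - 1) → Z (n + 1 + 1) (n + 1 - 2) ≤ a (n + 1 - 2)) ∧
      (Z (n + 1 + 1) (n + 1 - 2) = s (n + 1 - 2) ∨
        (Z (n + 1 + 1) (n + 1 - 2) = s (n + 1 - 2) + 1 ∧
          Z (n + 1 + 1) (n + 1 - 1) = a (n + 1 - 1) - 1)) ∧
      (∀ i, i ≤ n + 1 - 3 → Z (n + 1 + 1) i = s i) := by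
    simp only [show n + 1 + 1 = n + 2 by omega, show n + 1 - 1 = n by omega,
      show n + 1 - 2 = n - 1 by omega]
    rw [hZtop]
    have h0 := hsle n (by omega)
    have h1 : s (n + 1) = 0 := by rw [hs, hxn (n + 1) (by omega), hyn (n + 1) (by omega)]
    have h2 : 1 ≤ a (n + 1) := ha n
    refine ⟨⟨fun h => by omega, fun h h' => by omega⟩, by omega, fun h => by omega,
      fun h => ?_, Or.inl rfl, fun i _ => rfl⟩
    have h3 : s (n - 1) = 0 := hF2 n (by omega) h
    omega
  -- main downward induction
  have main : ∀ d k, 3 ≤ k → k ≤ n + 1 → n + 1 ≤ k + d →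
      ((a (k - 1) < Z (k + 1) (k - 1) → Z (k + 1) k < a k) ∧
       (Z (k + 1) (k - 1) = a (k - 1) → 0 < Z (k + 1) (k - 2) → Z (k + 1) k < a k)) ∧
      Z (k + 1) (k - 1) ≤ 2 * a (k - 1) + 1 ∧
      (Z (k + 1) (k - 1) = 2 * a (k - 1) + 1 → Z (k + 1) (k - 2) = 0) ∧
      (Z (k + 1) (k - 1) = 2 * a (k - 1) → Z (k + 1) (k - 2) ≤ a (k - 2)) ∧
      (Z (k + 1) (k - 2) = s (k - 2) ∨
        (Z (k + 1) (k - 2) = s (k - 2) + 1 ∧ Z (k + 1) (k - 1) = a (k - 1) - 1)) ∧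
      (∀ i, i ≤ k - 3 → Z (k + 1) i = s i) := by
    intro d
    induction d with
    | zero =>
      intro k h3 hk1 hk2
      obtain rfl : k = n + 1 := by omega
      exact base
    | succ d ih =>
      intro k h3 hk1 hk2
      by_cases hk : k = n + 1
      · subst hk; exact base
      · obtain ⟨k', rfl⟩ : ∃ k', k = k' + 3 := ⟨k - 3, by omega⟩
        have IH := ih (k' + 4) (by omega) (by omega) (by omega)
        simp only [show k' + 4 + 1 = k' + 5 by omega, show k' + 4 - 1 = k' + 3 by omega,
          show k' + 4 - 2 = k' + 2 by omega, show k' + 4 - 3 = k' + 1 by omega] at IH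
        obtain ⟨⟨IG1, IG2⟩, ID0, ID1, ID2, IE, IF⟩ := IH
        simp only [show k' + 3 + 1 = k' + 4 by omega, show k' + 3 - 1 = k' + 2 by omega,
          show k' + 3 - 2 = k' + 1 by omega, show k' + 3 - 3 = k' by omega]
        have hrw : Z (k' + 4) = ruleA a (k' + 4) (Z (k' + 5)) := hZA (k' + 4) (by omega) (by omega)
        unfold ruleA at hrw
        simp only [show k' + 4 - 1 = k' + 3 by omega, show k' + 4 - 2 = k' + 2 by omega,
          show k' + 4 - 3 = k' + 1 by omega] at hrw
        have ha1 : 1 ≤ a (k' + 1) := ha k'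
        have ha2 : 1 ≤ a (k' + 2) := ha (k' + 1)
        have ha3 : 1 ≤ a (k' + 3) := ha (k' + 2)
        have hs2 := hsle (k' + 2) (by omega)
        split_ifs at hrw with h1 h2
        · -- Case A1 at position k'+4
          have e3 : Z (k' + 4) (k' + 3) = Z (k' + 5) (k' + 3) - (a (k' + 3) + 1) := by
            simp only [hrw]
            rw [if_neg (show ¬(k' + 3 = k' + 4) by omega)]
            simp
          have e2 : Z (k' + 4) (k' + 2) = a (k' + 2) - 1 := by
            simp only [hrw]
            rw [if_neg (show ¬(k' + 2 = k' + 4) by omega),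
              if_neg (show ¬(k' + 2 = k' + 3) by omega)]
            simp
          have e1 : Z (k' + 4) (k' + 1) = Z (k' + 5) (k' + 1) + 1 := by
            simp only [hrw]
            rw [if_neg (show ¬(k' + 1 = k' + 4) by omega),
              if_neg (show ¬(k' + 1 = k' + 3) by omega),
              if_neg (show ¬(k' + 1 = k' + 2) by omega)]
            simp
          have eF : ∀ i, i ≤ k' → Z (k' + 4) i = s i := by
            intro i hi
            simp only [hrw]
            rw [if_neg (show ¬(i = k' + 4) by omega), if_neg (show ¬(i = k' + 3) by omega),
              if_neg (show ¬(i = k' + 2) by omega), if_neg (show ¬(i = k' + 1) by omega)]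
            exact IF i (by omega)
          refine ⟨⟨?_, ?_⟩, ?_, ?_, ?_, ?_, eF⟩
          · intro h; rw [e2] at h; omega
          · intro h h'; rw [e2] at h; omega
          · rw [e2]; omega
          · intro h; rw [e2] at h; omega
          · intro h; rw [e2] at h; omega
          · right
            refine ⟨?_, e2⟩
            rw [e1, IF (k' + 1) le_rfl]
        · -- Case A2 at position k'+4
          obtain ⟨h21, h22, h23, h24⟩ := h2
          have e3 : Z (k' + 4) (k' + 3) = Z (k' + 5) (k' + 3) - a (k' + 3) := by
            simp only [hrw]
            rw [if_neg (show ¬(k' + 3 = k' + 4) by omega)]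
            simp
          have e2 : Z (k' + 4) (k' + 2) = Z (k' + 5) (k' + 2) - 1 := by
            simp only [hrw]
            rw [if_neg (show ¬(k' + 2 = k' + 4) by omega),
              if_neg (show ¬(k' + 2 = k' + 3) by omega)]
            simp
          have e1 : Z (k' + 4) (k' + 1) = Z (k' + 5) (k' + 1) := by
            simp only [hrw]
            rw [if_neg (show ¬(k' + 1 = k' + 4) by omega),
              if_neg (show ¬(k' + 1 = k' + 3) by omega),
              if_neg (show ¬(k' + 1 = k' + 2) by omega)]
          have eF : ∀ i, i ≤ k' → Z (k' + 4) i = s i := by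
            intro i hi
            simp only [hrw]
            rw [if_neg (show ¬(i = k' + 4) by omega), if_neg (show ¬(i = k' + 3) by omega),
              if_neg (show ¬(i = k' + 2) by omega)]
            exact IF i (by omega)
          refine ⟨⟨?_, ?_⟩, ?_, ?_, ?_, ?_, eF⟩
          · intro h; rw [e2] at h; rw [e3]
            rcases Nat.lt_or_ge (Z (k' + 5) (k' + 3)) (2 * a (k' + 3)) with hc | hc
            · omega
            · have heq : Z (k' + 5) (k' + 3) = 2 * a (k' + 3) := by omega
              have := ID2 heq; omega
          · intro h h'; rw [e2] at h; rw [e3]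
            rcases Nat.lt_or_ge (Z (k' + 5) (k' + 3)) (2 * a (k' + 3)) with hc | hc
            · omega
            · have heq : Z (k' + 5) (k' + 3) = 2 * a (k' + 3) := by omega
              have := ID2 heq; omega
          · rw [e2]; rcases IE with hE | ⟨hE, _⟩ <;> omega
          · intro h; rw [e2] at h; rcases IE with hE | ⟨hE, _⟩ <;> omega
          · intro h; rw [e2] at h
            rcases IE with hE | ⟨hE, hE2⟩
            · omega
            · omega
          · left; rw [e1]; exact IF (k' + 1) le_rfl
        · -- Case A3 : no rule applies at position k'+4
          refine ⟨⟨?_, ?_⟩, ?_, ?_, ?_, ?_, ?_⟩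
          · rw [hrw]; intro h
            by_contra hcon
            push_neg at hcon
            by_cases h4 : Z (k' + 5) (k' + 4) < a (k' + 4)
            · have hgt : 2 * a (k' + 3) < Z (k' + 5) (k' + 3) := by
                by_contra hle
                push_neg at hle
                exact h2 ⟨h4, by omega, by omega, by omega⟩
              have h0 := ID1 (by omega)
              omega
            · push_neg at h4
              have hx1' : Z (k' + 5) (k' + 3) = a (k' + 3) := by
                rcases Nat.lt_or_ge (a (k' + 3)) (Z (k' + 5) (k' + 3)) with hlt | hge
                · have := IG1 hlt; omega
                · omega
              have := IG2 hx1' (by omega)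
              omega
          · rw [hrw]; intro h h'
            by_contra hcon
            push_neg at hcon
            by_cases h4 : Z (k' + 5) (k' + 4) < a (k' + 4)
            · have hgt : 2 * a (k' + 3) < Z (k' + 5) (k' + 3) := by
                by_contra hle
                push_neg at hle
                exact h2 ⟨h4, by omega, by omega, by omega⟩
              have h0 := ID1 (by omega)
              omega
            · push_neg at h4
              have hx1' : Z (k' + 5) (k' + 3) = a (k' + 3) := by
                rcases Nat.lt_or_ge (a (k' + 3)) (Z (k' + 5) (k' + 3)) with hlt | hge
                · have := IG1 hlt; omega
                · omega
              have := IG2 hx1' (by omega)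
              omega
          · rw [hrw]; rcases IE with hE | ⟨hE, _⟩ <;> omega
          · rw [hrw]; intro h
            rcases IE with hE | ⟨hE, _⟩
            · omega
            · have h5 : s (k' + 1) = 0 := hF2 (k' + 2) (by omega) (by omega)
              rw [IF (k' + 1) le_rfl]
              omega
          · rw [hrw]; intro h
            rcases IE with hE | ⟨hE, _⟩
            · have h5 : s (k' + 1) = 0 := hF2 (k' + 2) (by omega) (by omega)
              rw [IF (k' + 1) le_rfl]
              omega
            · have h5 : s (k' + 1) ≤ a (k' + 1) := hF3 (k' + 2) (by omega) (by omega)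
              rw [IF (k' + 1) le_rfl]
              omega
          · rw [hrw]; left; exact IF (k' + 1) le_rfl
          · rw [hrw]; intro i hi; exact IF i (by omega)
  intro k h3 hk
  exact (main (n + 1) k h3 hk (by omega)).1
end

section
/- After Algorithm 1 completes, all digits satisfy the Ostrowski bounds: z_{3,k} \le a_k for all k > 1, and z_{3,1} \le a_1 - 1. -/
/-- Invariant maintained after processing step `k` of Algorithm 1. -/
def AlgInv (a s : ℕ → ℕ) (k : ℕ) (z : ℕ → ℕ) : Prop :=
  (∀ j, k ≤ j → z j ≤ a j) ∧
  z (k - 1) ≤ a (k - 1) ∧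
  (z (k - 1) = a (k - 1) → z (k - 2) ≤ a (k - 2)) ∧
  (z (k - 1) = a (k - 1) → z (k - 2) = a (k - 2) → z (k - 3) < a (k - 3)) ∧
  (∀ j, j ≤ k - 4 → z j = s j) ∧
  ((z (k - 2) ≤ s (k - 2) + 1 ∧ z (k - 3) = s (k - 3)) ∨
    (s (k - 2) = 0 ∧ z (k - 2) = a (k - 2) - 1 ∧ z (k - 3) = s (k - 3) + 1))

lemma step_inv (a s : ℕ → ℕ) (k : ℕ) (hk : 4 ≤ k)
    (ha : ∀ j, 1 ≤ j → 1 ≤ a j)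
    (S0 : ∀ j, 1 ≤ j → s j ≤ 2 * a j)
    (S1 : ∀ j, 2 ≤ j → 2 * a j ≤ s j + 1 → s (j - 1) ≤ a (j - 1))
    (S2 : ∀ j, 2 ≤ j → s j = 2 * a j → s (j - 1) = 0)
    (w : ℕ → ℕ) (hw : AlgInv a s (k + 1) w) :
    AlgInv a s k (ruleA a k w) := by
  obtain ⟨hA, hB1, hB2, hB3, hC, hM⟩ := hw
  simp only [show k + 1 - 1 = k by omega, show k + 1 - 2 = k - 1 by omega,
    show k + 1 - 3 = k - 2 by omega, show k + 1 - 4 = k - 3 by omega] at hB1 hB2 hB3 hC hM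
  have ha1 : 1 ≤ a (k - 1) := ha _ (by omega)
  have ha2 : 1 ≤ a (k - 2) := ha _ (by omega)
  have ha3 : 1 ≤ a (k - 3) := ha _ (by omega)
  have hs1 : s (k - 1) ≤ 2 * a (k - 1) := S0 _ (by omega)
  have hs2 : s (k - 2) ≤ 2 * a (k - 2) := S0 _ (by omega)
  have hT1 : 2 * a (k - 1) ≤ s (k - 1) + 1 → s (k - 2) ≤ a (k - 2) := by
    have := S1 (k - 1) (by omega); rwa [show k - 1 - 1 = k - 2 by omega] at this
  have hT2 : s (k - 1) = 2 * a (k - 1) → s (k - 2) = 0 := by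
    have := S2 (k - 1) (by omega); rwa [show k - 1 - 1 = k - 2 by omega] at this
  have hw3 : w (k - 3) = s (k - 3) := hC _ le_rfl
  have n1 : k - 1 ≠ k := by omega
  have n2 : k - 2 ≠ k := by omega
  have n3 : k - 2 ≠ k - 1 := by omega
  have n4 : k - 3 ≠ k := by omega
  have n5 : k - 3 ≠ k - 1 := by omega
  have n6 : k - 3 ≠ k - 2 := by omega
  unfold ruleA
  split_ifs with h1 h2
  · -- rule A1 fires
    obtain ⟨g1, g2, g3⟩ := h1
    refine ⟨?_, ?_, ?_, ?_, ?_, ?_⟩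
    · intro j hj
      rcases eq_or_lt_of_le hj with h | h
      · subst h; simp; omega
      · have e1 : j ≠ k := by omega
        have e2 : j ≠ k - 1 := by omega
        have e3 : j ≠ k - 2 := by omega
        have e4 : j ≠ k - 3 := by omega
        simp only [e1, e2, e3, e4, if_false]
        exact hA j (by omega)
    · simp [n1, n2, n3, n4, n5, n6]; omega
    · simp [n1, n2, n3, n4, n5, n6]
    · simp [n1, n2, n3, n4, n5, n6]; omega
    · intro j hj
      have e1 : j ≠ k := by omega
      have e2 : j ≠ k - 1 := by omega
      have e3 : j ≠ k - 2 := by omega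
      have e4 : j ≠ k - 3 := by omega
      simp only [e1, e2, e3, e4, if_false]
      exact hC j (by omega)
    · right
      refine ⟨by omega, by simp [n1, n2, n3, n4, n5, n6], by simp [n1, n2, n3, n4, n5, n6]; omega⟩
  · -- rule A2 fires
    obtain ⟨g1, g2, g3, g4⟩ := h2
    refine ⟨?_, ?_, ?_, ?_, ?_, ?_⟩
    · intro j hj
      rcases eq_or_lt_of_le hj with h | h
      · subst h; simp; omega
      · have e1 : j ≠ k := by omega
        have e2 : j ≠ k - 1 := by omega
        have e3 : j ≠ k - 2 := by omega
        simp only [e1, e2, e3, if_false]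
        exact hA j (by omega)
    · simp [n1, n2, n3, n4, n5, n6]; omega
    · simp [n1, n2, n3, n4, n5, n6]; omega
    · simp [n1, n2, n3, n4, n5, n6]; omega
    · intro j hj
      have e1 : j ≠ k := by omega
      have e2 : j ≠ k - 1 := by omega
      have e3 : j ≠ k - 2 := by omega
      simp only [e1, e2, e3, if_false]
      exact hC j (by omega)
    · left
      constructor
      · simp [n1, n2, n3, n4, n5, n6]; omega
      · simp [n1, n2, n3, n4, n5, n6]; omega
  · -- no rule fires
    refine ⟨?_, ?_, ?_, ?_, ?_, ?_⟩
    · intro j hj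
      rcases eq_or_lt_of_le hj with h | h
      · subst h; exact hB1
      · exact hA j (by omega)
    · omega
    · intro h; omega
    · intro h h'; omega
    · intro j hj; exact hC j (by omega)
    · exact Or.inl ⟨by omega, hw3⟩

/-- (Proposition 2.1 of the paper.) After Algorithm 1 completes,
all digits satisfy the Ostrowski bounds: `z_{3,k} ≤ a_k` for all `k > 1`, and
`z_{3,1} ≤ a_1 - 1`. -/
theorem algorithm1_digit_bounds
    (a : ℕ → ℕ)
    (ha : ∀ k, 1 ≤ a (k + 1))
    (n : ℕ) (hn : 3 ≤ n)
    (x y : ℕ → ℕ)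
    -- `x` and `y` are valid Ostrowski digit strings of length `n`
    (hx1 : x 1 < a 1) (hxb : ∀ k, x (k + 1) ≤ a (k + 1))
    (hxc : ∀ k, x (k + 2) = a (k + 2) → x (k + 1) = 0)
    (hxn : ∀ k, n < k → x k = 0)
    (hy1 : y 1 < a 1) (hyb : ∀ k, y (k + 1) ≤ a (k + 1))
    (hyc : ∀ k, y (k + 2) = a (k + 2) → y (k + 1) = 0)
    (hyn : ∀ k, n < k → y k = 0)
    -- `s` is the digit-wise sum, with `m = n + 1` and leading digit `s m = 0`
    (s : ℕ → ℕ) (hs : ∀ i, s i = x i + y i)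
    (Z : ℕ → ℕ → ℕ)
    (hZtop : Z (n + 2) = s)
    (hZA : ∀ k, 4 ≤ k → k ≤ n + 1 → Z k = ruleA a k (Z (k + 1)))
    (hZB : Z 3 = ruleB a (Z 4)) :
    (∀ k, 1 < k → Z 3 k ≤ a k) ∧ Z 3 1 ≤ a 1 - 1 := by
  have ha' : ∀ j, 1 ≤ j → 1 ≤ a j := by
    intro j hj; have := ha (j - 1); rwa [show j - 1 + 1 = j by omega] at this
  have hx' : ∀ j, 1 ≤ j → x j ≤ a j := by
    intro j hj; have := hxb (j - 1); rwa [show j - 1 + 1 = j by omega] at this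
  have hy' : ∀ j, 1 ≤ j → y j ≤ a j := by
    intro j hj; have := hyb (j - 1); rwa [show j - 1 + 1 = j by omega] at this
  have hxc' : ∀ j, 2 ≤ j → x j = a j → x (j - 1) = 0 := by
    intro j hj hxa; have := hxc (j - 2)
    rw [show j - 2 + 2 = j by omega, show j - 2 + 1 = j - 1 by omega] at this
    exact this hxa
  have hyc' : ∀ j, 2 ≤ j → y j = a j → y (j - 1) = 0 := by
    intro j hj hya; have := hyc (j - 2)
    rw [show j - 2 + 2 = j by omega, show j - 2 + 1 = j - 1 by omega] at this
    exact this hya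
  have S0 : ∀ j, 1 ≤ j → s j ≤ 2 * a j := by
    intro j hj; rw [hs]
    have := hx' j hj; have := hy' j hj; omega
  have S1 : ∀ j, 2 ≤ j → 2 * a j ≤ s j + 1 → s (j - 1) ≤ a (j - 1) := by
    intro j hj hbig
    rw [hs] at hbig
    have hxj := hx' j (by omega); have hyj := hy' j (by omega)
    have hx1' := hx' (j - 1) (by omega); have hy1' := hy' (j - 1) (by omega)
    have : x j = a j ∨ y j = a j := by omega
    rw [hs]
    rcases this with h | h
    · have h0 := hxc' j hj h; omega
    · have h0 := hyc' j hj h; omega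
  have S2 : ∀ j, 2 ≤ j → s j = 2 * a j → s (j - 1) = 0 := by
    intro j hj hbig
    rw [hs] at hbig
    have hxj := hx' j (by omega); have hyj := hy' j (by omega)
    have hxe : x j = a j := by omega
    have hye : y j = a j := by omega
    rw [hs, hxc' j hj hxe, hyc' j hj hye]
  have hs0 : ∀ j, n < j → s j = 0 := by
    intro j hj; rw [hs, hxn j hj, hyn j hj]
  have base : AlgInv a s (n + 2) s := by
    refine ⟨?_, ?_, ?_, ?_, ?_, ?_⟩
    · intro j hj; rw [hs0 j (by omega)]; exact Nat.zero_le _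
    · rw [hs0 (n + 2 - 1) (by omega)]; exact Nat.zero_le _
    · intro h; exfalso
      have h1 := hs0 (n + 2 - 1) (by omega)
      have h2 := ha' (n + 2 - 1) (by omega); omega
    · intro h _; exfalso
      have h1 := hs0 (n + 2 - 1) (by omega)
      have h2 := ha' (n + 2 - 1) (by omega); omega
    · intro j _; rfl
    · exact Or.inl ⟨Nat.le_succ _, rfl⟩
  have main : ∀ d k, 4 ≤ k → k + d = n + 2 → AlgInv a s k (Z k) := by
    intro d
    induction d with
    | zero =>
      intro k hk4 hk
      have hkn : k = n + 2 := by omega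
      subst hkn; rw [hZtop]; exact base
    | succ d ih =>
      intro k hk4 hk
      have h1 : AlgInv a s (k + 1) (Z (k + 1)) := ih (k + 1) (by omega) (by omega)
      rw [hZA k hk4 (by omega)]
      exact step_inv a s k hk4 ha' S0 S1 S2 _ h1
  have h4 : AlgInv a s 4 (Z 4) := main (n - 2) 4 (by omega) (by omega)
  obtain ⟨hA, hB1, hB2, hB3, hC, hM⟩ := h4
  simp only [show (4 : ℕ) - 1 = 3 by omega, show (4 : ℕ) - 2 = 2 by omega,
    show (4 : ℕ) - 3 = 1 by omega] at hB1 hB2 hB3 hM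
  have ha1 : 1 ≤ a 1 := ha' 1 (by omega)
  have ha2 : 1 ≤ a 2 := ha' 2 (by omega)
  have ha3 : 1 ≤ a 3 := ha' 3 (by omega)
  have hs2f : s 2 ≤ 2 * a 2 := S0 2 (by omega)
  have hs1f : s 1 + 2 ≤ 2 * a 1 := by rw [hs]; omega
  have hT1 : 2 * a 2 ≤ s 2 + 1 → s 1 ≤ a 1 := by
    have := S1 2 (by omega); rwa [show (2 : ℕ) - 1 = 1 by omega] at this
  have hT2 : s 2 = 2 * a 2 → s 1 = 0 := by
    have := S2 2 (by omega); rwa [show (2 : ℕ) - 1 = 1 by omega] at this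
  rw [hZB]
  unfold ruleB
  split_ifs with b1 b2 b3 b4
  · constructor
    · intro k' hk'
      by_cases e3 : k' = 3
      · subst e3; simp; omega
      by_cases e2 : k' = 2
      · subst e2; simp; omega
      have e1 : k' ≠ 1 := by omega
      simp only [e1, e2, e3, if_false]
      exact hA k' (by omega)
    · simp
  · constructor
    · intro k' hk'
      by_cases e3 : k' = 3
      · subst e3; simp; omega
      by_cases e2 : k' = 2
      · subst e2; simp; omega
      have e1 : k' ≠ 1 := by omega
      simp only [e1, e2, e3, if_false]
      exact hA k' (by omega)
    · simp; omega
  · constructor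
    · intro k' hk'
      by_cases e3 : k' = 3
      · subst e3; simp; omega
      by_cases e2 : k' = 2
      · subst e2; simp; omega
      have e1 : k' ≠ 1 := by omega
      simp only [e1, e2, e3, if_false]
      exact hA k' (by omega)
    · simp; omega
  · constructor
    · intro k' hk'
      by_cases e3 : k' = 3
      · subst e3; simp; omega
      by_cases e2 : k' = 2
      · subst e2; simp; omega
      have e1 : k' ≠ 1 := by omega
      simp only [e1, e2, e3, if_false]
      exact hA k' (by omega)
    · simp; omega
  · constructor
    · intro k' hk'
      by_cases e3 : k' = 3
      · subst e3; exact hB1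
      by_cases e2 : k' = 2
      · subst e2; omega
      exact hA k' (by omega)
    · omega
end

section
/- After the right-to-left pass (Algorithm 2), the output word w_{m+1} contains no index k with w_{m+1,k} = a_k, w_{m+1,k-1} < a_{k-1}, w_{m+1,k-2} = a_{k-2}, and w_{m+1,k-3} > 0. -/
/-- The window rule of Algorithms 2 and 3 at position `k` (positions `k, k-1, k-2`):
if the digit at `k` is below `a_k`, the digit at `k-1` equals `a_{k-1}`, and the digit
at `k-2` is positive, replace the window `(v₁, a_{k-1}, v₃)` by `(v₁ + 1, 0, v₃ - 1)`. -/
def ruleC (a : ℕ → ℕ) (k : ℕ) (w : ℕ → ℕ) : ℕ → ℕ :=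
  if w k < a k ∧ w (k - 1) = a (k - 1) ∧ 0 < w (k - 2) then
    fun i =>
      if i = k then w k + 1
      else if i = k - 1 then 0
      else if i = k - 2 then w (k - 2) - 1
      else w i
  else w

lemma ruleC_eq_of_ne (a : ℕ → ℕ) (s : ℕ) (w : ℕ → ℕ) (j : ℕ)
    (h1 : j ≠ s) (h2 : j ≠ s - 1) (h3 : j ≠ s - 2) : ruleC a s w j = w j := by
  unfold ruleC
  by_cases hc : w s < a s ∧ w (s - 1) = a (s - 1) ∧ 0 < w (s - 2)
  · rw [if_pos hc]
    simp only [if_neg h1, if_neg h2, if_neg h3]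
  · rw [if_neg hc]

lemma ruleC_nofire (a : ℕ → ℕ) (s : ℕ) (w : ℕ → ℕ)
    (hc : ¬ (w s < a s ∧ w (s - 1) = a (s - 1) ∧ 0 < w (s - 2))) :
    ruleC a s w = w := by
  unfold ruleC; rw [if_neg hc]

lemma ruleC_fire (a : ℕ → ℕ) (s : ℕ) (w : ℕ → ℕ) (hs : 3 ≤ s)
    (hc : w s < a s ∧ w (s - 1) = a (s - 1) ∧ 0 < w (s - 2)) :
    ruleC a s w s = w s + 1 ∧ ruleC a s w (s - 1) = 0 ∧
      ruleC a s w (s - 2) = w (s - 2) - 1 := by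
  unfold ruleC; rw [if_pos hc]
  refine ⟨?_, ?_, ?_⟩
  · simp
  · simp only [if_neg (by omega : s - 1 ≠ s), if_pos rfl]
    simp
  · simp only [if_neg (by omega : s - 2 ≠ s), if_neg (by omega : s - 2 ≠ s - 1), if_pos rfl]
    simp

lemma ruleC_bound (a : ℕ → ℕ) (s : ℕ) (hs : 3 ≤ s) (w : ℕ → ℕ)
    (hw : ∀ j, 1 ≤ j → w j ≤ a j) : ∀ j, 1 ≤ j → ruleC a s w j ≤ a j := by
  intro j hj
  by_cases hc : w s < a s ∧ w (s - 1) = a (s - 1) ∧ 0 < w (s - 2)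
  · obtain ⟨e1, e2, e3⟩ := ruleC_fire a s w hs hc
    rcases eq_or_ne j s with rfl | h1
    · rw [e1]; have := hc.1; omega
    rcases eq_or_ne j (s - 1) with rfl | h2
    · rw [e2]; exact Nat.zero_le _
    rcases eq_or_ne j (s - 2) with rfl | h3
    · rw [e3]; have := hw (s - 2) (by omega); omega
    · rw [ruleC_eq_of_ne a s w j h1 h2 h3]; exact hw j hj
  · rw [ruleC_nofire a s w hc]; exact hw j hj

/-- (Lemma 2.5 of the paper.) Algorithm 2 is the right-to-left
pass applied (after prepending a `0`) to a word `z` satisfying the digit bounds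
`z_k ≤ a_k` for `k > 1` and `z_1 ≤ a_1 - 1` (the output of Algorithm 1, supported
on positions `1, …, m`). Its output `w_{m+1}` contains no index `k` with
`w_{m+1,k} = a_k`, `w_{m+1,k-1} < a_{k-1}`, `w_{m+1,k-2} = a_{k-2}`, and
`w_{m+1,k-3} > 0`. -/
theorem algorithm2_no_pattern
    (a : ℕ → ℕ)
    (ha : ∀ k, 1 ≤ a (k + 1))
    (m : ℕ) (hm : 4 ≤ m)
    (z : ℕ → ℕ)
    (hz1 : z 1 ≤ a 1 - 1)
    (hzb : ∀ k, 1 < k → z k ≤ a k)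
    (hztop : ∀ k, m < k → z k = 0)
    (W : ℕ → ℕ → ℕ)
    (hW2 : W 2 = z)
    (hWs : ∀ k, 3 ≤ k → k ≤ m + 1 → W k = ruleC a k (W (k - 1))) :
    ¬ ∃ k, 4 ≤ k ∧
        W (m + 1) k = a k ∧
        W (m + 1) (k - 1) < a (k - 1) ∧
        W (m + 1) (k - 2) = a (k - 2) ∧
        0 < W (m + 1) (k - 3) := by
  rintro ⟨k, hk4, h1, h2, h3, h4⟩
  have ha1 : ∀ j, 1 ≤ j → 1 ≤ a j := by
    intro j hj
    have := ha (j - 1)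
    have hj' : j - 1 + 1 = j := by omega
    rwa [hj'] at this
  -- digit bound invariant
  have hbd : ∀ s, 2 ≤ s → s ≤ m + 1 → ∀ j, 1 ≤ j → W s j ≤ a j := by
    intro s hs
    induction s, hs using Nat.le_induction with
    | base =>
      intro _ j hj
      rw [hW2]
      rcases eq_or_ne j 1 with rfl | hj1
      · omega
      · exact hzb j (by omega)
    | succ s hs ih =>
      intro hle j hj
      rw [hWs (s + 1) (by omega) hle]
      have hss : s + 1 - 1 = s := by omega
      rw [hss]
      exact ruleC_bound a (s + 1) (by omega) (W s) (ih (by omega)) j hj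
  -- low positions are frozen
  have L3 : ∀ s, 2 ≤ s → ∀ j, j + 2 ≤ s → ∀ t, s ≤ t → t ≤ m + 1 → W t j = W s j := by
    intro s hs j hj t ht
    induction t, ht using Nat.le_induction with
    | base => intro _; rfl
    | succ t ht ih =>
      intro hle
      rw [hWs (t + 1) (by omega) hle]
      have hss : t + 1 - 1 = t := by omega
      rw [hss]
      rw [ruleC_eq_of_ne a (t + 1) (W t) j (by omega) (by omega) (by omega)]
      exact ih (by omega)
  -- high positions still equal z
  have L4 : ∀ s, 2 ≤ s → s ≤ m + 1 → ∀ j, s < j → W s j = z j := by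
    intro s hs
    induction s, hs using Nat.le_induction with
    | base => intro _ j _; rw [hW2]
    | succ s hs ih =>
      intro hle j hj
      rw [hWs (s + 1) (by omega) hle]
      have hss : s + 1 - 1 = s := by omega
      rw [hss]
      rw [ruleC_eq_of_ne a (s + 1) (W s) j (by omega) (by omega) (by omega)]
      exact ih (by omega) j (by omega)
  -- key fact: no "descending" pattern right after a step
  have F : ∀ s, 3 ≤ s → s ≤ m + 1 →
      ¬ (W s s < a s ∧ W s (s - 1) = a (s - 1) ∧ 0 < W s (s - 2)) := by
    intro s hs3 hsle hpat
    rw [hWs s hs3 hsle] at hpat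
    by_cases hc : W (s - 1) s < a s ∧ W (s - 1) (s - 1) = a (s - 1) ∧ 0 < W (s - 1) (s - 2)
    · obtain ⟨e1, e2, e3⟩ := ruleC_fire a s (W (s - 1)) hs3 hc
      rw [e2] at hpat
      have h0 := hpat.2.1
      have h1 := ha1 (s - 1) (by omega)
      omega
    · rw [ruleC_nofire a s (W (s - 1)) hc] at hpat
      exact hc hpat
  -- main case analysis
  by_cases hk_hi : m + 2 ≤ k
  · -- pattern beyond the support: digit is 0 there
    have e : W (m + 1) k = z k := L4 (m + 1) (by omega) (le_refl _) k (by omega)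
    have hz0 : z k = 0 := hztop k (by omega)
    have := ha1 k (by omega)
    omega
  by_cases hk_m1 : k = m + 1
  · -- k = m + 1 : look at the last step
    subst hk_m1
    have i1 : m + 1 - 1 = m := by omega
    have i2 : m + 1 - 2 = m - 1 := by omega
    have i3 : m + 1 - 3 = m - 2 := by omega
    rw [i1] at h2; rw [i2] at h3; rw [i3] at h4
    have hstep := hWs (m + 1) (by omega) (le_refl _)
    rw [i1] at hstep
    rw [hstep] at h1 h2 h3 h4
    by_cases hc : W m (m + 1) < a (m + 1) ∧ W m (m + 1 - 1) = a (m + 1 - 1) ∧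
        0 < W m (m + 1 - 2)
    · obtain ⟨e1, e2, e3⟩ := ruleC_fire a (m + 1) (W m) (by omega) hc
      rw [i2] at e3
      rw [e3] at h3
      have hb := hbd m (by omega) (by omega) (m - 1) (by omega)
      have hc3 := hc.2.2
      rw [i2] at hc3
      omega
    · rw [ruleC_nofire a (m + 1) (W m) hc] at h1 h2 h3 h4
      exact F m (by omega) (by omega) ⟨h2, h3, h4⟩
  · -- 4 ≤ k ≤ m
    have hkm : k ≤ m := by omega
    have e1 : W (m + 1) (k - 1) = W (k + 1) (k - 1) :=
      L3 (k + 1) (by omega) (k - 1) (by omega) (m + 1) (by omega) (le_refl _)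
    have e2 : W (m + 1) (k - 2) = W k (k - 2) :=
      L3 k (by omega) (k - 2) (by omega) (m + 1) (by omega) (le_refl _)
    have e3 : W (m + 1) (k - 3) = W (k - 1) (k - 3) :=
      L3 (k - 1) (by omega) (k - 3) (by omega) (m + 1) (by omega) (le_refl _)
    rw [e1] at h2; rw [e2] at h3; rw [e3] at h4
    -- Step 1: W (k+1) k = a k
    have hkey : W (k + 1) k = a k := by
      rcases eq_or_ne k m with rfl | hkm'
      · -- k = m : position k = (k+1) - 1 in the last step
        have hstep := hWs (k + 1) (by omega) (le_refl _)
        have i1 : k + 1 - 1 = k := by omega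
        rw [i1] at hstep
        rw [hstep] at h1
        by_cases hc : W k (k + 1) < a (k + 1) ∧ W k (k + 1 - 1) = a (k + 1 - 1) ∧
            0 < W k (k + 1 - 2)
        · obtain ⟨f1, f2, f3⟩ := ruleC_fire a (k + 1) (W k) (by omega) hc
          rw [i1] at f2
          rw [f2] at h1
          have := ha1 k (by omega)
          omega
        · rw [ruleC_nofire a (k + 1) (W k) hc] at h1
          rw [hstep, ruleC_nofire a (k + 1) (W k) hc]
          exact h1
      · -- k < m : position k = (k+2) - 2 in step k+2, frozen afterwards
        have e0 : W (m + 1) k = W (k + 2) k :=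
          L3 (k + 2) (by omega) k (by omega) (m + 1) (by omega) (le_refl _)
        rw [e0] at h1
        have hstep := hWs (k + 2) (by omega) (by omega)
        have i1 : k + 2 - 1 = k + 1 := by omega
        have i2 : k + 2 - 2 = k := by omega
        rw [i1] at hstep
        rw [hstep] at h1
        by_cases hc : W (k + 1) (k + 2) < a (k + 2) ∧
            W (k + 1) (k + 2 - 1) = a (k + 2 - 1) ∧ 0 < W (k + 1) (k + 2 - 2)
        · obtain ⟨f1, f2, f3⟩ := ruleC_fire a (k + 2) (W (k + 1)) (by omega) hc
          rw [i2] at f3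
          rw [f3] at h1
          have hb := hbd (k + 1) (by omega) (by omega) k (by omega)
          have hc3 := hc.2.2
          rw [i2] at hc3
          omega
        · rw [ruleC_nofire a (k + 2) (W (k + 1)) hc] at h1
          exact h1
    -- Step 2: step k+1 did not fire, so W (k+1) = W k on window
    have hstep1 := hWs (k + 1) (by omega) (by omega)
    have j1 : k + 1 - 1 = k := by omega
    have j2 : k + 1 - 2 = k - 1 := by omega
    rw [j1] at hstep1
    rw [hstep1] at hkey h2
    by_cases hc1 : W k (k + 1) < a (k + 1) ∧ W k (k + 1 - 1) = a (k + 1 - 1) ∧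
        0 < W k (k + 1 - 2)
    · obtain ⟨f1, f2, f3⟩ := ruleC_fire a (k + 1) (W k) (by omega) hc1
      rw [j1] at f2
      rw [f2] at hkey
      have := ha1 k (by omega)
      omega
    · rw [ruleC_nofire a (k + 1) (W k) hc1] at hkey h2
      -- Step 3: step k did not fire either
      have hstep0 := hWs k (by omega) (by omega)
      rw [hstep0] at hkey h2 h3
      by_cases hc0 : W (k - 1) k < a k ∧ W (k - 1) (k - 1) = a (k - 1) ∧
          0 < W (k - 1) (k - 2)
      · obtain ⟨f1, f2, f3⟩ := ruleC_fire a k (W (k - 1)) (by omega) hc0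
        rw [f3] at h3
        have hb := hbd (k - 1) (by omega) (by omega) (k - 2) (by omega)
        have hc3 := hc0.2.2
        omega
      · rw [ruleC_nofire a k (W (k - 1)) hc0] at hkey h2 h3
        -- now W (k-1) carries the pattern at k; contradict F at s = k - 1
        have hF := F (k - 1) (by omega) (by omega)
        have j3 : k - 1 - 1 = k - 2 := by omega
        have j4 : k - 1 - 2 = k - 3 := by omega
        rw [j3, j4] at hF
        exact hF ⟨h2, h3, h4⟩
end

section
/- After the final left-to-right pass (Algorithm 3), the output v_3 is a valid Ostrowski representation: for all l \ge 3 there is no k \ge l-1 such that v_{l,k} = a_k and v_{l,k-1} > 0; in particular v_3 satisfies that v_{3,k} = a_k implies v_{3,k-1} = 0. -/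
/-- Invariant maintained during the downward pass of Algorithm 3 at level `l`. -/
def Inv3 (a w : ℕ → ℕ) (l : ℕ) (v : ℕ → ℕ) : Prop :=
  (∀ i, i ≤ l - 3 → v i = w i) ∧
  (v (l - 2) ≤ w (l - 2) ∧ w (l - 2) ≤ v (l - 2) + 1) ∧
  (∀ k, 1 ≤ k → v k ≤ a k) ∧
  (∀ k, l - 1 ≤ k → ¬(v k = a k ∧ 0 < v (k - 1))) ∧
  (4 ≤ l → ¬(v l = a l ∧ v (l - 1) < a (l - 1) ∧ v (l - 2) = a (l - 2) ∧ 0 < v (l - 3))) ∧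
  (v (l - 1) = a (l - 1) → w (l - 1) = a (l - 1) ∧ v (l - 2) = w (l - 2))

lemma inv3_step (a w : ℕ → ℕ) (ha1 : ∀ k, 1 ≤ k → 1 ≤ a k)
    (hwb : ∀ k, 1 ≤ k → w k ≤ a k)
    (hnopat : ¬ ∃ k, 4 ≤ k ∧ w k = a k ∧ w (k - 1) < a (k - 1) ∧
        w (k - 2) = a (k - 2) ∧ 0 < w (k - 3))
    (l : ℕ) (hl : 3 ≤ l) (u : ℕ → ℕ) (hu : Inv3 a w (l + 1) u) :
    Inv3 a w l (ruleC a l u) := by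
  have e1 : l + 1 - 1 = l := by omega
  have e2 : l + 1 - 2 = l - 1 := by omega
  have e3 : l + 1 - 3 = l - 2 := by omega
  obtain ⟨Ha, Ha2, Hb, Hc, Hd, Hh⟩ := hu
  simp only [e1, e2, e3] at Ha Ha2 Hc Hd Hh
  by_cases hr : u l < a l ∧ u (l - 1) = a (l - 1) ∧ 0 < u (l - 2)
  · -- the rule fires at position l
    obtain ⟨hr1, hr2, hr3⟩ := hr
    have hrr : u l < a l ∧ u (l - 1) = a (l - 1) ∧ 0 < u (l - 2) := ⟨hr1, hr2, hr3⟩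
    have ne1 : l - 1 ≠ l := by omega
    have ne2 : l - 2 ≠ l := by omega
    have ne3 : l - 2 ≠ l - 1 := by omega
    have hvl : ruleC a l u l = u l + 1 := by simp [ruleC, hrr]
    have hv1 : ruleC a l u (l - 1) = 0 := by simp [ruleC, hrr, ne1]
    have hv2 : ruleC a l u (l - 2) = u (l - 2) - 1 := by simp [ruleC, hrr, ne2, ne3]
    have hvo : ∀ i, i ≠ l → i ≠ l - 1 → i ≠ l - 2 → ruleC a l u i = u i := by
      intro i h1 h2 h3; simp [ruleC, hrr, h1, h2, h3]
    have hul2 : u (l - 2) = w (l - 2) := Ha (l - 2) (le_refl _)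
    refine ⟨?_, ?_, ?_, ?_, ?_, ?_⟩
    · intro i hi
      rw [hvo i (by omega) (by omega) (by omega)]
      exact Ha i (by omega)
    · rw [hv2]; omega
    · intro k hk
      by_cases h1 : k = l
      · rw [h1, hvl]; omega
      by_cases h2 : k = l - 1
      · rw [h2, hv1]; omega
      by_cases h3 : k = l - 2
      · rw [h3, hv2]
        have := Hb (l - 2) (by omega)
        omega
      · rw [hvo k h1 h2 h3]; exact Hb k hk
    · rintro k hk ⟨h1, h2⟩
      by_cases hk1 : k = l - 1
      · rw [hk1, hv1] at h1
        have := ha1 (l - 1) (by omega)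
        omega
      by_cases hk2 : k = l
      · rw [hk2, hv1] at h2
        omega
      by_cases hk3 : k = l + 1
      · rw [hk3, hvo (l + 1) (by omega) (by omega) (by omega)] at h1
        have hd := Hd (by omega)
        exact hd ⟨h1, hr1, hr2, hr3⟩
      · -- k ≥ l + 2
        rw [hvo k (by omega) (by omega) (by omega)] at h1
        rw [hvo (k - 1) (by omega) (by omega) (by omega)] at h2
        exact Hc k (by omega) ⟨h1, h2⟩
    · rintro hl4 ⟨h1, h2, h3, h4⟩
      rw [hv2] at h3
      have := Hb (l - 2) (by omega)
      have := ha1 (l - 2) (by omega)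
      omega
    · intro h1
      rw [hv1] at h1
      have := ha1 (l - 1) (by omega)
      omega
  · -- the rule does not fire: v = u
    have hv : ruleC a l u = u := by simp only [ruleC, if_neg hr]
    rw [hv]
    refine ⟨?_, ?_, ?_, ?_, ?_, ?_⟩
    · intro i hi; exact Ha i (by omega)
    · have := Ha (l - 2) (le_refl _); omega
    · exact Hb
    · rintro k hk ⟨h1, h2⟩
      by_cases hkl : l ≤ k
      · exact Hc k hkl ⟨h1, h2⟩
      · have hk1 : k = l - 1 := by omega
        have ek : k - 1 = l - 2 := by omega
        rw [hk1] at h1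
        rw [ek] at h2
        have hul : ¬ u l < a l := fun h => hr ⟨h, h1, h2⟩
        have heq : u l = a l := le_antisymm (Hb l (by omega)) (not_lt.mp hul)
        have hpos : 0 < u (l - 1) := by
          rw [h1]; exact ha1 (l - 1) (by omega)
        exact Hc l (le_refl l) ⟨heq, hpos⟩
    · rintro hl4 ⟨h1, h2, h3, h4⟩
      obtain ⟨hwl, hul1⟩ := Hh h1
      refine hnopat ⟨l, hl4, hwl, ?_, ?_, ?_⟩
      · rw [← hul1]; exact h2
      · rw [← Ha (l - 2) (le_refl _)]; exact h3
      · rw [← Ha (l - 3) (by omega)]; exact h4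
    · intro h1
      have hw1 := hwb (l - 1) (by omega)
      constructor
      · omega
      · exact Ha (l - 2) (le_refl _)

/-- (Proposition 2.7 of the paper.) After the final left-to-right
pass (Algorithm 3), the output `v₃` is a valid Ostrowski representation: for all
`l ≥ 3` there is no `k ≥ l - 1` such that `v_{l,k} = a_k` and `v_{l,k-1} > 0`;
in particular `v₃` satisfies that `v_{3,k} = a_k` implies `v_{3,k-1} = 0`. -/
theorem algorithm3_output_valid
    (a : ℕ → ℕ)
    (ha : ∀ k, 1 ≤ a (k + 1))
    (m : ℕ) (hm : 4 ≤ m)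
    -- `w` is the output of Algorithm 2 (supported on positions `1, …, m+1`):
    -- it satisfies the digit bounds and the no-pattern condition of Lemma 2.5
    (w : ℕ → ℕ)
    (hw1 : w 1 ≤ a 1 - 1)
    (hwb : ∀ k, 1 ≤ k → w k ≤ a k)
    (hwtop : ∀ k, m + 1 < k → w k = 0)
    (hnopat : ¬ ∃ k, 4 ≤ k ∧ w k = a k ∧ w (k - 1) < a (k - 1) ∧
        w (k - 2) = a (k - 2) ∧ 0 < w (k - 3))
    -- Algorithm 3: a left-to-right pass with the same window rule
    (V : ℕ → ℕ → ℕ)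
    (hVtop : V (m + 3) = w)
    (hVs : ∀ k, 3 ≤ k → k ≤ m + 2 → V k = ruleC a k (V (k + 1))) :
    (∀ l, 3 ≤ l → l ≤ m + 3 → ¬ ∃ k, l - 1 ≤ k ∧ V l k = a k ∧ 0 < V l (k - 1)) ∧
    (∀ k, 2 ≤ k → V 3 k = a k → V 3 (k - 1) = 0) := by
  have ha1 : ∀ k, 1 ≤ k → 1 ≤ a k := by
    intro k hk
    obtain ⟨j, rfl⟩ : ∃ j, k = j + 1 := ⟨k - 1, by omega⟩
    exact ha j
  have base : Inv3 a w (m + 3) w := by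
    refine ⟨fun i _ => rfl, ⟨le_refl _, Nat.le_succ _⟩, hwb, ?_, ?_, ?_⟩
    · rintro k hk ⟨h1, h2⟩
      have h0 : w k = 0 := hwtop k (by omega)
      have := ha1 k (by omega)
      omega
    · rintro _ ⟨h1, _, _, _⟩
      have h0 : w (m + 3) = 0 := hwtop (m + 3) (by omega)
      have := ha1 (m + 3) (by omega)
      omega
    · intro h1
      have h0 : w (m + 3 - 1) = 0 := hwtop (m + 3 - 1) (by omega)
      have := ha1 (m + 3 - 1) (by omega)
      omega
  have main : ∀ j, j ≤ m → Inv3 a w (m + 3 - j) (V (m + 3 - j)) := by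
    intro j
    induction j with
    | zero => intro _; rw [Nat.sub_zero, hVtop]; exact base
    | succ j ih =>
      intro hj
      have hih := ih (by omega)
      have hk3 : 3 ≤ m + 3 - (j + 1) := by omega
      have hk2 : m + 3 - (j + 1) ≤ m + 2 := by omega
      rw [hVs (m + 3 - (j + 1)) hk3 hk2]
      have e : m + 3 - (j + 1) + 1 = m + 3 - j := by omega
      exact inv3_step a w ha1 hwb hnopat (m + 3 - (j + 1)) hk3 (V (m + 3 - (j + 1) + 1))
        (by rw [e]; exact hih)
  have inv_all : ∀ l, 3 ≤ l → l ≤ m + 3 → Inv3 a w l (V l) := by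
    intro l h3 hm3
    have := main (m + 3 - l) (by omega)
    rwa [show m + 3 - (m + 3 - l) = l by omega] at this
  constructor
  · rintro l h3 hm3 ⟨k, hk, h1, h2⟩
    exact (inv_all l h3 hm3).2.2.2.1 k hk ⟨h1, h2⟩
  · intro k hk h1
    have hc := (inv_all 3 (by norm_num) (by omega)).2.2.2.1 k (by omega)
    by_contra h2
    exact hc ⟨h1, by omega⟩
end

section
/- During Algorithm 3, the forbidden pattern is preserved: for every l with 3 \le l \le m+3 there is no index k such that v_{l,k} = a_k, v_{l,k-1} < a_{k-1}, v_{l,k-2} = a_{k-2}, and v_{l,k-3} > 0. -/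
lemma ruleC_step (a : ℕ → ℕ) (ha : ∀ k, 1 ≤ a (k + 1)) (l : ℕ) (hl : 3 ≤ l)
    (v : ℕ → ℕ) (hb : ∀ i, 1 ≤ i → v i ≤ a i)
    (hn : ¬ ∃ k, 4 ≤ k ∧ v k = a k ∧ v (k - 1) < a (k - 1) ∧
        v (k - 2) = a (k - 2) ∧ 0 < v (k - 3)) :
    (∀ i, 1 ≤ i → ruleC a l v i ≤ a i) ∧
    ¬ ∃ k, 4 ≤ k ∧ ruleC a l v k = a k ∧ ruleC a l v (k - 1) < a (k - 1) ∧
        ruleC a l v (k - 2) = a (k - 2) ∧ 0 < ruleC a l v (k - 3) := by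
  by_cases hf : v l < a l ∧ v (l - 1) = a (l - 1) ∧ 0 < v (l - 2)
  · obtain ⟨t, rfl⟩ : ∃ t, l = t + 3 := ⟨l - 3, by omega⟩
    obtain ⟨h1, h2, h3⟩ := hf
    have h2' : v (t + 2) = a (t + 2) := h2
    have h3' : 0 < v (t + 1) := h3
    have e : ∀ i, ruleC a (t + 3) v i =
        if i = t + 3 then v (t + 3) + 1
        else if i = t + 2 then 0
        else if i = t + 1 then v (t + 1) - 1
        else v i := by
      intro i
      unfold ruleC
      rw [if_pos ⟨h1, h2, h3⟩]
      rfl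
    constructor
    · intro i hi
      rw [e i]
      split_ifs with e1 e2 e3
      · subst e1; omega
      · omega
      · subst e3; have := hb (t + 1) (by omega); omega
      · exact hb i hi
    · rintro ⟨k, hk4, p1, p2, p3, p4⟩
      obtain ⟨s, rfl⟩ : ∃ s, k = s + 4 := ⟨k - 4, by omega⟩
      have q1 : ruleC a (t + 3) v (s + 4) = a (s + 4) := p1
      have q2 : ruleC a (t + 3) v (s + 3) < a (s + 3) := p2
      have q3 : ruleC a (t + 3) v (s + 2) = a (s + 2) := p3
      have q4 : 0 < ruleC a (t + 3) v (s + 1) := p4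
      rw [e] at q1 q2 q3 q4
      rcases (by omega : t = s + 1 ∨ t = s + 2 ∨ t = s + 3 ∨ s = t ∨ s = t + 1 ∨
          s = t + 2 ∨ (s + 3 < t ∨ t + 2 < s)) with rfl | rfl | rfl | rfl | rfl | rfl | hg
      · -- k = l
        rw [if_neg (by omega), if_neg (by omega), if_pos (by omega : s + 2 = s + 1 + 1)] at q3
        have q3' : v (s + 2) - 1 = a (s + 2) := q3
        have := hb (s + 2) (by omega)
        have h3'' : 0 < v (s + 2) := h3
        omega
      · -- k = l - 1
        rw [if_neg (by omega), if_pos (by omega : s + 4 = s + 2 + 2)] at q1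
        have hA : 1 ≤ a (s + 4) := ha (s + 3)
        omega
      · -- k = l - 2
        rw [if_neg (by omega), if_neg (by omega),
          if_pos (by omega : s + 4 = s + 3 + 1)] at q1
        have q1' : v (s + 4) - 1 = a (s + 4) := q1
        have h3'' : 0 < v (s + 4) := h3
        have := hb (s + 4) (by omega)
        omega
      · -- k = l + 1
        rw [if_neg (by omega), if_pos (by omega : s + 2 = s + 2)] at q3
        have hA : 1 ≤ a (s + 2) := ha (s + 1)
        omega
      · -- k = l + 2
        rw [if_neg (by omega), if_pos (by omega : t + 1 + 1 = t + 2)] at q4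
        omega
      · -- k = l + 3
        rw [if_neg (by omega), if_neg (by omega), if_neg (by omega)] at q3
        exact hn ⟨t + 4, by omega, q3, h1, h2, h3⟩
      · -- generic
        rw [if_neg (by omega), if_neg (by omega), if_neg (by omega)] at q1 q2 q3 q4
        exact hn ⟨s + 4, by omega, q1, q2, q3, q4⟩
  · unfold ruleC
    rw [if_neg hf]
    exact ⟨fun i hi => hb i hi, hn⟩

/-- (Lemma 2.6 of the paper.) During Algorithm 3 the forbidden
pattern is preserved: for every `l` with `3 ≤ l ≤ m + 3` there is no index `k`
such that `v_{l,k} = a_k`, `v_{l,k-1} < a_{k-1}`, `v_{l,k-2} = a_{k-2}`, and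
`v_{l,k-3} > 0`. -/
theorem algorithm3_no_pattern
    (a : ℕ → ℕ)
    (ha : ∀ k, 1 ≤ a (k + 1))
    (m : ℕ) (hm : 4 ≤ m)
    -- `w` is the output of Algorithm 2 (supported on positions `1, …, m+1`):
    -- it satisfies the digit bounds and the no-pattern condition of Lemma 2.5
    (w : ℕ → ℕ)
    (hw1 : w 1 ≤ a 1 - 1)
    (hwb : ∀ k, 1 ≤ k → w k ≤ a k)
    (hwtop : ∀ k, m + 1 < k → w k = 0)
    (hnopat : ¬ ∃ k, 4 ≤ k ∧ w k = a k ∧ w (k - 1) < a (k - 1) ∧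
        w (k - 2) = a (k - 2) ∧ 0 < w (k - 3))
    -- Algorithm 3: a left-to-right pass with the same window rule
    (V : ℕ → ℕ → ℕ)
    (hVtop : V (m + 3) = w)
    (hVs : ∀ k, 3 ≤ k → k ≤ m + 2 → V k = ruleC a k (V (k + 1))) :
    ∀ l, 3 ≤ l → l ≤ m + 3 →
      ¬ ∃ k, 4 ≤ k ∧ V l k = a k ∧ V l (k - 1) < a (k - 1) ∧
          V l (k - 2) = a (k - 2) ∧ 0 < V l (k - 3) := by
  have H : ∀ d, d ≤ m → (∀ i, 1 ≤ i → V (m + 3 - d) i ≤ a i) ∧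
      ¬ ∃ k, 4 ≤ k ∧ V (m + 3 - d) k = a k ∧ V (m + 3 - d) (k - 1) < a (k - 1) ∧
        V (m + 3 - d) (k - 2) = a (k - 2) ∧ 0 < V (m + 3 - d) (k - 3) := by
    intro d
    induction d with
    | zero =>
      intro _
      rw [Nat.sub_zero, hVtop]
      exact ⟨fun i hi => hwb i hi, hnopat⟩
    | succ d ih =>
      intro hd
      have ih' := ih (by omega)
      have hstep := hVs (m + 3 - (d + 1)) (by omega) (by omega)
      rw [show m + 3 - (d + 1) + 1 = m + 3 - d by omega] at hstep
      rw [hstep]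
      exact ruleC_step a ha _ (by omega) _ ih'.1 ih'.2
  intro l hl3 hlm
  have := (H (m + 3 - l) (by omega)).2
  rwa [show m + 3 - (m + 3 - l) = l by omega] at this
end

section
/- The three-pass algorithm correctly computes Ostrowski addition: if x and y are the Ostrowski representations of M and N based on a, then the word v_3 produced by applying Algorithms 1, 2, and 3 to the digit-wise sum of x and y is the Ostrowski representation of M + N. -/
namespace TP

lemma down_ind (lo m : ℕ) (P : ℕ → Prop) (base : P m)
    (step : ∀ k, lo ≤ k → k + 1 ≤ m → P (k + 1) → P k) :
    ∀ k, lo ≤ k → k ≤ m → P k := by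
  have H : ∀ d k, lo ≤ k → k ≤ m → m - k = d → P k := by
    intro d
    induction d with
    | zero =>
        intro k h1 h2 h3
        have hk : k = m := by omega
        exact hk ▸ base
    | succ d ih =>
        intro k h1 h2 h3
        exact step k h1 (by omega) (ih (k + 1) (by omega) (by omega) (by omega))
  exact fun k h1 h2 => H (m - k) k h1 h2 rfl

lemma up_ind (lo m : ℕ) (P : ℕ → Prop) (base : P lo)
    (step : ∀ k, lo ≤ k → k + 1 ≤ m → P k → P (k + 1)) :
    ∀ k, lo ≤ k → k ≤ m → P k := by
  intro k hk hkm
  induction k with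
  | zero =>
      have h : lo = 0 := by omega
      exact h ▸ base
  | succ k ih =>
      rcases Nat.lt_or_ge lo (k + 1) with h | h
      · exact step k (by omega) (by omega) (ih (by omega) (by omega))
      · have hlo : lo = k + 1 := by omega
        exact hlo ▸ base

lemma sum4 (M j1 j2 j3 j4 : ℕ) (f g : ℕ → ℕ)
    (h12 : j1 < j2) (h23 : j2 < j3) (h34 : j3 < j4) (h4M : j4 < M)
    (hout : ∀ i, i < M → i ≠ j1 → i ≠ j2 → i ≠ j3 → i ≠ j4 → f i = g i)
    (hin : f j1 + f j2 + f j3 + f j4 = g j1 + g j2 + g j3 + g j4) :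
    ∑ i ∈ Finset.range M, f i = ∑ i ∈ Finset.range M, g i := by
  have hsub : ({j1, j2, j3, j4} : Finset ℕ) ⊆ Finset.range M := by
    intro x hx
    simp only [Finset.mem_insert, Finset.mem_singleton] at hx
    rcases hx with rfl | rfl | rfl | rfl <;> simp only [Finset.mem_range] <;> omega
  have e1 : ∀ h : ℕ → ℕ,
      ∑ i ∈ ({j1, j2, j3, j4} : Finset ℕ), h i = h j1 + h j2 + h j3 + h j4 := by
    intro h
    rw [Finset.sum_insert (by simp only [Finset.mem_insert, Finset.mem_singleton]; omega),
      Finset.sum_insert (by simp only [Finset.mem_insert, Finset.mem_singleton]; omega),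
      Finset.sum_insert (by simp only [Finset.mem_singleton]; omega), Finset.sum_singleton]
    ring
  have e2 : ∑ i ∈ Finset.range M \ ({j1, j2, j3, j4} : Finset ℕ), f i
      = ∑ i ∈ Finset.range M \ ({j1, j2, j3, j4} : Finset ℕ), g i := by
    refine Finset.sum_congr rfl (fun i hi => ?_)
    simp only [Finset.mem_sdiff, Finset.mem_range, Finset.mem_insert, Finset.mem_singleton,
      not_or] at hi
    exact hout i hi.1 hi.2.1 hi.2.2.1 hi.2.2.2.1 hi.2.2.2.2
  rw [← Finset.sum_sdiff hsub (f := f), ← Finset.sum_sdiff hsub (f := g), e2, e1 f, e1 g, hin]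

lemma sum3 (M j1 j2 j3 : ℕ) (f g : ℕ → ℕ)
    (h12 : j1 < j2) (h23 : j2 < j3) (h3M : j3 < M)
    (hout : ∀ i, i < M → i ≠ j1 → i ≠ j2 → i ≠ j3 → f i = g i)
    (hin : f j1 + f j2 + f j3 = g j1 + g j2 + g j3) :
    ∑ i ∈ Finset.range M, f i = ∑ i ∈ Finset.range M, g i := by
  have hsub : ({j1, j2, j3} : Finset ℕ) ⊆ Finset.range M := by
    intro x hx
    simp only [Finset.mem_insert, Finset.mem_singleton] at hx
    rcases hx with rfl | rfl | rfl <;> simp only [Finset.mem_range] <;> omega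
  have e1 : ∀ h : ℕ → ℕ,
      ∑ i ∈ ({j1, j2, j3} : Finset ℕ), h i = h j1 + h j2 + h j3 := by
    intro h
    rw [Finset.sum_insert (by simp only [Finset.mem_insert, Finset.mem_singleton]; omega),
      Finset.sum_insert (by simp only [Finset.mem_singleton]; omega), Finset.sum_singleton]
    ring
  have e2 : ∑ i ∈ Finset.range M \ ({j1, j2, j3} : Finset ℕ), f i
      = ∑ i ∈ Finset.range M \ ({j1, j2, j3} : Finset ℕ), g i := by
    refine Finset.sum_congr rfl (fun i hi => ?_)
    simp only [Finset.mem_sdiff, Finset.mem_range, Finset.mem_insert, Finset.mem_singleton,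
      not_or] at hi
    exact hout i hi.1 hi.2.1 hi.2.2.1 hi.2.2.2
  rw [← Finset.sum_sdiff hsub (f := f), ← Finset.sum_sdiff hsub (f := g), e2, e1 f, e1 g, hin]

/-! ### Evaluation lemmas for the rules (additive index form) -/

lemma ruleA_g1 (a u : ℕ → ℕ) (p : ℕ)
    (hg : u (p+3) < a (p+3) ∧ a (p+2) < u (p+2) ∧ u (p+1) = 0) :
    ruleA a (p+3) u (p+3) = u (p+3) + 1 ∧
    ruleA a (p+3) u (p+2) = u (p+2) - (a (p+2) + 1) ∧
    ruleA a (p+3) u (p+1) = a (p+1) - 1 ∧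
    ruleA a (p+3) u p = u p + 1 ∧
    (∀ i, i ≠ p → i ≠ p+1 → i ≠ p+2 → i ≠ p+3 → ruleA a (p+3) u i = u i) := by
  have e1 : p + 3 - 1 = p + 2 := by omega
  have e2 : p + 3 - 2 = p + 1 := by omega
  have e3 : p + 3 - 3 = p := by omega
  have hg' : u (p+3) < a (p+3) ∧ a (p+3-1) < u (p+3-1) ∧ u (p+3-2) = 0 := by
    rw [e1, e2]; exact hg
  refine ⟨?_, ?_, ?_, ?_, fun i hi0 hi1 hi2 hi3 => ?_⟩
  · simp only [ruleA]; rw [if_pos hg', if_pos rfl]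
  · simp only [ruleA]
    rw [if_pos hg', if_neg (by omega : ¬(p+2 = p+3)), if_pos (by omega : p+2 = p+3-1), e1]
  · simp only [ruleA]
    rw [if_pos hg', if_neg (by omega : ¬(p+1 = p+3)), if_neg (by omega : ¬(p+1 = p+3-1)),
      if_pos (by omega : p+1 = p+3-2), e2]
  · simp only [ruleA]
    rw [if_pos hg', if_neg (by omega : ¬(p = p+3)), if_neg (by omega : ¬(p = p+3-1)),
      if_neg (by omega : ¬(p = p+3-2)), if_pos (by omega : p = p+3-3), e3]
  · simp only [ruleA]
    rw [if_pos hg', if_neg hi3, if_neg (by omega : ¬(i = p+3-1)),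
      if_neg (by omega : ¬(i = p+3-2)), if_neg (by omega : ¬(i = p+3-3))]

lemma ruleA_g2 (a u : ℕ → ℕ) (p : ℕ)
    (hn1 : ¬(u (p+3) < a (p+3) ∧ a (p+2) < u (p+2) ∧ u (p+1) = 0))
    (hg : u (p+3) < a (p+3) ∧ a (p+2) ≤ u (p+2) ∧ u (p+2) ≤ 2 * a (p+2) ∧ 0 < u (p+1)) :
    ruleA a (p+3) u (p+3) = u (p+3) + 1 ∧
    ruleA a (p+3) u (p+2) = u (p+2) - a (p+2) ∧
    ruleA a (p+3) u (p+1) = u (p+1) - 1 ∧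
    (∀ i, i ≠ p+1 → i ≠ p+2 → i ≠ p+3 → ruleA a (p+3) u i = u i) := by
  have e1 : p + 3 - 1 = p + 2 := by omega
  have e2 : p + 3 - 2 = p + 1 := by omega
  have hn1' : ¬(u (p+3) < a (p+3) ∧ a (p+3-1) < u (p+3-1) ∧ u (p+3-2) = 0) := by
    rw [e1, e2]; exact hn1
  have hg' : u (p+3) < a (p+3) ∧ a (p+3-1) ≤ u (p+3-1) ∧ u (p+3-1) ≤ 2 * a (p+3-1)
      ∧ 0 < u (p+3-2) := by
    rw [e1, e2]; exact hg
  refine ⟨?_, ?_, ?_, fun i hi1 hi2 hi3 => ?_⟩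
  · simp only [ruleA]; rw [if_neg hn1', if_pos hg', if_pos rfl]
  · simp only [ruleA]
    rw [if_neg hn1', if_pos hg', if_neg (by omega : ¬(p+2 = p+3)),
      if_pos (by omega : p+2 = p+3-1), e1]
  · simp only [ruleA]
    rw [if_neg hn1', if_pos hg', if_neg (by omega : ¬(p+1 = p+3)),
      if_neg (by omega : ¬(p+1 = p+3-1)), if_pos (by omega : p+1 = p+3-2), e2]
  · simp only [ruleA]
    rw [if_neg hn1', if_pos hg', if_neg hi3, if_neg (by omega : ¬(i = p+3-1)),
      if_neg (by omega : ¬(i = p+3-2))]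

lemma ruleA_none (a u : ℕ → ℕ) (p : ℕ)
    (hn1 : ¬(u (p+3) < a (p+3) ∧ a (p+2) < u (p+2) ∧ u (p+1) = 0))
    (hn2 : ¬(u (p+3) < a (p+3) ∧ a (p+2) ≤ u (p+2) ∧ u (p+2) ≤ 2 * a (p+2) ∧ 0 < u (p+1))) :
    ruleA a (p+3) u = u := by
  have e1 : p + 3 - 1 = p + 2 := by omega
  have e2 : p + 3 - 2 = p + 1 := by omega
  have hn1' : ¬(u (p+3) < a (p+3) ∧ a (p+3-1) < u (p+3-1) ∧ u (p+3-2) = 0) := by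
    rw [e1, e2]; exact hn1
  have hn2' : ¬(u (p+3) < a (p+3) ∧ a (p+3-1) ≤ u (p+3-1) ∧ u (p+3-1) ≤ 2 * a (p+3-1)
      ∧ 0 < u (p+3-2)) := by
    rw [e1, e2]; exact hn2
  simp only [ruleA]; rw [if_neg hn1', if_neg hn2']

lemma ruleC_g (a u : ℕ → ℕ) (p : ℕ)
    (hg : u (p+2) < a (p+2) ∧ u (p+1) = a (p+1) ∧ 0 < u p) :
    ruleC a (p+2) u (p+2) = u (p+2) + 1 ∧
    ruleC a (p+2) u (p+1) = 0 ∧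
    ruleC a (p+2) u p = u p - 1 ∧
    (∀ i, i ≠ p → i ≠ p+1 → i ≠ p+2 → ruleC a (p+2) u i = u i) := by
  have e1 : p + 2 - 1 = p + 1 := by omega
  have e2 : p + 2 - 2 = p := by omega
  have hg' : u (p+2) < a (p+2) ∧ u (p+2-1) = a (p+2-1) ∧ 0 < u (p+2-2) := by
    rw [e1, e2]; exact hg
  refine ⟨?_, ?_, ?_, fun i hi0 hi1 hi2 => ?_⟩
  · simp only [ruleC]; rw [if_pos hg', if_pos rfl]
  · simp only [ruleC]
    rw [if_pos hg', if_neg (by omega : ¬(p+1 = p+2)), if_pos (by omega : p+1 = p+2-1)]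
  · simp only [ruleC]
    rw [if_pos hg', if_neg (by omega : ¬(p = p+2)), if_neg (by omega : ¬(p = p+2-1)),
      if_pos (by omega : p = p+2-2), e2]
  · simp only [ruleC]
    rw [if_pos hg', if_neg hi2, if_neg (by omega : ¬(i = p+2-1)),
      if_neg (by omega : ¬(i = p+2-2))]

lemma ruleC_none (a u : ℕ → ℕ) (p : ℕ)
    (hn : ¬(u (p+2) < a (p+2) ∧ u (p+1) = a (p+1) ∧ 0 < u p)) :
    ruleC a (p+2) u = u := by
  have e1 : p + 2 - 1 = p + 1 := by omega
  have e2 : p + 2 - 2 = p := by omega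
  have hn' : ¬(u (p+2) < a (p+2) ∧ u (p+2-1) = a (p+2-1) ∧ 0 < u (p+2-2)) := by
    rw [e1, e2]; exact hn
  simp only [ruleC]; rw [if_neg hn']

lemma ruleB_b1 (a u : ℕ → ℕ)
    (hg : u 3 < a 3 ∧ a 2 < u 2 ∧ u 1 = 0) :
    ruleB a u 3 = u 3 + 1 ∧ ruleB a u 2 = u 2 - (a 2 + 1) ∧ ruleB a u 1 = a 1 - 1 ∧
    (∀ i, i ≠ 1 → i ≠ 2 → i ≠ 3 → ruleB a u i = u i) := by
  refine ⟨?_, ?_, ?_, fun i hi1 hi2 hi3 => ?_⟩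
  · simp only [ruleB]; rw [if_pos hg, if_pos rfl]
  · simp only [ruleB]; rw [if_pos hg, if_neg (by omega : ¬(2 = 3)), if_pos rfl]
  · simp only [ruleB]
    rw [if_pos hg, if_neg (by omega : ¬(1 = 3)), if_neg (by omega : ¬(1 = 2)), if_pos rfl]
  · simp only [ruleB]; rw [if_pos hg, if_neg hi3, if_neg hi2, if_neg hi1]

lemma ruleB_b2 (a u : ℕ → ℕ)
    (hn1 : ¬(u 3 < a 3 ∧ a 2 < u 2 ∧ u 1 = 0))
    (hg : u 3 < a 3 ∧ a 2 ≤ u 2 ∧ 0 < u 1 ∧ u 1 ≤ a 1) :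
    ruleB a u 3 = u 3 + 1 ∧ ruleB a u 2 = u 2 - a 2 ∧ ruleB a u 1 = u 1 - 1 ∧
    (∀ i, i ≠ 1 → i ≠ 2 → i ≠ 3 → ruleB a u i = u i) := by
  refine ⟨?_, ?_, ?_, fun i hi1 hi2 hi3 => ?_⟩
  · simp only [ruleB]; rw [if_neg hn1, if_pos hg, if_pos rfl]
  · simp only [ruleB]; rw [if_neg hn1, if_pos hg, if_neg (by omega : ¬(2 = 3)), if_pos rfl]
  · simp only [ruleB]
    rw [if_neg hn1, if_pos hg, if_neg (by omega : ¬(1 = 3)), if_neg (by omega : ¬(1 = 2)),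
      if_pos rfl]
  · simp only [ruleB]; rw [if_neg hn1, if_pos hg, if_neg hi3, if_neg hi2, if_neg hi1]

lemma ruleB_b3 (a u : ℕ → ℕ)
    (hn1 : ¬(u 3 < a 3 ∧ a 2 < u 2 ∧ u 1 = 0))
    (hn2 : ¬(u 3 < a 3 ∧ a 2 ≤ u 2 ∧ 0 < u 1 ∧ u 1 ≤ a 1))
    (hg : u 3 < a 3 ∧ a 2 ≤ u 2 ∧ a 1 < u 1) :
    ruleB a u 3 = u 3 + 1 ∧ ruleB a u 2 = u 2 - a 2 + 1 ∧ ruleB a u 1 = u 1 - a 1 - 1 ∧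
    (∀ i, i ≠ 1 → i ≠ 2 → i ≠ 3 → ruleB a u i = u i) := by
  refine ⟨?_, ?_, ?_, fun i hi1 hi2 hi3 => ?_⟩
  · simp only [ruleB]; rw [if_neg hn1, if_neg hn2, if_pos hg, if_pos rfl]
  · simp only [ruleB]
    rw [if_neg hn1, if_neg hn2, if_pos hg, if_neg (by omega : ¬(2 = 3)), if_pos rfl]
  · simp only [ruleB]
    rw [if_neg hn1, if_neg hn2, if_pos hg, if_neg (by omega : ¬(1 = 3)),
      if_neg (by omega : ¬(1 = 2)), if_pos rfl]
  · simp only [ruleB]; rw [if_neg hn1, if_neg hn2, if_pos hg, if_neg hi3, if_neg hi2, if_neg hi1]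

lemma ruleB_b4 (a u : ℕ → ℕ)
    (hn1 : ¬(u 3 < a 3 ∧ a 2 < u 2 ∧ u 1 = 0))
    (hn2 : ¬(u 3 < a 3 ∧ a 2 ≤ u 2 ∧ 0 < u 1 ∧ u 1 ≤ a 1))
    (hn3 : ¬(u 3 < a 3 ∧ a 2 ≤ u 2 ∧ a 1 < u 1))
    (hg : u 2 < a 2 ∧ a 1 ≤ u 1) :
    ruleB a u 2 = u 2 + 1 ∧ ruleB a u 1 = u 1 - a 1 ∧
    (∀ i, i ≠ 1 → i ≠ 2 → ruleB a u i = u i) := by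
  refine ⟨?_, ?_, fun i hi1 hi2 => ?_⟩
  · simp only [ruleB]; rw [if_neg hn1, if_neg hn2, if_neg hn3, if_pos hg, if_pos rfl]
  · simp only [ruleB]
    rw [if_neg hn1, if_neg hn2, if_neg hn3, if_pos hg, if_neg (by omega : ¬(1 = 2)), if_pos rfl]
  · simp only [ruleB]; rw [if_neg hn1, if_neg hn2, if_neg hn3, if_pos hg, if_neg hi2, if_neg hi1]

lemma ruleB_none (a u : ℕ → ℕ)
    (hn1 : ¬(u 3 < a 3 ∧ a 2 < u 2 ∧ u 1 = 0))
    (hn2 : ¬(u 3 < a 3 ∧ a 2 ≤ u 2 ∧ 0 < u 1 ∧ u 1 ≤ a 1))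
    (hn3 : ¬(u 3 < a 3 ∧ a 2 ≤ u 2 ∧ a 1 < u 1))
    (hn4 : ¬(u 2 < a 2 ∧ a 1 ≤ u 1)) :
    ruleB a u = u := by
  simp only [ruleB]; rw [if_neg hn1, if_neg hn2, if_neg hn3, if_neg hn4]

lemma sum_ruleA (a q z : ℕ → ℕ) (M r : ℕ) (hM : r + 4 ≤ M)
    (h1 : q (r+3) = a (r+3) * q (r+2) + q (r+1))
    (h2 : q (r+2) = a (r+2) * q (r+1) + q r)
    (ha2 : 1 ≤ a (r+2)) :
    ∑ i ∈ Finset.range M, ruleA a (r+4) z (i+1) * q i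
      = ∑ i ∈ Finset.range M, z (i+1) * q i := by
  by_cases hg1 : z (r+4) < a (r+4) ∧ a (r+3) < z (r+3) ∧ z (r+2) = 0
  · have E := ruleA_g1 a z (r+1) hg1
    have E4 : ruleA a (r+4) z (r+4) = z (r+4) + 1 := E.1
    have E3 : ruleA a (r+4) z (r+3) = z (r+3) - (a (r+3) + 1) := E.2.1
    have E2 : ruleA a (r+4) z (r+2) = a (r+2) - 1 := E.2.2.1
    have E1 : ruleA a (r+4) z (r+1) = z (r+1) + 1 := E.2.2.2.1
    have Eo : ∀ i, i ≠ r+1 → i ≠ r+2 → i ≠ r+3 → i ≠ r+4 → ruleA a (r+4) z i = z i :=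
      fun i u1 u2 u3 u4 => E.2.2.2.2 i u1 u2 u3 u4
    refine sum4 M r (r+1) (r+2) (r+3) _ _ (by omega) (by omega) (by omega) (by omega)
      (fun i hi i1 i2 i3 i4 => by rw [Eo (i+1) (by omega) (by omega) (by omega) (by omega)])
      ?_
    rw [E1, E2, E3, E4]
    obtain ⟨c, hc⟩ : ∃ c, z (r+3) = c + (a (r+3) + 1) := ⟨z (r+3) - (a (r+3) + 1), by omega⟩
    obtain ⟨d, hd⟩ : ∃ d, a (r+2) = d + 1 := ⟨a (r+2) - 1, by omega⟩
    have w1 : z (r+3) - (a (r+3) + 1) = c := by omega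
    have w2 : a (r+2) - 1 = d := by omega
    rw [w1, w2, h1, h2, hg1.2.2, hc, hd]
    ring
  · by_cases hg2 : z (r+4) < a (r+4) ∧ a (r+3) ≤ z (r+3) ∧ z (r+3) ≤ 2 * a (r+3) ∧ 0 < z (r+2)
    · have E := ruleA_g2 a z (r+1) hg1 hg2
      have E4 : ruleA a (r+4) z (r+4) = z (r+4) + 1 := E.1
      have E3 : ruleA a (r+4) z (r+3) = z (r+3) - a (r+3) := E.2.1
      have E2 : ruleA a (r+4) z (r+2) = z (r+2) - 1 := E.2.2.1
      have Eo : ∀ i, i ≠ r+2 → i ≠ r+3 → i ≠ r+4 → ruleA a (r+4) z i = z i :=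
        fun i u2 u3 u4 => E.2.2.2 i u2 u3 u4
      refine sum3 M (r+1) (r+2) (r+3) _ _ (by omega) (by omega) (by omega)
        (fun i hi i1 i2 i3 => by rw [Eo (i+1) (by omega) (by omega) (by omega)])
        ?_
      rw [E2, E3, E4]
      obtain ⟨c, hc⟩ : ∃ c, z (r+3) = c + a (r+3) := ⟨z (r+3) - a (r+3), by omega⟩
      obtain ⟨e, he⟩ : ∃ e, z (r+2) = e + 1 := ⟨z (r+2) - 1, by omega⟩
      have w1 : z (r+3) - a (r+3) = c := by omega
      have w2 : z (r+2) - 1 = e := by omega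
      rw [w1, w2, h1, hc, he]
      ring
    · have hz : ruleA a (r+4) z = z := ruleA_none a z (r+1) hg1 hg2
      rw [hz]

lemma sum_ruleC (a q z : ℕ → ℕ) (M r : ℕ) (hM : r + 3 ≤ M)
    (h2 : q (r+2) = a (r+2) * q (r+1) + q r) :
    ∑ i ∈ Finset.range M, ruleC a (r+3) z (i+1) * q i
      = ∑ i ∈ Finset.range M, z (i+1) * q i := by
  by_cases hg : z (r+3) < a (r+3) ∧ z (r+2) = a (r+2) ∧ 0 < z (r+1)
  · have E := ruleC_g a z (r+1) hg
    have E3 : ruleC a (r+3) z (r+3) = z (r+3) + 1 := E.1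
    have E2 : ruleC a (r+3) z (r+2) = 0 := E.2.1
    have E1 : ruleC a (r+3) z (r+1) = z (r+1) - 1 := E.2.2.1
    have Eo : ∀ i, i ≠ r+1 → i ≠ r+2 → i ≠ r+3 → ruleC a (r+3) z i = z i :=
      fun i u1 u2 u3 => E.2.2.2 i u1 u2 u3
    refine sum3 M r (r+1) (r+2) _ _ (by omega) (by omega) (by omega)
      (fun i hi i1 i2 i3 => by rw [Eo (i+1) (by omega) (by omega) (by omega)])
      ?_
    rw [E1, E2, E3]
    obtain ⟨c, hc⟩ : ∃ c, z (r+1) = c + 1 := ⟨z (r+1) - 1, by omega⟩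
    have w1 : z (r+1) - 1 = c := by omega
    rw [w1, h2, hg.2.1, hc]
    ring
  · have hz : ruleC a (r+3) z = z := ruleC_none a z (r+1) hg
    rw [hz]

lemma sum_ruleB (a q z : ℕ → ℕ) (M : ℕ) (hM : 3 ≤ M)
    (hq0 : q 0 = 1) (hq1 : q 1 = a 1)
    (h2 : q 2 = a 2 * q 1 + q 0)
    (ha1 : 1 ≤ a 1) :
    ∑ i ∈ Finset.range M, ruleB a z (i+1) * q i
      = ∑ i ∈ Finset.range M, z (i+1) * q i := by
  have main : ∀ v1 v2 v3 : ℕ, ruleB a z 1 = v1 → ruleB a z 2 = v2 → ruleB a z 3 = v3 →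
      (∀ i, i ≠ 1 → i ≠ 2 → i ≠ 3 → ruleB a z i = z i) →
      v1 * q 0 + v2 * q 1 + v3 * q 2 = z 1 * q 0 + z 2 * q 1 + z 3 * q 2 →
      ∑ i ∈ Finset.range M, ruleB a z (i+1) * q i = ∑ i ∈ Finset.range M, z (i+1) * q i := by
    intro v1 v2 v3 e1 e2 e3 eo key
    refine sum3 M 0 1 2 _ _ (by omega) (by omega) (by omega)
      (fun i hi i1 i2 i3 => by rw [eo (i+1) (by omega) (by omega) (by omega)])
      ?_
    simpa only [show (0:ℕ)+1 = 1 from rfl, show (1:ℕ)+1 = 2 from rfl,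
      show (2:ℕ)+1 = 3 from rfl, e1, e2, e3] using key
  by_cases b1 : z 3 < a 3 ∧ a 2 < z 2 ∧ z 1 = 0
  · obtain ⟨e3, e2, e1, eo⟩ := ruleB_b1 a z b1
    refine main _ _ _ e1 e2 e3 eo ?_
    obtain ⟨c, hc⟩ : ∃ c, z 2 = c + (a 2 + 1) := ⟨z 2 - (a 2 + 1), by omega⟩
    obtain ⟨d, hd⟩ : ∃ d, a 1 = d + 1 := ⟨a 1 - 1, by omega⟩
    have w1 : z 2 - (a 2 + 1) = c := by omega
    have w2 : a 1 - 1 = d := by omega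
    rw [w1, w2, h2, hq1, hq0, b1.2.2, hc, hd]
    ring
  · by_cases b2 : z 3 < a 3 ∧ a 2 ≤ z 2 ∧ 0 < z 1 ∧ z 1 ≤ a 1
    · obtain ⟨e3, e2, e1, eo⟩ := ruleB_b2 a z b1 b2
      refine main _ _ _ e1 e2 e3 eo ?_
      obtain ⟨c, hc⟩ : ∃ c, z 2 = c + a 2 := ⟨z 2 - a 2, by omega⟩
      obtain ⟨d, hd⟩ : ∃ d, z 1 = d + 1 := ⟨z 1 - 1, by omega⟩
      have w1 : z 2 - a 2 = c := by omega
      have w2 : z 1 - 1 = d := by omega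
      rw [w1, w2, h2, hc, hd]
      ring
    · by_cases b3 : z 3 < a 3 ∧ a 2 ≤ z 2 ∧ a 1 < z 1
      · obtain ⟨e3, e2, e1, eo⟩ := ruleB_b3 a z b1 b2 b3
        refine main _ _ _ e1 e2 e3 eo ?_
        obtain ⟨c, hc⟩ : ∃ c, z 1 = c + a 1 + 1 := ⟨z 1 - a 1 - 1, by omega⟩
        obtain ⟨d, hd⟩ : ∃ d, z 2 = d + a 2 := ⟨z 2 - a 2, by omega⟩
        have w1 : z 1 - a 1 - 1 = c := by omega
        have w2 : z 2 - a 2 + 1 = d + 1 := by omega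
        rw [w1, w2, h2, hq1, hq0, hc, hd]
        ring
      · by_cases b4 : z 2 < a 2 ∧ a 1 ≤ z 1
        · obtain ⟨e2, e1, eo⟩ := ruleB_b4 a z b1 b2 b3 b4
          have e3 : ruleB a z 3 = z 3 := eo 3 (by omega) (by omega)
          refine main _ _ _ e1 e2 e3 (fun i i1 i2 _ => eo i i1 i2) ?_
          obtain ⟨c, hc⟩ : ∃ c, z 1 = c + a 1 := ⟨z 1 - a 1, by omega⟩
          have w1 : z 1 - a 1 = c := by omega
          rw [w1, hq1, hq0, hc]
          ring
        · have hz : ruleB a z = z := ruleB_none a z b1 b2 b3 b4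
          rw [hz]

def Inv1 (a s : ℕ → ℕ) (p : ℕ) (u : ℕ → ℕ) : Prop :=
  (∀ i, p + 2 ≤ i → u i ≤ a i) ∧
  (∀ i, i + 1 ≤ p → u i = s i) ∧
  (u (p+1) ≤ 2 * a (p+1) + 1) ∧
  (u (p+1) = 2 * a (p+1) + 1 → u p = 0) ∧
  (2 * a (p+1) ≤ u (p+1) → u p ≤ a p) ∧
  (u p ≤ s p + 1) ∧
  (∀ t, t + 2 ≤ p + 2 → (∀ i, t + 2 ≤ i → i ≤ p + 2 → u i = a i) →
    u (t+1) ≤ a (t+1) ∧ (t = 0 → u 1 < a 1))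

lemma inv1_step (a s u : ℕ → ℕ) (p : ℕ) (hp : 1 ≤ p)
    (ha : ∀ i, 1 ≤ i → 1 ≤ a i)
    (hsle : ∀ i, 2 ≤ i → s i ≤ 2 * a i)
    (hsmax : ∀ i, 2 ≤ i → 2 * a i ≤ s i + 1 → s (i-1) ≤ a (i-1))
    (hs2max : ∀ i, 2 ≤ i → s i = 2 * a i → s (i-1) = 0)
    (h : Inv1 a s (p+1) u) :
    Inv1 a s p (ruleA a (p+3) u) := by
  obtain ⟨hA, hF, hC1, hC3, hC4, hC6, hM⟩ := h
  simp only [show p+1+1 = p+2 from rfl, show p+1+2 = p+3 from rfl] at hA hC1 hC3 hC4 hM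
  have hap1 : 1 ≤ a (p+1) := ha _ (by omega)
  have hap2 : 1 ≤ a (p+2) := ha _ (by omega)
  have hsle1 : s (p+1) ≤ 2 * a (p+1) := hsle _ (by omega)
  have hsp : s (p+1) = 2 * a (p+1) → s p = 0 := fun hh => hs2max (p+1) (by omega) hh
  have hsp' : 2 * a (p+1) ≤ s (p+1) + 1 → s p ≤ a p := fun hh => hsmax (p+1) (by omega) hh
  have hFp : u p = s p := hF p (by omega)
  by_cases hg1 : u (p+3) < a (p+3) ∧ a (p+2) < u (p+2) ∧ u (p+1) = 0
  · -- rule (A1) fires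
    obtain ⟨E3, E2, E1, E0, Eo⟩ := ruleA_g1 a u p hg1
    refine ⟨?_, ?_, ?_, ?_, ?_, ?_, ?_⟩
    · intro i hi
      rcases Nat.lt_or_ge i (p+3) with hlt | hge
      · have : i = p + 2 := by omega
        subst this; rw [E2]; omega
      · rcases Nat.eq_or_lt_of_le hge with heq | hgt
        · have hieq : i = p + 3 := by omega
          subst hieq; rw [E3]; omega
        · rw [Eo i (by omega) (by omega) (by omega) (by omega)]
          exact hA i (by omega)
    · intro i hi
      rw [Eo i (by omega) (by omega) (by omega) (by omega)]
      exact hF i (by omega)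
    · rw [E1]; omega
    · rw [E1]; intro hh; omega
    · rw [E1]; intro hh; omega
    · rw [E0, hFp]
    · intro t ht hrun
      rcases Nat.lt_or_ge (t+2) (p+2) with hlt | hge
      · exfalso
        have := hrun (p+1) (by omega) (by omega)
        rw [E1] at this; omega
      · have hteq : t = p := by omega
        subst hteq
        constructor
        · rw [E1]; omega
        · intro h0; omega
  · by_cases hg2 : u (p+3) < a (p+3) ∧ a (p+2) ≤ u (p+2) ∧ u (p+2) ≤ 2 * a (p+2) ∧ 0 < u (p+1)
    · -- rule (A2)/(A3) fires
      obtain ⟨E3, E2, E1, Eo⟩ := ruleA_g2 a u p hg1 hg2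
      have hE0 : ruleA a (p+3) u p = u p := Eo p (by omega) (by omega) (by omega)
      refine ⟨?_, ?_, ?_, ?_, ?_, ?_, ?_⟩
      · intro i hi
        rcases Nat.lt_or_ge i (p+3) with hlt | hge
        · have : i = p + 2 := by omega
          subst this; rw [E2]; omega
        · rcases Nat.eq_or_lt_of_le hge with heq | hgt
          · have hieq : i = p + 3 := by omega
            subst hieq; rw [E3]; omega
          · rw [Eo i (by omega) (by omega) (by omega)]
            exact hA i (by omega)
      · intro i hi
        rw [Eo i (by omega) (by omega) (by omega)]
        exact hF i (by omega)
      · rw [E1]; omega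
      · rw [E1]; intro hh; omega
      · rw [E1, hE0, hFp]; intro hh
        have hs2 : s (p+1) = 2 * a (p+1) := by omega
        have := hsp hs2; omega
      · rw [hE0, hFp]; omega
      · intro t ht hrun
        have h22 := hrun (p+2) (by omega) (by omega)
        rw [E2] at h22
        have hu2 : u (p+2) = 2 * a (p+2) := by omega
        have hu1 : u (p+1) ≤ a (p+1) := hC4 (by omega)
        rcases Nat.lt_or_ge (t+2) (p+2) with hlt | hge
        · exfalso
          have := hrun (p+1) (by omega) (by omega)
          rw [E1] at this; omega
        · have hteq : t = p := by omega
          subst hteq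
          exact ⟨by rw [E1]; omega, fun h0 => by omega⟩
    · -- no rule fires
      have hv : ruleA a (p+3) u = u := ruleA_none a u p hg1 hg2
      rw [hv]
      have hkey : u (p+2) ≤ a (p+2) := by
        by_contra hgt
        push_neg at hgt
        have h3 : u (p+3) < a (p+3) := by
          rcases Nat.eq_or_lt_of_le (hA (p+3) (by omega)) with heq | hlt
          · exfalso
            have hcon : u (p+2) ≤ a (p+2) := (hM (p+1) (by omega) (fun i h1 h2 => by
              have : i = p + 3 := by omega
              subst this; exact heq)).1
            omega
          · exact hlt
        rcases Nat.eq_zero_or_pos (u (p+1)) with h0 | h0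
        · exact hg1 ⟨h3, hgt, h0⟩
        · have hle2 : u (p+2) ≤ 2 * a (p+2) := by
            rcases Nat.eq_or_lt_of_le hC1 with heq | hlt
            · exfalso; have := hC3 heq; omega
            · omega
          exact hg2 ⟨h3, by omega, hle2, h0⟩
      refine ⟨?_, ?_, ?_, ?_, ?_, ?_, ?_⟩
      · intro i hi
        rcases Nat.eq_or_lt_of_le hi with heq | hlt
        · rw [← heq]; exact hkey
        · exact hA i (by omega)
      · intro i hi; exact hF i (by omega)
      · omega
      · intro hh
        have hs2 : s (p+1) = 2 * a (p+1) := by omega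
        rw [hFp]; exact hsp hs2
      · intro hh
        rw [hFp]
        exact hsp' (by omega)
      · omega
      · intro t ht hrun
        have hup2 : u (p+2) = a (p+2) := hrun (p+2) (by omega) (by omega)
        by_cases h3 : u (p+3) = a (p+3)
        · refine hM t (by omega) (fun i h1 h2 => ?_)
          rcases Nat.lt_or_ge i (p+3) with hlt | hge
          · exact hrun i h1 (by omega)
          · have : i = p + 3 := by omega
            subst this; exact h3
        · have h3' : u (p+3) < a (p+3) := lt_of_le_of_ne (hA _ (by omega)) h3
          rcases Nat.lt_or_ge (t+2) (p+2) with hlt | hge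
          · exfalso
            have h1 := hrun (p+1) (by omega) (by omega)
            exact hg2 ⟨h3', by omega, by omega, by rw [h1]; exact ha _ (by omega)⟩
          · have hteq : t = p := by omega
            subst hteq
            constructor
            · by_contra hbad
              push_neg at hbad
              exact hg2 ⟨h3', by omega, by omega, by omega⟩
            · intro h0; omega

lemma inv1_final (a s u : ℕ → ℕ)
    (ha : ∀ i, 1 ≤ i → 1 ≤ a i)
    (hs1 : s 1 + 2 ≤ 2 * a 1)
    (h : Inv1 a s 1 u) :
    (∀ i, 2 ≤ i → ruleB a u i ≤ a i) ∧ ruleB a u 1 < a 1 ∧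
    (∀ i, 4 ≤ i → ruleB a u i = u i) := by
  obtain ⟨hA, hF, hC1, hC3, hC4, hC6, hM⟩ := h
  simp only [show (1:ℕ)+1 = 2 from rfl, show (1:ℕ)+2 = 3 from rfl] at hA hC1 hC3 hC4 hC6 hM
  have ha1 : 1 ≤ a 1 := ha _ (by omega)
  have ha2 : 1 ≤ a 2 := ha _ (by omega)
  have hu3 : u 3 ≤ a 3 := hA 3 (by omega)
  have hu1 : u 1 + 1 ≤ 2 * a 1 := by omega
  by_cases b1 : u 3 < a 3 ∧ a 2 < u 2 ∧ u 1 = 0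
  · obtain ⟨E3, E2, E1, Eo⟩ := ruleB_b1 a u b1
    refine ⟨?_, by rw [E1]; omega, fun i hi => Eo i (by omega) (by omega) (by omega)⟩
    intro i hi
    rcases (by omega : i = 2 ∨ i = 3 ∨ 4 ≤ i) with rfl | rfl | h4
    · rw [E2]; omega
    · rw [E3]; omega
    · rw [Eo i (by omega) (by omega) (by omega)]; exact hA i (by omega)
  · by_cases b2 : u 3 < a 3 ∧ a 2 ≤ u 2 ∧ 0 < u 1 ∧ u 1 ≤ a 1
    · obtain ⟨E3, E2, E1, Eo⟩ := ruleB_b2 a u b1 b2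
      have hle2 : u 2 ≤ 2 * a 2 := by
        rcases Nat.eq_or_lt_of_le hC1 with heq | hlt
        · exfalso; have := hC3 heq; omega
        · omega
      refine ⟨?_, by rw [E1]; omega, fun i hi => Eo i (by omega) (by omega) (by omega)⟩
      intro i hi
      rcases (by omega : i = 2 ∨ i = 3 ∨ 4 ≤ i) with rfl | rfl | h4
      · rw [E2]; omega
      · rw [E3]; omega
      · rw [Eo i (by omega) (by omega) (by omega)]; exact hA i (by omega)
    · by_cases b3 : u 3 < a 3 ∧ a 2 ≤ u 2 ∧ a 1 < u 1
      · obtain ⟨E3, E2, E1, Eo⟩ := ruleB_b3 a u b1 b2 b3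
        have hlt2 : ¬(2 * a 2 ≤ u 2) := fun hh => by have := hC4 hh; omega
        refine ⟨?_, by rw [E1]; omega, fun i hi => Eo i (by omega) (by omega) (by omega)⟩
        intro i hi
        rcases (by omega : i = 2 ∨ i = 3 ∨ 4 ≤ i) with rfl | rfl | h4
        · rw [E2]; omega
        · rw [E3]; omega
        · rw [Eo i (by omega) (by omega) (by omega)]; exact hA i (by omega)
      · by_cases b4 : u 2 < a 2 ∧ a 1 ≤ u 1
        · obtain ⟨E2, E1, Eo⟩ := ruleB_b4 a u b1 b2 b3 b4
          refine ⟨?_, by rw [E1]; omega, fun i hi => Eo i (by omega) (by omega)⟩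
          intro i hi
          rcases (by omega : i = 2 ∨ 3 ≤ i) with rfl | h3
          · rw [E2]; omega
          · rw [Eo i (by omega) (by omega)]; exact hA i (by omega)
        · have hv : ruleB a u = u := ruleB_none a u b1 b2 b3 b4
          rw [hv]
          have hu1lt : u 1 < a 1 := by
            by_contra hge
            push_neg at hge
            rcases Nat.lt_or_ge (u 2) (a 2) with h2 | h2
            · exact b4 ⟨h2, hge⟩
            · rcases Nat.lt_or_ge (u 3) (a 3) with h3 | h3
              · rcases Nat.lt_or_ge (a 1) (u 1) with hgt | hle
                · exact b3 ⟨h3, h2, hgt⟩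
                · exact b2 ⟨h3, h2, by omega, by omega⟩
              · have h3e : u 3 = a 3 := by omega
                have hm1 : u 2 ≤ a 2 := (hM 1 (by omega) (fun i hi1 hi2 => by
                  have : i = 3 := by omega
                  subst this; exact h3e)).1
                have h2e : u 2 = a 2 := by omega
                have hm0 := hM 0 (by omega) (fun i hi1 hi2 => by
                  rcases (by omega : i = 2 ∨ i = 3) with rfl | rfl
                  · exact h2e
                  · exact h3e)
                have := hm0.2 rfl
                omega
          refine ⟨?_, hu1lt, fun i _ => rfl⟩
          intro i hi
          rcases (by omega : i = 2 ∨ 3 ≤ i) with rfl | h3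
          · by_contra hgt
            push_neg at hgt
            rcases Nat.lt_or_ge (u 3) (a 3) with h3 | h3
            · rcases Nat.eq_zero_or_pos (u 1) with h0 | h0
              · exact b1 ⟨h3, hgt, h0⟩
              · exact b2 ⟨h3, by omega, h0, by omega⟩
            · have h3e : u 3 = a 3 := by omega
              have hm1 : u 2 ≤ a 2 := (hM 1 (by omega) (fun i hi1 hi2 => by
                have : i = 3 := by omega
                subst this; exact h3e)).1
              omega
          · exact hA i (by omega)

def Inv2 (a : ℕ → ℕ) (t : ℕ) (w : ℕ → ℕ) : Prop :=
  (∀ i, 2 ≤ i → w i ≤ a i) ∧ w 1 < a 1 ∧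
  (∀ i, i + 2 ≤ t → w (i+1) = a (i+1) → 0 < w i →
    w (i+2) = a (i+2) ∨ (w (i+2) + 1 = a (i+2) ∧ w (i+3) = 0))

lemma inv2_step (a u : ℕ → ℕ) (p : ℕ) (hp : 1 ≤ p)
    (ha : ∀ i, 1 ≤ i → 1 ≤ a i)
    (h : Inv2 a (p+1) u) :
    Inv2 a (p+2) (ruleC a (p+2) u) := by
  obtain ⟨hb, h1, hcl⟩ := h
  by_cases hg : u (p+2) < a (p+2) ∧ u (p+1) = a (p+1) ∧ 0 < u p
  · obtain ⟨E2, E1, E0, Eo⟩ := ruleC_g a u p hg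
    have hupos : 1 ≤ u p := hg.2.2
    refine ⟨?_, ?_, ?_⟩
    · intro i hi
      rcases (by omega : i = p+2 ∨ i = p+1 ∨ i = p ∨ (i ≠ p ∧ i ≠ p+1 ∧ i ≠ p+2))
        with rfl | rfl | rfl | ⟨n0, n1, n2⟩
      · rw [E2]; omega
      · rw [E1]; omega
      · rw [E0]
        have := hb i hi
        omega
      · rw [Eo i n0 n1 n2]; exact hb i hi
    · rcases (by omega : p = 1 ∨ 2 ≤ p) with rfl | h2
      · rw [E0]; omega
      · rw [Eo 1 (by omega) (by omega) (by omega)]; exact h1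
    · intro i hile hpre1 hpre0
      rcases (by omega : i + 4 ≤ p ∨ i + 3 = p ∨ i + 2 = p ∨ i + 1 = p ∨ i = p) with
        hc | hc | hc | hc | hc
      · rw [Eo (i+1) (by omega) (by omega) (by omega)] at hpre1
        rw [Eo i (by omega) (by omega) (by omega)] at hpre0
        rw [Eo (i+2) (by omega) (by omega) (by omega),
          Eo (i+3) (by omega) (by omega) (by omega)]
        exact hcl i (by omega) hpre1 hpre0
      · rw [Eo (i+1) (by omega) (by omega) (by omega)] at hpre1
        rw [Eo i (by omega) (by omega) (by omega)] at hpre0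
        rcases hcl i (by omega) hpre1 hpre0 with hl | hr
        · left; rw [Eo (i+2) (by omega) (by omega) (by omega)]; exact hl
        · exfalso; rw [hc] at hr; omega
      · rw [Eo (i+1) (by omega) (by omega) (by omega)] at hpre1
        rw [Eo i (by omega) (by omega) (by omega)] at hpre0
        rcases hcl i (by omega) hpre1 hpre0 with hl | hr
        · right
          constructor
          · rw [show i + 2 = p from hc, E0]
            rw [show i + 2 = p from hc] at hl
            omega
          · rw [show i + 3 = p + 1 from by omega, E1]
        · exfalso
          have hap : 1 ≤ a (p+1) := ha _ (by omega)
          rw [show i + 3 = p + 1 from by omega] at hr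
          have := hg.2.1
          omega
      · exfalso
        rw [hc] at hpre1
        rw [E0] at hpre1
        rcases (by omega : p = 1 ∨ 2 ≤ p) with rfl | h2
        · omega
        · have := hb p h2
          omega
      · exfalso
        rw [hc] at hpre1
        rw [E1] at hpre1
        have hap : 1 ≤ a (p+1) := ha _ (by omega)
        omega
  · have hv : ruleC a (p+2) u = u := ruleC_none a u p hg
    rw [hv]
    refine ⟨hb, h1, ?_⟩
    intro i hile hpre1 hpre0
    rcases (by omega : i = p ∨ i + 2 ≤ p + 1) with hip | hc
    · left
      rw [show i + 1 = p + 1 from by omega] at hpre1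
      rw [hip] at hpre0
      have hnl : ¬(u (p+2) < a (p+2)) := fun hh => hg ⟨hh, hpre1, hpre0⟩
      have hle := hb (p+2) (by omega)
      rw [show i + 2 = p + 2 from by omega]
      omega
    · exact hcl i hc hpre1 hpre0

def Inv3 (a : ℕ → ℕ) (t : ℕ) (v : ℕ → ℕ) : Prop :=
  (∀ i, 2 ≤ i → v i ≤ a i) ∧ v 1 < a 1 ∧
  (∀ i, t ≤ i + 2 → ¬(v (i+1) = a (i+1) ∧ 0 < v i)) ∧
  (∀ i, i + 3 ≤ t → v (i+1) = a (i+1) → 0 < v i →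
    v (i+2) = a (i+2) ∨ (v (i+2) + 1 = a (i+2) ∧ v (i+3) = 0))

lemma inv3_step (a u : ℕ → ℕ) (p : ℕ) (hp : 1 ≤ p)
    (ha : ∀ i, 1 ≤ i → 1 ≤ a i)
    (h : Inv3 a (p+3) u) :
    Inv3 a (p+2) (ruleC a (p+2) u) := by
  obtain ⟨hb, h1, hT2, hT3⟩ := h
  by_cases hg : u (p+2) < a (p+2) ∧ u (p+1) = a (p+1) ∧ 0 < u p
  · obtain ⟨E2, E1, E0, Eo⟩ := ruleC_g a u p hg
    have hupos : 1 ≤ u p := hg.2.2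
    refine ⟨?_, ?_, ?_, ?_⟩
    · intro i hi
      rcases (by omega : i = p+2 ∨ i = p+1 ∨ i = p ∨ (i ≠ p ∧ i ≠ p+1 ∧ i ≠ p+2))
        with rfl | rfl | rfl | ⟨n0, n1, n2⟩
      · rw [E2]; omega
      · rw [E1]; omega
      · rw [E0]
        have := hb i hi
        omega
      · rw [Eo i n0 n1 n2]; exact hb i hi
    · rcases (by omega : p = 1 ∨ 2 ≤ p) with rfl | h2
      · rw [E0]; omega
      · rw [Eo 1 (by omega) (by omega) (by omega)]; exact h1
    · intro i hile
      rintro ⟨hx, hy⟩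
      rcases (by omega : i = p ∨ i = p + 1 ∨ i = p + 2 ∨ p + 3 ≤ i) with hc | hc | hc | hc
      · rw [show i + 1 = p + 1 from by omega] at hx
        rw [E1] at hx
        have hap : 1 ≤ a (p+1) := ha _ (by omega)
        omega
      · rw [show i = p + 1 from hc] at hy
        rw [E1] at hy
        omega
      · rw [show i + 1 = p + 3 from by omega] at hx
        rw [Eo (p+3) (by omega) (by omega) (by omega)] at hx
        rcases hT3 p (by omega) hg.2.1 hg.2.2 with hl | hr
        · omega
        · have hap : 1 ≤ a (p+3) := ha _ (by omega)
          omega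
      · rw [Eo (i+1) (by omega) (by omega) (by omega)] at hx
        rw [Eo i (by omega) (by omega) (by omega)] at hy
        exact hT2 i (by omega) ⟨hx, hy⟩
    · intro i hile hpre1 hpre0
      rcases (by omega : i + 4 ≤ p ∨ i + 3 = p ∨ i + 2 = p ∨ i + 1 = p) with
        hc | hc | hc | hc
      · rw [Eo (i+1) (by omega) (by omega) (by omega)] at hpre1
        rw [Eo i (by omega) (by omega) (by omega)] at hpre0
        rw [Eo (i+2) (by omega) (by omega) (by omega),
          Eo (i+3) (by omega) (by omega) (by omega)]
        exact hT3 i (by omega) hpre1 hpre0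
      · rw [Eo (i+1) (by omega) (by omega) (by omega)] at hpre1
        rw [Eo i (by omega) (by omega) (by omega)] at hpre0
        rcases hT3 i (by omega) hpre1 hpre0 with hl | hr
        · left; rw [Eo (i+2) (by omega) (by omega) (by omega)]; exact hl
        · exfalso; rw [hc] at hr; omega
      · rw [Eo (i+1) (by omega) (by omega) (by omega)] at hpre1
        rw [Eo i (by omega) (by omega) (by omega)] at hpre0
        rcases hT3 i (by omega) hpre1 hpre0 with hl | hr
        · right
          constructor
          · rw [show i + 2 = p from hc, E0]
            rw [show i + 2 = p from hc] at hl
            omega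
          · rw [show i + 3 = p + 1 from by omega, E1]
        · exfalso
          have hap : 1 ≤ a (p+1) := ha _ (by omega)
          rw [show i + 3 = p + 1 from by omega] at hr
          have := hg.2.1
          omega
      · exfalso
        rw [hc] at hpre1
        rw [E0] at hpre1
        rcases (by omega : p = 1 ∨ 2 ≤ p) with rfl | h2
        · omega
        · have := hb p h2
          omega
  · have hv : ruleC a (p+2) u = u := ruleC_none a u p hg
    rw [hv]
    refine ⟨hb, h1, ?_, ?_⟩
    · intro i hile
      rintro ⟨hx, hy⟩
      rcases (by omega : i = p ∨ p + 3 ≤ i + 2) with hip | hc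
      · rw [show i + 1 = p + 1 from by omega] at hx
        rw [hip] at hy
        have hnl : ¬(u (p+2) < a (p+2)) := fun hh => hg ⟨hh, hx, hy⟩
        have hle := hb (p+2) (by omega)
        have he2 : u (p+2) = a (p+2) := by omega
        have hap : 1 ≤ a (p+1) := ha _ (by omega)
        exact hT2 (p+1) (by omega) ⟨he2, by omega⟩
      · exact hT2 i hc ⟨hx, hy⟩
    · intro i hile hpre1 hpre0
      exact hT3 i (by omega) hpre1 hpre0

lemma ruleA_out (a u : ℕ → ℕ) (p i : ℕ)
    (h0 : i ≠ p) (h1 : i ≠ p+1) (h2 : i ≠ p+2) (h3 : i ≠ p+3) :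
    ruleA a (p+3) u i = u i := by
  by_cases hg1 : u (p+3) < a (p+3) ∧ a (p+2) < u (p+2) ∧ u (p+1) = 0
  · exact (ruleA_g1 a u p hg1).2.2.2.2 i h0 h1 h2 h3
  · by_cases hg2 : u (p+3) < a (p+3) ∧ a (p+2) ≤ u (p+2) ∧ u (p+2) ≤ 2 * a (p+2) ∧ 0 < u (p+1)
    · exact (ruleA_g2 a u p hg1 hg2).2.2.2 i h1 h2 h3
    · rw [ruleA_none a u p hg1 hg2]

lemma ruleC_out (a u : ℕ → ℕ) (p i : ℕ)
    (h0 : i ≠ p) (h1 : i ≠ p+1) (h2 : i ≠ p+2) :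
    ruleC a (p+2) u i = u i := by
  by_cases hg : u (p+2) < a (p+2) ∧ u (p+1) = a (p+1) ∧ 0 < u p
  · exact (ruleC_g a u p hg).2.2.2 i h0 h1 h2
  · rw [ruleC_none a u p hg]

lemma sum_ruleAp3 (a q z : ℕ → ℕ) (M p : ℕ) (hp : 1 ≤ p) (hM : p + 3 ≤ M)
    (hrec : ∀ r, q (r+2) = a (r+2) * q (r+1) + q r)
    (ha : ∀ i, 1 ≤ i → 1 ≤ a i) :
    ∑ i ∈ Finset.range M, ruleA a (p+3) z (i+1) * q i
      = ∑ i ∈ Finset.range M, z (i+1) * q i := by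
  obtain ⟨r, rfl⟩ : ∃ r, p = r + 1 := ⟨p - 1, by omega⟩
  exact sum_ruleA a q z M r (by omega) (hrec (r+1)) (hrec r) (ha (r+2) (by omega))

lemma sum_ruleCp2 (a q z : ℕ → ℕ) (M p : ℕ) (hp : 1 ≤ p) (hM : p + 2 ≤ M)
    (hrec : ∀ r, q (r+2) = a (r+2) * q (r+1) + q r) :
    ∑ i ∈ Finset.range M, ruleC a (p+2) z (i+1) * q i
      = ∑ i ∈ Finset.range M, z (i+1) * q i := by
  obtain ⟨r, rfl⟩ : ∃ r, p = r + 1 := ⟨p - 1, by omega⟩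
  exact sum_ruleC a q z M r (by omega) (hrec r)

lemma inv1_base (a s : ℕ → ℕ) (m : ℕ)
    (ha : ∀ i, 1 ≤ i → 1 ≤ a i)
    (hsle : ∀ i, 2 ≤ i → s i ≤ 2 * a i)
    (hsmax : ∀ i, 2 ≤ i → 2 * a i ≤ s i + 1 → s (i-1) ≤ a (i-1))
    (hstop : ∀ i, m + 4 ≤ i → s i = 0) :
    Inv1 a s (m+2) s := by
  have e1 : m+2+1 = m+3 := by omega
  have e2 : m+2+2 = m+4 := by omega
  refine ⟨?_, fun i _ => rfl, ?_, ?_, ?_, by omega, ?_⟩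
  · intro i hi
    rw [hstop i (by omega)]
    exact Nat.zero_le _
  · have h := hsle (m+3) (by omega)
    rw [e1]; omega
  · have h := hsle (m+3) (by omega)
    rw [e1]; intro hh; omega
  · rw [e1]
    intro hh
    exact hsmax (m+3) (by omega) (by omega)
  · intro t ht hrun
    exfalso
    have h := hrun (m+2+2) (by omega) (le_refl _)
    rw [e2] at h
    rw [hstop (m+4) (by omega)] at h
    have := ha (m+4) (by omega)
    omega

end TP

/-- (Corollary 2.8 of the paper.) The three-pass algorithm
correctly computes Ostrowski addition: if `x` and `y` are the Ostrowski
representations of `M` and `N` based on `a` (with digits supported on positions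
`1, …, n`, `m = n + 1`), then the word `v₃` produced by applying Algorithms 1, 2
and 3 to the digit-wise sum of `x` and `y` is the Ostrowski representation of
`M + N`. -/
theorem three_pass_ostrowski_addition
    (a q : ℕ → ℕ)
    (ha : ∀ k, 1 ≤ a (k + 1))
    (hq0 : q 0 = 1) (hq1 : q 1 = a 1)
    (hq : ∀ k, q (k + 2) = a (k + 2) * q (k + 1) + q k)
    (n : ℕ) (hn : 3 ≤ n)
    (x y : ℕ → ℕ) (M N : ℕ)
    -- `x` is the Ostrowski representation of `M`
    (hx1 : x 1 < a 1) (hxb : ∀ k, x (k + 1) ≤ a (k + 1))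
    (hxc : ∀ k, x (k + 2) = a (k + 2) → x (k + 1) = 0)
    (hxn : ∀ k, n < k → x k = 0)
    (hM : M = ∑ k ∈ Finset.range n, x (k + 1) * q k)
    -- `y` is the Ostrowski representation of `N`
    (hy1 : y 1 < a 1) (hyb : ∀ k, y (k + 1) ≤ a (k + 1))
    (hyc : ∀ k, y (k + 2) = a (k + 2) → y (k + 1) = 0)
    (hyn : ∀ k, n < k → y k = 0)
    (hN : N = ∑ k ∈ Finset.range n, y (k + 1) * q k)
    -- `s` is the digit-wise sum of `x` and `y`, with leading digit `s (n+1) = 0`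
    (s : ℕ → ℕ) (hs : ∀ i, s i = x i + y i)
    -- Algorithm 1 (left-to-right, rules (A1)-(A3), then (B1)-(B5) at the last step)
    (Z : ℕ → ℕ → ℕ)
    (hZtop : Z (n + 2) = s)
    (hZA : ∀ k, 4 ≤ k → k ≤ n + 1 → Z k = ruleA a k (Z (k + 1)))
    (hZB : Z 3 = ruleB a (Z 4))
    -- Algorithm 2 (right-to-left) applied to the output of Algorithm 1
    (W : ℕ → ℕ → ℕ)
    (hW2 : W 2 = Z 3)
    (hWs : ∀ k, 3 ≤ k → k ≤ n + 2 → W k = ruleC a k (W (k - 1)))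
    -- Algorithm 3 (left-to-right) applied to the output of Algorithm 2
    (V : ℕ → ℕ → ℕ)
    (hVtop : V (n + 4) = W (n + 2))
    (hVs : ∀ k, 3 ≤ k → k ≤ n + 3 → V k = ruleC a k (V (k + 1))) :
    -- the output `v₃` is the Ostrowski representation of `M + N`
    (∑ k ∈ Finset.range (n + 3), V 3 (k + 1) * q k = M + N) ∧
    V 3 1 < a 1 ∧
    (∀ k, V 3 (k + 1) ≤ a (k + 1)) ∧
    (∀ k, V 3 (k + 2) = a (k + 2) → V 3 (k + 1) = 0) := by
  obtain ⟨m, rfl⟩ : ∃ m, n = m + 3 := ⟨n - 3, by omega⟩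
  -- basic facts
  have ha' : ∀ i, 1 ≤ i → 1 ≤ a i := by
    intro i hi
    obtain ⟨j, rfl⟩ : ∃ j, i = j + 1 := ⟨i - 1, by omega⟩
    exact ha j
  have hrec : ∀ r, q (r + 2) = a (r + 2) * q (r + 1) + q r := hq
  have hsle : ∀ i, 2 ≤ i → s i ≤ 2 * a i := by
    intro i hi
    obtain ⟨j, rfl⟩ : ∃ j, i = j + 1 := ⟨i - 1, by omega⟩
    have h1 := hxb j
    have h2 := hyb j
    rw [hs]
    omega
  have hsmax : ∀ i, 2 ≤ i → 2 * a i ≤ s i + 1 → s (i - 1) ≤ a (i - 1) := by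
    intro i hi hge
    obtain ⟨j, rfl⟩ : ∃ j, i = j + 2 := ⟨i - 2, by omega⟩
    have hx2 : x (j + 2) ≤ a (j + 2) := hxb (j + 1)
    have hy2 : y (j + 2) ≤ a (j + 2) := hyb (j + 1)
    have hx1' : x (j + 1) ≤ a (j + 1) := hxb j
    have hy1' : y (j + 1) ≤ a (j + 1) := hyb j
    rw [hs] at hge
    have e : j + 2 - 1 = j + 1 := by omega
    rw [e, hs]
    have hone : x (j + 2) = a (j + 2) ∨ y (j + 2) = a (j + 2) := by omega
    rcases hone with hx | hy
    · have h0 := hxc j hx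
      omega
    · have h0 := hyc j hy
      omega
  have hs2max : ∀ i, 2 ≤ i → s i = 2 * a i → s (i - 1) = 0 := by
    intro i hi hge
    obtain ⟨j, rfl⟩ : ∃ j, i = j + 2 := ⟨i - 2, by omega⟩
    have hx2 : x (j + 2) ≤ a (j + 2) := hxb (j + 1)
    have hy2 : y (j + 2) ≤ a (j + 2) := hyb (j + 1)
    rw [hs] at hge
    have hxe : x (j + 2) = a (j + 2) := by omega
    have hye : y (j + 2) = a (j + 2) := by omega
    have h0 := hxc j hxe
    have h1 := hyc j hye
    have e : j + 2 - 1 = j + 1 := by omega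
    rw [e, hs]
    omega
  have hs1b : s 1 + 2 ≤ 2 * a 1 := by
    rw [hs]
    omega
  have hstop : ∀ i, m + 4 ≤ i → s i = 0 := by
    intro i hi
    rw [hs, hxn i (by omega), hyn i (by omega)]
  -- ===== Pass 1 =====
  have pass1 : ∀ p, 1 ≤ p → p ≤ m + 2 →
      (TP.Inv1 a s p (Z (p+3)) ∧ (∀ i, m + 5 ≤ i → Z (p+3) i = 0) ∧
        (∑ i ∈ Finset.range (m+6), Z (p+3) (i+1) * q i
          = ∑ i ∈ Finset.range (m+6), s (i+1) * q i)) := by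
    refine TP.down_ind 1 (m+2) _ ?_ ?_
    · -- base
      have hz : Z (m+2+3) = s := by
        rw [show m+2+3 = m+3+2 from by omega]
        exact hZtop
      rw [hz]
      exact ⟨TP.inv1_base a s m ha' hsle hsmax hstop,
        fun i hi => hstop i (by omega), rfl⟩
    · -- step
      intro p hp hpm ih
      have hz : Z (p+3) = ruleA a (p+3) (Z (p+4)) := by
        have h := hZA (p+3) (by omega) (by omega)
        rwa [show p+3+1 = p+4 from by omega] at h
      have ih1 : TP.Inv1 a s (p+1) (Z (p+4)) := ih.1
      have ihz : ∀ i, m + 5 ≤ i → Z (p+4) i = 0 := ih.2.1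
      have ihs : ∑ i ∈ Finset.range (m+6), Z (p+4) (i+1) * q i
          = ∑ i ∈ Finset.range (m+6), s (i+1) * q i := ih.2.2
      rw [hz]
      refine ⟨TP.inv1_step a s (Z (p+4)) p hp ha' hsle hsmax hs2max ih1, ?_, ?_⟩
      · intro i hi
        rw [TP.ruleA_out a (Z (p+4)) p i (by omega) (by omega) (by omega) (by omega)]
        exact ihz i hi
      · rw [TP.sum_ruleAp3 a q (Z (p+4)) (m+6) p hp (by omega) hrec ha']
        exact ihs
  have h4 := pass1 1 (le_refl _) (by omega)
  have h4inv : TP.Inv1 a s 1 (Z 4) := h4.1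
  have h4z : ∀ i, m + 5 ≤ i → Z 4 i = 0 := h4.2.1
  have h4s : ∑ i ∈ Finset.range (m+6), Z 4 (i+1) * q i
      = ∑ i ∈ Finset.range (m+6), s (i+1) * q i := h4.2.2
  -- the (B) step
  have hBout := TP.inv1_final a s (Z 4) ha' hs1b h4inv
  have hZ3b : ∀ i, 2 ≤ i → Z 3 i ≤ a i := by
    rw [hZB]; exact hBout.1
  have hZ31 : Z 3 1 < a 1 := by
    rw [hZB]; exact hBout.2.1
  have hZ3z : ∀ i, m + 5 ≤ i → Z 3 i = 0 := by
    intro i hi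
    rw [hZB, hBout.2.2 i (by omega)]
    exact h4z i hi
  have hZ3s : ∑ i ∈ Finset.range (m+6), Z 3 (i+1) * q i
      = ∑ i ∈ Finset.range (m+6), s (i+1) * q i := by
    rw [hZB, TP.sum_ruleB a q (Z 4) (m+6) (by omega) hq0 hq1 (hq 0) (ha 0)]
    exact h4s
  -- ===== Pass 2 =====
  have pass2 : ∀ k, 2 ≤ k → k ≤ m + 5 →
      (TP.Inv2 a k (W k) ∧ (∀ i, k + 1 ≤ i → W k i = Z 3 i) ∧
        (∑ i ∈ Finset.range (m+6), W k (i+1) * q i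
          = ∑ i ∈ Finset.range (m+6), s (i+1) * q i)) := by
    refine TP.up_ind 2 (m+5) _ ?_ ?_
    · rw [hW2]
      refine ⟨⟨hZ3b, hZ31, ?_⟩, fun i _ => rfl, hZ3s⟩
      intro i hi hp1 hp0
      exfalso
      have : i = 0 := by omega
      subst this
      simp only [show (0:ℕ)+1 = 1 from rfl] at hp1
      omega
    · intro k hk2 hkm ih
      have hw : W (k+1) = ruleC a (k+1) (W k) := by
        have h := hWs (k+1) (by omega) (by omega)
        rwa [show k+1-1 = k from by omega] at h
      obtain ⟨r, rfl⟩ : ∃ r, k = r + 1 := ⟨k - 1, by omega⟩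
      have hw' : W (r+2) = ruleC a (r+2) (W (r+1)) := hw
      have ih1 : TP.Inv2 a (r+1) (W (r+1)) := ih.1
      have ihz : ∀ i, r + 2 ≤ i → W (r+1) i = Z 3 i := ih.2.1
      have ihs : ∑ i ∈ Finset.range (m+6), W (r+1) (i+1) * q i
          = ∑ i ∈ Finset.range (m+6), s (i+1) * q i := ih.2.2
      have goal1 : TP.Inv2 a (r+2) (W (r+2)) := by
        rw [hw']
        exact TP.inv2_step a (W (r+1)) r (by omega) ha' ih1
      refine ⟨goal1, ?_, ?_⟩
      · intro i hi
        rw [hw', TP.ruleC_out a (W (r+1)) r i (by omega) (by omega) (by omega)]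
        exact ihz i (by omega)
      · rw [hw', TP.sum_ruleCp2 a q (W (r+1)) (m+6) r (by omega) (by omega) hrec]
        exact ihs
  have hW5 := pass2 (m+5) (by omega) (le_refl _)
  have hW4 := pass2 (m+4) (by omega) (by omega)
  have hW5inv : TP.Inv2 a (m+5) (W (m+5)) := hW5.1
  have hW5z : ∀ i, m + 6 ≤ i → W (m+5) i = Z 3 i := hW5.2.1
  have hW5s : ∑ i ∈ Finset.range (m+6), W (m+5) (i+1) * q i
      = ∑ i ∈ Finset.range (m+6), s (i+1) * q i := hW5.2.2
  have hW4z : ∀ i, m + 5 ≤ i → W (m+4) i = Z 3 i := hW4.2.1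
  have hlast : W (m+5) = ruleC a (m+5) (W (m+4)) := by
    have h := hWs (m+5) (by omega) (by omega)
    rwa [show m+5-1 = m+4 from by omega] at h
  have factii : ¬(W (m+5) (m+5) = a (m+5) ∧ 0 < W (m+5) (m+4)) := by
    by_cases hg : W (m+4) (m+5) < a (m+5) ∧ W (m+4) (m+4) = a (m+4) ∧ 0 < W (m+4) (m+3)
    · have E := TP.ruleC_g a (W (m+4)) (m+3) hg
      have e1 : W (m+5) (m+4) = 0 := by
        rw [hlast]
        exact E.2.1
      rintro ⟨_, h0⟩
      omega
    · have hnone : ruleC a (m+5) (W (m+4)) = W (m+4) := TP.ruleC_none a (W (m+4)) (m+3) hg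
      have e : W (m+5) (m+5) = W (m+4) (m+5) := by rw [hlast, hnone]
      have ez : W (m+4) (m+5) = Z 3 (m+5) := hW4z (m+5) (by omega)
      have ez0 : Z 3 (m+5) = 0 := hZ3z (m+5) (by omega)
      rintro ⟨h1, _⟩
      have := ha' (m+5) (by omega)
      omega
  -- ===== Pass 3 =====
  have pass3 : ∀ k, 3 ≤ k → k ≤ m + 7 →
      (TP.Inv3 a k (V k) ∧
        (∑ i ∈ Finset.range (m+6), V k (i+1) * q i
          = ∑ i ∈ Finset.range (m+6), s (i+1) * q i)) := by
    refine TP.down_ind 3 (m+7) _ ?_ ?_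
    · -- base
      have hv : V (m+7) = W (m+5) := by
        rw [show m+7 = m+3+4 from by omega, show m+5 = m+3+2 from by omega]
        exact hVtop
      rw [hv]
      obtain ⟨hb2, h12, hcl2⟩ := hW5inv
      refine ⟨⟨hb2, h12, ?_, ?_⟩, hW5s⟩
      · intro i hi
        rintro ⟨hx', _⟩
        have hz : W (m+5) (i+1) = 0 := by
          rw [hW5z (i+1) (by omega), hZ3z (i+1) (by omega)]
        have := ha' (i+1) (by omega)
        omega
      · intro i hi hp1 hp0
        rcases (by omega : i + 2 ≤ m + 5 ∨ i = m + 4) with hc | hc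
        · exact hcl2 i hc hp1 hp0
        · exfalso
          rw [show i + 1 = m + 5 from by omega] at hp1
          rw [hc] at hp0
          exact factii ⟨hp1, hp0⟩
    · -- step
      intro k hk3 hk7 ih
      have hv : V k = ruleC a k (V (k+1)) := hVs k (by omega) (by omega)
      obtain ⟨r, rfl⟩ : ∃ r, k = r + 2 := ⟨k - 2, by omega⟩
      have hv' : V (r+2) = ruleC a (r+2) (V (r+3)) := hv
      have ih1 : TP.Inv3 a (r+3) (V (r+3)) := ih.1
      have ihs : ∑ i ∈ Finset.range (m+6), V (r+3) (i+1) * q i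
          = ∑ i ∈ Finset.range (m+6), s (i+1) * q i := ih.2
      constructor
      · rw [hv']
        exact TP.inv3_step a (V (r+3)) r (by omega) ha' ih1
      · rw [hv', TP.sum_ruleCp2 a q (V (r+3)) (m+6) r (by omega) (by omega) hrec]
        exact ihs
  have hfin := pass3 3 (le_refl _) (by omega)
  obtain ⟨⟨hb, h1, hT2, _⟩, hsum3⟩ := hfin
  -- ===== final conclusions =====
  have hx6 : ∑ i ∈ Finset.range (m+6), x (i+1) * q i
      = ∑ i ∈ Finset.range (m+3), x (i+1) * q i := by
    symm
    apply Finset.sum_subset (Finset.range_subset_range.2 (by omega))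
    intro i hi hni
    simp only [Finset.mem_range] at hi hni
    rw [hxn (i+1) (by omega), zero_mul]
  have hy6 : ∑ i ∈ Finset.range (m+6), y (i+1) * q i
      = ∑ i ∈ Finset.range (m+3), y (i+1) * q i := by
    symm
    apply Finset.sum_subset (Finset.range_subset_range.2 (by omega))
    intro i hi hni
    simp only [Finset.mem_range] at hi hni
    rw [hyn (i+1) (by omega), zero_mul]
  have hsplit : ∑ i ∈ Finset.range (m+6), s (i+1) * q i
      = (∑ i ∈ Finset.range (m+6), x (i+1) * q i)
        + ∑ i ∈ Finset.range (m+6), y (i+1) * q i := by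
    rw [← Finset.sum_add_distrib]
    exact Finset.sum_congr rfl fun i _ => by rw [hs]; ring
  refine ⟨?_, h1, ?_, ?_⟩
  · rw [show m+3+3 = m+6 from by omega, hsum3, hsplit, hx6, hy6, ← hM, ← hN]
  · intro k
    rcases Nat.eq_zero_or_pos k with rfl | hk
    · exact le_of_lt h1
    · exact hb (k+1) (by omega)
  · intro k hk
    have hT := hT2 (k+1) (by omega)
    by_contra h0
    exact hT ⟨hk, by omega⟩
end

section
/- For a quadratic irrational a, the set of triples of Ostrowski representations \{ \rho_a(x) * \rho_a(y) * \rho_a(z) : x + y = z \} (with zero-padding to equal length) is recognizable by a finite automaton over the alphabet \Sigma_a^3. -/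
/-- `l` is a (possibly zero-padded) Ostrowski digit string based on the continued
fraction digits `a`, written least-significant digit first: the digit at index `i`
is the coefficient `b_{i+1}` of `q_i`. -/
def OstValid (a : ℕ → ℕ) (l : List ℕ) : Prop :=
  l.getD 0 0 < a 1 ∧
  (∀ i, l.getD i 0 ≤ a (i + 1)) ∧
  ∀ i, l.getD (i + 1) 0 = a (i + 2) → l.getD i 0 = 0

/-- The value represented by an Ostrowski digit string (least-significant first). -/
def OstVal (q : ℕ → ℕ) (l : List ℕ) : ℕ :=
  ∑ i ∈ Finset.range l.length, l.getD i 0 * q i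

/-!
Words are read least significant digit first, and by the Myhill–Nerode theorem it suffices that
every language involved has finitely many left quotients. The Ostrowski digit conditions are
local, so the quotient by a prefix `x` only depends on whether `x` is admissible, on whether its
last digit is `0`, and on the shifted partial quotients `(a (|x| + j + 1))ⱼ`; there are finitely
many of those because `a` is eventually periodic.

For addition put `d = z - x - y` digitwise, so that the condition is `∑ dᵢ qᵢ = 0` with
`|dᵢ| ≤ D`. Folding the recurrence `q_{k+1} = a_{k+1} q_k + q_{k-1}` down from the top digit
writes the contribution of a suffix starting at position `n` as `r q_n + s q_{n-1}` with a carry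
`(r, s)`. If the whole sum vanishes, the prefix sums are at most `2D q_n` in absolute value, and
since `q_{n+2} ≥ 2 q_n` a two-step estimate bounds every carry by `8D`. Hence the quotient by `x`
is determined by the shifted partial quotients together with the finite set of bounded carries
`(r, s)` that satisfy `r q_n + s q_{n-1} = -∑_{i<n} dᵢ qᵢ`.
-/

open Set

namespace Language

variable {α β : Type*}

theorem isRegular_of_leftQuotient_eq_comp {γ : Type*} {L : Language α} (sig : List α → γ)
    (F : γ → Language α) (hsig : (range sig).Finite) (hL : ∀ x, L.leftQuotient x = F (sig x)) :
    L.IsRegular :=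
  .of_finite_range_leftQuotient <| (hsig.image F).subset <| by
    rintro _ ⟨x, rfl⟩
    exact ⟨sig x, ⟨x, rfl⟩, (hL x).symm⟩

theorem IsRegular.preimage_map {L : Language β} (h : L.IsRegular) (f : α → β) :
    IsRegular (List.map f ⁻¹' L) :=
  have ⟨σ, _, M, hM⟩ := h
  ⟨σ, inferInstance, M.comap f, by rw [DFA.accepts_comap, hM]⟩

end Language

theorem Set.finite_range_of_eventually_periodic {γ : Type*} {f : ℕ → γ} {p K : ℕ} (hp : 0 < p)
    (hper : ∀ k, K ≤ k → f (k + p) = f k) : (range f).Finite := by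
  refine ((finite_Iio (K + p)).image f).subset ?_
  rintro _ ⟨n, rfl⟩
  rcases lt_or_ge n K with hn | hn
  · exact ⟨n, by simp only [mem_Iio]; omega, rfl⟩
  · have hf : Function.Periodic (fun m => f (K + m)) p := fun m => by
      simpa only [add_assoc] using hper (K + m) (by omega)
    refine ⟨K + (n - K) % p, by simp only [mem_Iio]; have := Nat.mod_lt (n - K) hp; omega, ?_⟩
    simpa [Nat.add_sub_cancel' hn] using hf.map_mod_nat (n - K)

theorem Set.finite_range_shift {γ : Type*} {f : ℕ → γ} {p K : ℕ} (hp : 0 < p)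
    (hper : ∀ k, K ≤ k → f (k + p) = f k) : (range fun n j => f (n + j)).Finite :=
  finite_range_of_eventually_periodic (K := K) hp fun k hk => funext fun j => by
    rw [Nat.add_right_comm]; exact hper (k + j) (by omega)

theorem eventually_periodic_succ {γ : Type*} {f : ℕ → γ} {p K : ℕ}
    (hper : ∀ k, K ≤ k → f (k + p) = f k) (k : ℕ) (hk : K ≤ k) : f (k + p + 1) = f (k + 1) := by
  rw [Nat.add_right_comm]; exact hper (k + 1) (by omega)

/-- `z` records whether the digit just below `l` is `0`. -/
def OstValidFrom : (ℕ → ℕ) → Bool → List ℕ → Prop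
  | _, _, [] => True
  | b, z, d :: l => d ≤ b 0 ∧ (d = b 0 → z = true) ∧ OstValidFrom (fun j => b (j + 1)) (d == 0) l

theorem ostValidFrom_iff_getD {b : ℕ → ℕ} (hb : ∀ j, 0 < b j) (z : Bool) (l : List ℕ) :
    OstValidFrom b z l ↔ (∀ i, l.getD i 0 ≤ b i) ∧ (l.getD 0 0 = b 0 → z = true) ∧
      ∀ i, l.getD (i + 1) 0 = b (i + 1) → l.getD i 0 = 0 := by
  induction l generalizing b z with
  | nil => simp [OstValidFrom, (hb 0).ne]
  | cons d l ih =>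
    rw [OstValidFrom, ih (fun j => hb (j + 1))]
    simp only [List.getD_cons_zero, List.getD_cons_succ, beq_iff_eq]
    constructor
    · rintro ⟨hd, hz, hl, hl0, hls⟩
      refine ⟨fun i => ?_, hz, fun i => ?_⟩
      · cases i with
        | zero => exact hd
        | succ i => exact hl i
      · cases i with
        | zero => exact hl0
        | succ i => exact hls i
    · rintro ⟨hle, hz, hzero⟩
      exact ⟨hle 0, hz, fun i => hle (i + 1), hzero 0, fun i => hzero (i + 1)⟩

theorem ostValid_iff_ostValidFrom {a : ℕ → ℕ} (ha : ∀ k, 1 ≤ a (k + 1)) (l : List ℕ) :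
    OstValid a l ↔ OstValidFrom (fun j => a (j + 1)) false l := by
  rw [ostValidFrom_iff_getD (fun j => ha j), OstValid, lt_iff_le_and_ne]
  simp only [Bool.false_eq_true, imp_false]
  constructor
  · rintro ⟨⟨-, h0⟩, hle, hzero⟩
    exact ⟨hle, h0, hzero⟩
  · rintro ⟨hle, h0, hzero⟩
    exact ⟨⟨hle 0, h0⟩, hle, hzero⟩

theorem ostValidFrom_append (b : ℕ → ℕ) (z : Bool) (u v : List ℕ) :
    OstValidFrom b z (u ++ v) ↔ OstValidFrom b z u ∧
      OstValidFrom (fun j => b (u.length + j)) (u.foldl (fun _ d => d == 0) z) v := by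
  induction u generalizing b z with
  | nil => simp [OstValidFrom]
  | cons d u ih =>
    simp only [List.cons_append, OstValidFrom, ih, List.foldl_cons, List.length_cons,
      Nat.add_right_comm _ 1, and_assoc]

theorem isRegular_setOf_ostValidFrom {b : ℕ → ℕ} {p K : ℕ} (hp : 0 < p)
    (hper : ∀ k, K ≤ k → b (k + p) = b k) (z : Bool) :
    Language.IsRegular {l | OstValidFrom b z l} := by
  refine Language.isRegular_of_leftQuotient_eq_comp
    (fun x => (OstValidFrom b z x, fun j => b (x.length + j), x.foldl (fun _ d => d == 0) z))
    (fun s => {y | s.1 ∧ OstValidFrom s.2.1 s.2.2 y}) ?_ fun x => ?_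
  · refine (finite_univ.prod ((finite_range_shift hp hper).prod finite_univ)).subset ?_
    rintro _ ⟨x, rfl⟩
    exact ⟨trivial, ⟨x.length, rfl⟩, trivial⟩
  · ext y
    exact ostValidFrom_append b z x y

section WeightedSum

variable {α : Type*}

def weightedSum (d : α → ℤ) : (ℕ → ℤ) → List α → ℤ
  | _, [] => 0
  | W, x :: w => d x * W 0 + weightedSum d (fun j => W (j + 1)) w

theorem weightedSum_append (d : α → ℤ) (W : ℕ → ℤ) (u v : List α) :
    weightedSum d W (u ++ v) = weightedSum d W u + weightedSum d (fun j => W (u.length + j)) v := by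
  induction u generalizing W with
  | nil => simp [weightedSum]
  | cons x u ih =>
    simp only [List.cons_append, weightedSum, ih, List.length_cons, Nat.add_right_comm _ 1]
    ring

theorem weightedSum_sub (d₁ d₂ : α → ℤ) (W : ℕ → ℤ) (w : List α) :
    weightedSum (fun x => d₁ x - d₂ x) W w = weightedSum d₁ W w - weightedSum d₂ W w := by
  induction w generalizing W with
  | nil => simp [weightedSum]
  | cons x w ih => simp only [weightedSum, ih]; ring

def carry (d : α → ℤ) : (ℕ → ℕ) → List α → ℤ × ℤ
  | _, [] => (0, 0)
  | b, x :: w =>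
    let c := carry d (fun j => b (j + 1)) w
    (d x + b 0 * c.1 + c.2, c.1)

theorem weightedSum_eq_carry (d : α → ℤ) {b : ℕ → ℕ} {W : ℕ → ℤ}
    (hW : ∀ j, W (j + 2) = b j * W (j + 1) + W j) (w : List α) :
    weightedSum d (fun j => W (j + 1)) w = (carry d b w).1 * W 1 + (carry d b w).2 * W 0 := by
  induction w generalizing b W with
  | nil => simp [weightedSum, carry]
  | cons x w ih =>
    have hw : weightedSum d (fun j => W (j + 1 + 1)) w =
        (carry d (fun j => b (j + 1)) w).1 * W 2 + (carry d (fun j => b (j + 1)) w).2 * W 1 :=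
      ih (b := fun j => b (j + 1)) (W := fun j => W (j + 1)) fun j => hW (j + 1)
    have h2 : W 2 = b 0 * W 1 + W 0 := hW 0
    simp only [weightedSum, carry, zero_add, hw, h2]
    ring

-- `r`, `r'`, `s'` are the carries at three consecutive positions: since `W₂ ≥ 2 W₀`, the bound
-- on `s'` reaches `r` halved, which leaves room for the error terms `S` and `S'`.
theorem abs_le_of_carry_step {D S S' r r' s' W₀ W₁ W₂ : ℤ} (hW₀ : 0 ≤ W₀) (hW₀₁ : W₀ ≤ W₁)
    (hW₁ : 0 < W₁) (hW₁₂ : W₁ ≤ W₂) (hW₀₂ : 2 * W₀ ≤ W₂)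
    (hS : |S| ≤ 2 * D * W₁) (hS' : |S'| ≤ 2 * D * W₂) (hs' : |s'| ≤ 8 * D)
    (e : S + r * W₁ + r' * W₀ = 0) (e' : S' + r' * W₂ + s' * W₁ = 0) : |r| ≤ 8 * D := by
  have hW₂ : 0 < W₂ := hW₁.trans_le hW₁₂
  have hD : 0 ≤ D := by nlinarith [abs_nonneg S]
  have h₁ : |r| * W₁ ≤ 2 * D * W₁ + |r'| * W₀ :=
    calc |r| * W₁ = |r * W₁| := by rw [abs_mul, abs_of_pos hW₁]
      _ = |S + r' * W₀| := by rw [show r * W₁ = -(S + r' * W₀) by linarith, abs_neg]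
      _ ≤ |S| + |r' * W₀| := abs_add_le _ _
      _ = |S| + |r'| * W₀ := by rw [abs_mul, abs_of_nonneg hW₀]
      _ ≤ 2 * D * W₁ + |r'| * W₀ := by linarith
  have h₂ : |r'| * W₂ ≤ 2 * D * W₂ + 8 * D * W₁ :=
    calc |r'| * W₂ = |r' * W₂| := by rw [abs_mul, abs_of_pos hW₂]
      _ = |S' + s' * W₁| := by rw [show r' * W₂ = -(S' + s' * W₁) by linarith, abs_neg]
      _ ≤ |S'| + |s' * W₁| := abs_add_le _ _
      _ = |S'| + |s'| * W₁ := by rw [abs_mul, abs_of_pos hW₁]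
      _ ≤ 2 * D * W₂ + 8 * D * W₁ := by gcongr
  have : |r| * (W₁ * W₂) ≤ 8 * D * (W₁ * W₂) := by
    nlinarith [mul_le_mul_of_nonneg_right h₁ hW₂.le, mul_le_mul_of_nonneg_right h₂ hW₀,
      mul_le_mul_of_nonneg_left hW₀₁ (by positivity : 0 ≤ 2 * D * W₂),
      mul_le_mul_of_nonneg_left hW₀₂ (by positivity : 0 ≤ 4 * D * W₁)]
  exact le_of_mul_le_mul_right this (mul_pos hW₁ hW₂)

-- `W j` plays the role of `q_{j-1}` for the partial quotients `a_{j+1} = b j`.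
structure IsContinuant (b : ℕ → ℕ) (W : ℕ → ℤ) : Prop where
  one_le : ∀ j, 1 ≤ b j
  nonneg_zero : 0 ≤ W 0
  zero_le_one : W 0 ≤ W 1
  pos_one : 0 < W 1
  recurrence : ∀ j, W (j + 2) = b j * W (j + 1) + W j

namespace IsContinuant

variable {b : ℕ → ℕ} {W : ℕ → ℤ} {d : α → ℤ} {D : ℕ}

theorem add_le (h : IsContinuant b W) : W 1 + W 0 ≤ W 2 := by
  have := h.one_le 0
  rw [h.recurrence 0]
  nlinarith [h.pos_one]

theorem tail (h : IsContinuant b W) : IsContinuant (fun j => b (j + 1)) (fun j => W (j + 1)) where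
  one_le j := h.one_le (j + 1)
  nonneg_zero := h.pos_one.le
  zero_le_one := show W 1 ≤ W 2 by linarith [h.add_le, h.nonneg_zero]
  pos_one := show 0 < W 2 by linarith [h.add_le, h.nonneg_zero, h.pos_one]
  recurrence j := h.recurrence (j + 1)

theorem drop (h : IsContinuant b W) (n : ℕ) :
    IsContinuant (fun j => b (n + j)) (fun j => W (n + j)) := by
  induction n with
  | zero => simpa using h
  | succ n ih => simpa only [Nat.add_right_comm _ 1, add_assoc] using ih.tail

theorem abs_add_mul_le (h : IsContinuant b W) {S e : ℤ} (hS : |S| ≤ D * (W 1 + W 0))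
    (he : |e| ≤ D) : |S + e * W 1| ≤ D * (W 2 + W 1) :=
  calc |S + e * W 1| ≤ |S| + |e| * W 1 :=
        (abs_add_le _ _).trans_eq (by rw [abs_mul, abs_of_pos h.pos_one])
    _ ≤ D * (W 1 + W 0) + D * W 1 := by gcongr; exact h.pos_one.le
    _ ≤ D * (W 2 + W 1) := by nlinarith [h.add_le, (Nat.cast_nonneg D : (0 : ℤ) ≤ D)]

theorem abs_add_weightedSum_le (h : IsContinuant b W) (hd : ∀ x, |d x| ≤ D) (w : List α) {S : ℤ}
    (hS : |S| ≤ D * (W 1 + W 0)) :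
    |S + weightedSum d (fun j => W (j + 1)) w| ≤ D * (W (w.length + 1) + W w.length) := by
  induction w generalizing b W S with
  | nil => simpa [weightedSum] using hS
  | cons x w ih =>
    rw [weightedSum, ← add_assoc]
    exact ih h.tail (h.abs_add_mul_le hS (hd x))

theorem abs_carry_le (h : IsContinuant b W) (hd : ∀ x, |d x| ≤ D) (w : List α) {S : ℤ}
    (hS : |S| ≤ D * (W 1 + W 0)) (hsum : S + weightedSum d (fun j => W (j + 1)) w = 0) :
    |(carry d b w).1| ≤ 8 * D ∧ |(carry d b w).2| ≤ 8 * D := by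
  induction w generalizing b W S with
  | nil => simp [carry]
  | cons x w ih =>
    have hS' := h.abs_add_mul_le hS (hd x)
    have hsum' : S + d x * W 1 + weightedSum d (fun j => W (j + 1 + 1)) w = 0 := by
      rwa [weightedSum, ← add_assoc] at hsum
    obtain ⟨hr', hs'⟩ := ih h.tail hS' hsum'
    have e : S + (carry d b (x :: w)).1 * W 1 + (carry d (fun j => b (j + 1)) w).1 * W 0 = 0 := by
      rw [← hsum, add_assoc, weightedSum_eq_carry d h.recurrence]; rfl
    have e' : S + d x * W 1 + (carry d (fun j => b (j + 1)) w).1 * W 2 +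
        (carry d (fun j => b (j + 1)) w).2 * W 1 = 0 := by
      rw [← hsum', add_assoc, weightedSum_eq_carry d (b := fun j => b (j + 1))
        (W := fun j => W (j + 1)) h.tail.recurrence]
    refine ⟨abs_le_of_carry_step h.nonneg_zero h.zero_le_one h.pos_one h.tail.zero_le_one
      (by linarith [h.add_le, h.zero_le_one]) ?_ ?_ hs' e e', hr'⟩
    · nlinarith [h.zero_le_one]
    · nlinarith [h.tail.zero_le_one]

theorem isRegular_setOf_weightedSum_eq_zero (h : IsContinuant b W) (hd : ∀ x, |d x| ≤ D)
    {p K : ℕ} (hp : 0 < p) (hper : ∀ k, K ≤ k → b (k + p) = b k) :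
    Language.IsRegular {w | weightedSum d (fun j => W (j + 1)) w = 0} := by
  let box : Set (ℤ × ℤ) := Icc (-(8 * D : ℤ)) (8 * D) ×ˢ Icc (-(8 * D : ℤ)) (8 * D)
  refine Language.isRegular_of_leftQuotient_eq_comp
    (fun x => ((fun j => b (x.length + j)), {rs : ℤ × ℤ | rs ∈ box ∧
      weightedSum d (fun j => W (j + 1)) x + rs.1 * W (x.length + 1) + rs.2 * W x.length = 0}))
    (fun s => {y | carry d s.1 y ∈ s.2}) ?_ fun x => ?_
  · have hbox : box.Finite := (finite_Icc _ _).prod (finite_Icc _ _)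
    refine ((finite_range_shift hp hper).prod hbox.finite_subsets).subset ?_
    rintro _ ⟨x, rfl⟩
    exact ⟨⟨x.length, rfl⟩, fun rs hrs => hrs.1⟩
  · ext y
    have hx := h.drop x.length
    have e : weightedSum d (fun j => W (x.length + j + 1)) y =
        (carry d (fun j => b (x.length + j)) y).1 * W (x.length + 1) +
        (carry d (fun j => b (x.length + j)) y).2 * W x.length :=
      weightedSum_eq_carry d (b := fun j => b (x.length + j)) (W := fun j => W (x.length + j))
        hx.recurrence y
    change weightedSum d (fun j => W (j + 1)) (x ++ y) = 0 ↔ _ ∈ box ∧ _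
    rw [weightedSum_append, e, ← add_assoc]
    refine ⟨fun hsum => ⟨?_, hsum⟩, And.right⟩
    have hS := h.abs_add_weightedSum_le hd x (S := 0) (by
      rw [abs_zero]; exact mul_nonneg (Nat.cast_nonneg _) (by linarith [h.nonneg_zero, h.pos_one]))
    rw [zero_add] at hS
    obtain ⟨h₁, h₂⟩ := hx.abs_carry_le hd y hS (by rw [← hsum, add_assoc, ← e]; rfl)
    exact ⟨abs_le.1 h₁, abs_le.1 h₂⟩

end IsContinuant

end WeightedSum

theorem ostVal_cons (q : ℕ → ℕ) (d : ℕ) (l : List ℕ) :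
    OstVal q (d :: l) = d * q 0 + OstVal (fun i => q (i + 1)) l := by
  simp only [OstVal, List.length_cons, Finset.sum_range_succ', List.getD_cons_succ,
    List.getD_cons_zero]
  ring

theorem ostVal_map_eq_weightedSum {α : Type*} (q : ℕ → ℕ) (f : α → ℕ) (w : List α) :
    (OstVal q (w.map f) : ℤ) = weightedSum (fun x => (f x : ℤ)) (fun i => (q i : ℤ)) w := by
  induction w generalizing q with
  | nil => simp [OstVal, weightedSum]
  | cons x w ih => rw [List.map_cons, ostVal_cons, weightedSum, ← ih]; push_cast; ring

section Ostrowski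

variable {a q : ℕ → ℕ} {p K : ℕ}

theorem isContinuant_ostrowski (ha : ∀ k, 1 ≤ a (k + 1)) (hq0 : q 0 = 1) (hq1 : q 1 = a 1)
    (hq : ∀ k, q (k + 2) = a (k + 2) * q (k + 1) + q k) :
    IsContinuant (fun j => a (j + 1)) (fun | 0 => 0 | k + 1 => (q k : ℤ)) where
  one_le := ha
  nonneg_zero := le_rfl
  zero_le_one := Nat.cast_nonneg _
  pos_one := by simp [hq0]
  recurrence
    | 0 => by simp [hq0, hq1]
    | k + 1 => by simp [hq k]

theorem isRegular_setOf_ostValid_map {α : Type*} (ha : ∀ k, 1 ≤ a (k + 1)) (hp : 0 < p)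
    (hper : ∀ k, K ≤ k → a (k + p) = a k) (f : α → ℕ) :
    Language.IsRegular {w : List α | OstValid a (w.map f)} := by
  have hreg := isRegular_setOf_ostValidFrom (b := fun j => a (j + 1)) hp
    (eventually_periodic_succ hper) false
  rw [show {w : List α | OstValid a (w.map f)} =
    List.map f ⁻¹' {l | OstValidFrom (fun j => a (j + 1)) false l} from
      ext fun w => ostValid_iff_ostValidFrom ha _]
  exact hreg.preimage_map f

theorem isRegular_setOf_ostVal_add_eq {α : Type*} (ha : ∀ k, 1 ≤ a (k + 1)) (hq0 : q 0 = 1)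
    (hq1 : q 1 = a 1) (hq : ∀ k, q (k + 2) = a (k + 2) * q (k + 1) + q k) (hp : 0 < p)
    (hper : ∀ k, K ≤ k → a (k + p) = a k) {f g h : α → ℕ} {N : ℕ} (hf : ∀ t, f t ≤ N)
    (hg : ∀ t, g t ≤ N) (hh : ∀ t, h t ≤ N) :
    Language.IsRegular
      {w : List α | OstVal q (w.map f) + OstVal q (w.map g) = OstVal q (w.map h)} := by
  have hreg := (isContinuant_ostrowski ha hq0 hq1 hq).isRegular_setOf_weightedSum_eq_zero
    (d := fun t => (h t : ℤ) - f t - g t) (D := 2 * N)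
    (fun t => by have := hf t; have := hg t; have := hh t; rw [abs_le]; push_cast; omega) hp
    (eventually_periodic_succ hper)
  refine (congrArg Language.IsRegular (ext fun w => ?_)).mpr hreg
  change _ + _ = _ ↔ weightedSum _ (fun i => (q i : ℤ)) w = 0
  rw [weightedSum_sub, weightedSum_sub, ← ostVal_map_eq_weightedSum,
    ← ostVal_map_eq_weightedSum, ← ostVal_map_eq_weightedSum]
  omega

end Ostrowski

theorem ostrowski_addition_recognizable_general
    (a q : ℕ → ℕ)
    (ha : ∀ k, 1 ≤ a (k + 1))
    (hq0 : q 0 = 1) (hq1 : q 1 = a 1)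
    (hq : ∀ k, q (k + 2) = a (k + 2) * q (k + 1) + q k)
    -- `a` is quadratic: its continued fraction is eventually periodic
    (p K : ℕ) (hp : 1 ≤ p) (hper : ∀ k, K ≤ k → a (k + p) = a k)
    (c : ℕ) :
    ∃ (σ : Type) (_ : Fintype σ)
      (A : DFA (Fin (2 * c + 2) × Fin (2 * c + 2) × Fin (2 * c + 2)) σ),
      ∀ w : List (Fin (2 * c + 2) × Fin (2 * c + 2) × Fin (2 * c + 2)),
        w ∈ A.accepts ↔
          (OstValid a (w.map fun t => (t.1 : ℕ)) ∧
           OstValid a (w.map fun t => (t.2.1 : ℕ)) ∧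
           OstValid a (w.map fun t => (t.2.2 : ℕ)) ∧
           OstVal q (w.map fun t => (t.1 : ℕ)) + OstVal q (w.map fun t => (t.2.1 : ℕ))
             = OstVal q (w.map fun t => (t.2.2 : ℕ))) := by
  have hV (f : Fin (2 * c + 2) × Fin (2 * c + 2) × Fin (2 * c + 2) → ℕ) :=
    isRegular_setOf_ostValid_map ha hp hper f
  have hS := isRegular_setOf_ostVal_add_eq ha hq0 hq1 hq hp hper (N := 2 * c + 1)
    (fun t : Fin (2 * c + 2) × Fin (2 * c + 2) × Fin (2 * c + 2) => Fin.is_le t.1)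
    (fun t => Fin.is_le t.2.1) (fun t => Fin.is_le t.2.2)
  obtain ⟨σ, hσ, A, hA⟩ := (hV _).inf ((hV _).inf ((hV _).inf hS))
  exact ⟨σ, hσ, A, fun w => by rw [hA]; rfl⟩

/-- (Theorem B of the paper.) For a quadratic irrational `a`,
i.e. one whose continued fraction digit sequence `(a_k)` is eventually periodic
(with all digits positive and bounded by `μ ≤ c`), the set of convolutions
`ρ_a(x) * ρ_a(y) * ρ_a(z)` of zero-padded Ostrowski representations of triples
with `x + y = z` is recognizable by a finite automaton over the alphabet
`Σ_a³ = {0, …, 2c+1}³`. -/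
theorem ostrowski_addition_recognizable
    (a q : ℕ → ℕ)
    (ha : ∀ k, 1 ≤ a (k + 1))
    (hq0 : q 0 = 1) (hq1 : q 1 = a 1)
    (hq : ∀ k, q (k + 2) = a (k + 2) * q (k + 1) + q k)
    -- `a` is quadratic: its continued fraction is eventually periodic
    (p K : ℕ) (hp : 1 ≤ p) (hper : ∀ k, K ≤ k → a (k + p) = a k)
    -- `c` bounds the continued fraction digits (so `Σ_a ⊆ {0, …, 2c+1}`)
    (c : ℕ) (hc : ∀ k, a (k + 1) ≤ c) :
    ∃ (σ : Type) (_ : Fintype σ)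
      (A : DFA (Fin (2 * c + 2) × Fin (2 * c + 2) × Fin (2 * c + 2)) σ),
      ∀ w : List (Fin (2 * c + 2) × Fin (2 * c + 2) × Fin (2 * c + 2)),
        w ∈ A.accepts ↔
          (OstValid a (w.map fun t => (t.1 : ℕ)) ∧
           OstValid a (w.map fun t => (t.2.1 : ℕ)) ∧
           OstValid a (w.map fun t => (t.2.2 : ℕ)) ∧
           OstVal q (w.map fun t => (t.1 : ℕ)) + OstVal q (w.map fun t => (t.2.1 : ℕ))
             = OstVal q (w.map fun t => (t.2.2 : ℕ))) :=
  ostrowski_addition_recognizable_general a q ha hq0 hq1 hq p K hp hper c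
end
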